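/- arXiv:math/0504018 — 8 statements merged into one kernel-verified Lean document; each statement's English description precedes it below -/
import Mathlib

section
/- Let L be an algebraically closed field of characteristic 0, and let S be a polynomial in one variable x of degree n ≥ 2 whose coefficients lie in the ring L⟦u⟧ of formal power series in u over L. Suppose there exist G, Φ ∈ L⟦u⟧ and ℓ ∈ ℕ such that S(G) = 0 and (∂S/∂x)(G) = u^ℓ·Φ in L⟦u⟧. Then u^{2ℓ}·lc(S) divides the resultant Res_x(S, ∂S/∂x) in L⟦u⟧, where lc(S) ∈ L⟦u⟧ is the leading coefficient of S; equivalently, u^{2ℓ} divides the discriminant of S with respect to x. -/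
namespace Stmt2

/-- The Sylvester matrix of two polynomials given by their coefficient sequences `a`
(formal degree `m`) and `b` (formal degree `n`): the first `n` rows carry the
coefficients of the first polynomial and the last `m` rows those of the second. -/
def sylvester {R : Type*} [CommRing R] (m n : ℕ) (a b : ℕ → R) :
    Matrix (Fin (n + m)) (Fin (n + m)) R :=
  fun i j =>
    if (i : ℕ) < n then
      (if (i : ℕ) ≤ (j : ℕ) ∧ (j : ℕ) ≤ (i : ℕ) + m
        then a (m - ((j : ℕ) - (i : ℕ))) else 0)
    else
      (if (i : ℕ) - n ≤ (j : ℕ) ∧ (j : ℕ) ≤ ((i : ℕ) - n) + n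
        then b (n - ((j : ℕ) - ((i : ℕ) - n))) else 0)

/-- The resultant of `P` (formal degree `m`) and `Q` (formal degree `n`). -/
noncomputable def resultant {R : Type*} [CommRing R] (m n : ℕ) (P Q : Polynomial R) : R :=
  (sylvester m n (fun i => P.coeff i) (fun i => Q.coeff i)).det

lemma row_sum {R : Type*} [CommRing R] (N c i : ℕ) (hiN : i + c < N) (coeffs g : ℕ → R) :
    (∑ j : Fin N, (if i ≤ (j : ℕ) ∧ (j : ℕ) ≤ i + c then coeffs (c - ((j : ℕ) - i)) else 0) * g (j : ℕ))
      = ∑ k ∈ Finset.range (c + 1), coeffs (c - k) * g (i + k) := by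
  rw [Fin.sum_univ_eq_sum_range (fun j => (if i ≤ j ∧ j ≤ i + c then coeffs (c - (j - i)) else 0) * g j) N]
  have h1 : ∀ j, (if i ≤ j ∧ j ≤ i + c then coeffs (c - (j - i)) else 0) * g j
      = if j ∈ Finset.Icc i (i + c) then coeffs (c - (j - i)) * g j else 0 := by
    intro j
    by_cases h : i ≤ j ∧ j ≤ i + c
    · rw [if_pos h, if_pos (Finset.mem_Icc.mpr h)]
    · rw [if_neg h, if_neg (fun hm => h (Finset.mem_Icc.mp hm)), zero_mul]
  rw [Finset.sum_congr rfl (fun j _ => h1 j)]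
  rw [Finset.sum_ite_mem, Finset.inter_eq_right.mpr
    (fun j hj => Finset.mem_range.mpr (by have := (Finset.mem_Icc.mp hj).2; omega)),
    ← Finset.Ico_add_one_right_eq_Icc, Finset.sum_Ico_eq_sum_range]
  apply Finset.sum_congr (by congr 1; omega)
  intro k hk
  have e1 : i + k - i = k := by omega
  rw [e1]

lemma evS {R : Type*} [CommRing R] {n : ℕ} {S : Polynomial R} (hdeg : S.natDegree = n) (G : R)
    (hG : S.eval G = 0) :
    ∑ k ∈ Finset.range (n + 1), S.coeff (n - k) * G ^ (n - k) = 0 := by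
  have h := Finset.sum_range_reflect (fun m => S.coeff m * G ^ m) (n + 1)
  simp only [Nat.add_sub_cancel] at h
  rw [h, ← Polynomial.eval_eq_sum_range' (by omega : S.natDegree < n + 1), hG]

lemma evS' {R : Type*} [CommRing R] {n : ℕ} (hn : 2 ≤ n) {S : Polynomial R}
    (hdeg : S.natDegree = n) (G w : R) (hΦ : S.derivative.eval G = w) :
    ∑ k ∈ Finset.range n, S.derivative.coeff (n - 1 - k) * G ^ (n - 1 - k) = w := by
  have h := Finset.sum_range_reflect (fun m => S.derivative.coeff m * G ^ m) n
  rw [h, ← Polynomial.eval_eq_sum_range'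
    (by rw [← hdeg]; exact Polynomial.natDegree_derivative_lt (by omega) : S.derivative.natDegree < n), hΦ]

lemma evD {R : Type*} [CommRing R] {n : ℕ} (hn : 2 ≤ n) {S : Polynomial R}
    (hdeg : S.natDegree = n) (G w : R) (hΦ : S.derivative.eval G = w) :
    ∑ k ∈ Finset.range (n + 1), S.coeff (n - k) * ((n - k : ℕ) : R) * G ^ (n - 1 - k) = w := by
  have h := Finset.sum_range_reflect (fun m => S.coeff m * ((m : ℕ) : R) * G ^ (m - 1)) (n + 1)
  simp only [Nat.add_sub_cancel] at h
  have e : ∀ k ∈ Finset.range (n + 1), S.coeff (n - k) * ((n - k : ℕ) : R) * G ^ (n - k - 1)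
      = S.coeff (n - k) * ((n - k : ℕ) : R) * G ^ (n - 1 - k) := by
    intro k hk
    rcases Nat.lt_or_ge k n with h' | h'
    · have : n - k - 1 = n - 1 - k := by omega
      rw [this]
    · have hkn : k = n := by have := Finset.mem_range.mp hk; omega
      subst hkn; simp
  rw [← Finset.sum_congr rfl e, h, Finset.sum_range_succ']
  simp only [Nat.cast_zero, mul_zero, zero_mul, add_zero, Nat.add_sub_cancel]
  rw [← hΦ, Polynomial.eval_eq_sum_range'
    (by rw [← hdeg]; exact Polynomial.natDegree_derivative_lt (by omega) : S.derivative.natDegree < n)]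
  apply Finset.sum_congr rfl
  intro m _
  rw [Polynomial.coeff_derivative]
  push_cast
  ring

set_option maxHeartbeats 3200000 in
theorem key {R : Type*} [CommRing R] (n ℓ : ℕ) (hn : 2 ≤ n) (hnR : IsUnit ((n : ℕ) : R))
    (S : Polynomial R) (hdeg : S.natDegree = n) (u G Φ : R)
    (hG : S.eval G = 0)
    (hΦ : S.derivative.eval G = u ^ ℓ * Φ) :
    u ^ (2 * ℓ) * S.leadingCoeff ∣ resultant n (n - 1) S S.derivative := by
  classical
  rw [resultant]
  set M : Matrix (Fin (n - 1 + n)) (Fin (n - 1 + n)) R :=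
    sylvester n (n - 1) (fun k => S.coeff k) (fun k => S.derivative.coeff k) with hM
  let cL : Fin (n - 1 + n) := ⟨n - 1 + n - 1, by omega⟩
  let cP : Fin (n - 1 + n) := ⟨n - 1 + n - 2, by omega⟩
  let c0 : Fin (n - 1 + n) := ⟨0, by omega⟩
  let rS : Fin (n - 1 + n) := ⟨n - 1, by omega⟩
  have hcLv : (cL : ℕ) = n - 1 + n - 1 := rfl
  have hcPv : (cP : ℕ) = n - 1 + n - 2 := rfl
  have hc0v : (c0 : ℕ) = 0 := rfl
  have hrSv : (rS : ℕ) = n - 1 := rfl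
  have hcLcP : cL ≠ cP := by
    intro h
    have := congrArg Fin.val h
    rw [hcLv, hcPv] at this; omega
  -- the entries of M
  have hMS : ∀ (i j : Fin (n - 1 + n)), (i : ℕ) < n - 1 →
      M i j = (if (i : ℕ) ≤ (j : ℕ) ∧ (j : ℕ) ≤ (i : ℕ) + n
        then S.coeff (n - ((j : ℕ) - (i : ℕ))) else 0) := by
    intro i j hi
    rw [hM]; unfold sylvester; rw [if_pos hi]
  have hMS' : ∀ (i j : Fin (n - 1 + n)), ¬ ((i : ℕ) < n - 1) →
      M i j = (if (i : ℕ) - (n - 1) ≤ (j : ℕ) ∧ (j : ℕ) ≤ ((i : ℕ) - (n - 1)) + (n - 1)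
        then S.derivative.coeff ((n - 1) - ((j : ℕ) - ((i : ℕ) - (n - 1)))) else 0) := by
    intro i j hi
    rw [hM]; unfold sylvester; rw [if_neg hi]
  -- row sums
  have hrowS : ∀ (i : Fin (n - 1 + n)), (i : ℕ) < n - 1 → ∀ g : ℕ → R,
      (∑ j : Fin (n - 1 + n), M i j * g (j : ℕ))
        = ∑ k ∈ Finset.range (n + 1), S.coeff (n - k) * g ((i : ℕ) + k) := by
    intro i hi g
    rw [← row_sum (n - 1 + n) n (i : ℕ) (by omega) (fun k => S.coeff k) g]
    exact Finset.sum_congr rfl (fun j _ => by rw [hMS i j hi])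
  have hrowS' : ∀ (i : Fin (n - 1 + n)), ¬ ((i : ℕ) < n - 1) → ∀ g : ℕ → R,
      (∑ j : Fin (n - 1 + n), M i j * g (j : ℕ))
        = ∑ k ∈ Finset.range n, S.derivative.coeff (n - 1 - k) * g (((i : ℕ) - (n - 1)) + k) := by
    intro i hi g
    have hb : (i : ℕ) - (n - 1) + (n - 1) < n - 1 + n := by have := i.isLt; omega
    have h := row_sum (n - 1 + n) (n - 1) ((i : ℕ) - (n - 1)) hb (fun k => S.derivative.coeff k) g
    rw [show n - 1 + 1 = n by omega] at h
    rw [← h]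
    exact Finset.sum_congr rfl (fun j _ => by rw [hMS' i j hi])
  -- the column-operation matrix E
  let E : Matrix (Fin (n - 1 + n)) (Fin (n - 1 + n)) R := fun j c =>
    if (c : ℕ) = n - 1 + n - 1 then G ^ (n - 1 + n - 1 - (j : ℕ))
    else if (c : ℕ) = n - 1 + n - 2 then
      ((n - 1 + n - 1 - (j : ℕ) : ℕ) : R) * G ^ (n - 1 + n - 2 - (j : ℕ))
    else if (j : ℕ) = (c : ℕ) then 1 else 0
  have hE : ∀ j c : Fin (n - 1 + n), E j c =
      if (c : ℕ) = n - 1 + n - 1 then G ^ (n - 1 + n - 1 - (j : ℕ))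
      else if (c : ℕ) = n - 1 + n - 2 then
        ((n - 1 + n - 1 - (j : ℕ) : ℕ) : R) * G ^ (n - 1 + n - 2 - (j : ℕ))
      else if (j : ℕ) = (c : ℕ) then 1 else 0 := fun _ _ => rfl
  have hdetE : E.det = 1 := by
    have ht : E.BlockTriangular id := by
      intro x y hxy
      have hy : (y : ℕ) < (x : ℕ) := hxy
      have hx := x.isLt
      rw [hE]
      by_cases h1 : (y : ℕ) = n - 1 + n - 1
      · omega
      rw [if_neg h1]
      by_cases h2 : (y : ℕ) = n - 1 + n - 2
      · rw [if_pos h2, show n - 1 + n - 1 - (x : ℕ) = 0 by omega]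
        simp
      · rw [if_neg h2, if_neg (by omega : ¬ (x : ℕ) = (y : ℕ))]
    rw [Matrix.det_of_upperTriangular ht]
    apply Finset.prod_eq_one
    intro x _
    rw [hE]
    by_cases h1 : (x : ℕ) = n - 1 + n - 1
    · rw [if_pos h1, show n - 1 + n - 1 - (x : ℕ) = 0 by omega, pow_zero]
    rw [if_neg h1]
    by_cases h2 : (x : ℕ) = n - 1 + n - 2
    · rw [if_pos h2, show n - 1 + n - 1 - (x : ℕ) = 1 by omega,
        show n - 1 + n - 2 - (x : ℕ) = 0 by omega]
      simp
    · rw [if_neg h2, if_pos rfl]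
  -- target column vectors
  let ev : Fin (n - 1 + n) → R := fun i =>
    if (i : ℕ) < n - 1 then 0 else G ^ (n - 1 - ((i : ℕ) - (n - 1)))
  let dv : Fin (n - 1 + n) → R := fun i =>
    if (i : ℕ) < n - 1 then G ^ (n - 2 - (i : ℕ)) * Φ
    else ((n - 1 - ((i : ℕ) - (n - 1)) : ℕ) : R) * G ^ (n - 2 - ((i : ℕ) - (n - 1))) * Φ
  let c2 : R := ∑ k ∈ Finset.range n,
    S.derivative.coeff (n - 1 - k) * ((n - 1 - k : ℕ) : R) * G ^ (n - 2 - k)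
  have hev : ∀ i : Fin (n - 1 + n), ev i =
      if (i : ℕ) < n - 1 then 0 else G ^ (n - 1 - ((i : ℕ) - (n - 1))) := fun _ => rfl
  have hdv : ∀ i : Fin (n - 1 + n), dv i =
      if (i : ℕ) < n - 1 then G ^ (n - 2 - (i : ℕ)) * Φ
      else ((n - 1 - ((i : ℕ) - (n - 1)) : ℕ) : R) * G ^ (n - 2 - ((i : ℕ) - (n - 1))) * Φ :=
    fun _ => rfl
  have hc2 : c2 = ∑ k ∈ Finset.range n,
      S.derivative.coeff (n - 1 - k) * ((n - 1 - k : ℕ) : R) * G ^ (n - 2 - k) := rfl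
  have hME : M * E = Matrix.updateCol
      (Matrix.updateCol M cL (fun i => (u ^ ℓ * Φ) * ev i)) cP
      (fun i => u ^ ℓ * dv i + c2 * ev i) := by
    ext i c
    rw [Matrix.mul_apply]
    by_cases h1 : c = cL
    · subst h1
      rw [Matrix.updateCol_apply, if_neg hcLcP, Matrix.updateCol_apply, if_pos rfl]
      have hEcL : ∀ j : Fin (n - 1 + n), E j cL = G ^ (n - 1 + n - 1 - (j : ℕ)) := by
        intro j; rw [hE, if_pos hcLv]
      simp only [hEcL]
      by_cases hi : (i : ℕ) < n - 1
      · rw [hrowS i hi (fun t => G ^ (n - 1 + n - 1 - t))]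
        have e : ∀ k ∈ Finset.range (n + 1),
            S.coeff (n - k) * G ^ (n - 1 + n - 1 - ((i : ℕ) + k))
              = G ^ (n - 2 - (i : ℕ)) * (S.coeff (n - k) * G ^ (n - k)) := by
          intro k hk
          have hk' := Finset.mem_range.mp hk
          rw [show n - 1 + n - 1 - ((i : ℕ) + k) = (n - 2 - (i : ℕ)) + (n - k) by omega, pow_add]
          ring
        rw [Finset.sum_congr rfl e, ← Finset.mul_sum, evS hdeg G hG, mul_zero,
          hev, if_pos hi, mul_zero]
      · rw [hrowS' i hi (fun t => G ^ (n - 1 + n - 1 - t))]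
        have hilt := i.isLt
        have e : ∀ k ∈ Finset.range n,
            S.derivative.coeff (n - 1 - k) * G ^ (n - 1 + n - 1 - (((i : ℕ) - (n - 1)) + k))
              = G ^ (n - 1 - ((i : ℕ) - (n - 1)))
                * (S.derivative.coeff (n - 1 - k) * G ^ (n - 1 - k)) := by
          intro k hk
          have hk' := Finset.mem_range.mp hk
          rw [show n - 1 + n - 1 - (((i : ℕ) - (n - 1)) + k)
            = (n - 1 - ((i : ℕ) - (n - 1))) + (n - 1 - k) by omega, pow_add]
          ring
        rw [Finset.sum_congr rfl e, ← Finset.mul_sum, evS' hn hdeg G _ hΦ, hev, if_neg hi]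
        ring
    by_cases h2 : c = cP
    · subst h2
      rw [Matrix.updateCol_apply, if_pos rfl]
      have hEcP : ∀ j : Fin (n - 1 + n), E j cP
          = ((n - 1 + n - 1 - (j : ℕ) : ℕ) : R) * G ^ (n - 1 + n - 2 - (j : ℕ)) := by
        intro j; rw [hE, if_neg (by rw [hcPv]; omega), if_pos hcPv]
      simp only [hEcP]
      by_cases hi : (i : ℕ) < n - 1
      · rw [hrowS i hi (fun t => ((n - 1 + n - 1 - t : ℕ) : R) * G ^ (n - 1 + n - 2 - t))]
        have e : ∀ k ∈ Finset.range (n + 1),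
            S.coeff (n - k) * (((n - 1 + n - 1 - ((i : ℕ) + k) : ℕ) : R)
                * G ^ (n - 1 + n - 2 - ((i : ℕ) + k)))
              = S.coeff (n - k) * ((n - k : ℕ) : R) * G ^ (n - 1 + n - 2 - ((i : ℕ) + k))
                + S.coeff (n - k) * ((n - 2 - (i : ℕ) : ℕ) : R)
                  * G ^ (n - 1 + n - 2 - ((i : ℕ) + k)) := by
          intro k hk
          have hk' := Finset.mem_range.mp hk
          rw [show ((n - 1 + n - 1 - ((i : ℕ) + k) : ℕ) : R)
            = ((n - k : ℕ) : R) + ((n - 2 - (i : ℕ) : ℕ) : R) by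
              rw [← Nat.cast_add]; congr 1; omega]
          ring
        rw [Finset.sum_congr rfl e, Finset.sum_add_distrib]
        have t1 : ∀ k ∈ Finset.range (n + 1),
            S.coeff (n - k) * ((n - k : ℕ) : R) * G ^ (n - 1 + n - 2 - ((i : ℕ) + k))
              = G ^ (n - 2 - (i : ℕ))
                * (S.coeff (n - k) * ((n - k : ℕ) : R) * G ^ (n - 1 - k)) := by
          intro k hk
          have hk' := Finset.mem_range.mp hk
          by_cases hkn : k = n
          · subst hkn; simp
          · rw [show n - 1 + n - 2 - ((i : ℕ) + k) = (n - 2 - (i : ℕ)) + (n - 1 - k) by omega,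
              pow_add]
            ring
        rw [Finset.sum_congr rfl t1, ← Finset.mul_sum, evD hn hdeg G _ hΦ]
        have t2 : (∑ k ∈ Finset.range (n + 1),
            S.coeff (n - k) * ((n - 2 - (i : ℕ) : ℕ) : R)
              * G ^ (n - 1 + n - 2 - ((i : ℕ) + k))) = 0 := by
          by_cases hi2 : (i : ℕ) = n - 2
          · have hz : ((n - 2 - (i : ℕ) : ℕ) : R) = 0 := by
              rw [hi2, Nat.sub_self, Nat.cast_zero]
            simp [hz]
          · have t2' : ∀ k ∈ Finset.range (n + 1),
                S.coeff (n - k) * ((n - 2 - (i : ℕ) : ℕ) : R)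
                  * G ^ (n - 1 + n - 2 - ((i : ℕ) + k))
                = ((n - 2 - (i : ℕ) : ℕ) : R) * G ^ (n - 3 - (i : ℕ))
                  * (S.coeff (n - k) * G ^ (n - k)) := by
              intro k hk
              have hk' := Finset.mem_range.mp hk
              rw [show n - 1 + n - 2 - ((i : ℕ) + k) = (n - 3 - (i : ℕ)) + (n - k) by omega,
                pow_add]
              ring
            rw [Finset.sum_congr rfl t2', ← Finset.mul_sum, evS hdeg G hG, mul_zero]
        rw [t2, add_zero, hdv, if_pos hi, hev, if_pos hi]
        ring
      · rw [hrowS' i hi (fun t => ((n - 1 + n - 1 - t : ℕ) : R) * G ^ (n - 1 + n - 2 - t))]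
        have hilt := i.isLt
        have e : ∀ k ∈ Finset.range n,
            S.derivative.coeff (n - 1 - k) * (((n - 1 + n - 1 - (((i : ℕ) - (n - 1)) + k) : ℕ) : R)
                * G ^ (n - 1 + n - 2 - (((i : ℕ) - (n - 1)) + k)))
              = S.derivative.coeff (n - 1 - k) * ((n - 1 - k : ℕ) : R)
                  * G ^ (n - 1 + n - 2 - (((i : ℕ) - (n - 1)) + k))
                + S.derivative.coeff (n - 1 - k) * ((n - 1 - ((i : ℕ) - (n - 1)) : ℕ) : R)
                  * G ^ (n - 1 + n - 2 - (((i : ℕ) - (n - 1)) + k)) := by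
          intro k hk
          have hk' := Finset.mem_range.mp hk
          rw [show ((n - 1 + n - 1 - (((i : ℕ) - (n - 1)) + k) : ℕ) : R)
            = ((n - 1 - k : ℕ) : R) + ((n - 1 - ((i : ℕ) - (n - 1)) : ℕ) : R) by
              rw [← Nat.cast_add]; congr 1; omega]
          ring
        rw [Finset.sum_congr rfl e, Finset.sum_add_distrib]
        have t1 : ∀ k ∈ Finset.range n,
            S.derivative.coeff (n - 1 - k) * ((n - 1 - k : ℕ) : R)
                * G ^ (n - 1 + n - 2 - (((i : ℕ) - (n - 1)) + k))
              = G ^ (n - 1 - ((i : ℕ) - (n - 1)))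
                * (S.derivative.coeff (n - 1 - k) * ((n - 1 - k : ℕ) : R) * G ^ (n - 2 - k)) := by
          intro k hk
          have hk' := Finset.mem_range.mp hk
          by_cases hkn : k = n - 1
          · subst hkn; simp
          · rw [show n - 1 + n - 2 - (((i : ℕ) - (n - 1)) + k)
              = (n - 1 - ((i : ℕ) - (n - 1))) + (n - 2 - k) by omega, pow_add]
            ring
        rw [Finset.sum_congr rfl t1, ← Finset.mul_sum, ← hc2]
        have t2 : (∑ k ∈ Finset.range n,
            S.derivative.coeff (n - 1 - k) * ((n - 1 - ((i : ℕ) - (n - 1)) : ℕ) : R)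
              * G ^ (n - 1 + n - 2 - (((i : ℕ) - (n - 1)) + k)))
            = ((n - 1 - ((i : ℕ) - (n - 1)) : ℕ) : R) * G ^ (n - 2 - ((i : ℕ) - (n - 1)))
              * (u ^ ℓ * Φ) := by
          by_cases hi2 : (i : ℕ) - (n - 1) = n - 1
          · have hz : ((n - 1 - ((i : ℕ) - (n - 1)) : ℕ) : R) = 0 := by
              rw [hi2, Nat.sub_self, Nat.cast_zero]
            simp [hz]
          · have t2' : ∀ k ∈ Finset.range n,
                S.derivative.coeff (n - 1 - k) * ((n - 1 - ((i : ℕ) - (n - 1)) : ℕ) : R)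
                  * G ^ (n - 1 + n - 2 - (((i : ℕ) - (n - 1)) + k))
                = ((n - 1 - ((i : ℕ) - (n - 1)) : ℕ) : R) * G ^ (n - 2 - ((i : ℕ) - (n - 1)))
                  * (S.derivative.coeff (n - 1 - k) * G ^ (n - 1 - k)) := by
              intro k hk
              have hk' := Finset.mem_range.mp hk
              rw [show n - 1 + n - 2 - (((i : ℕ) - (n - 1)) + k)
                = (n - 2 - ((i : ℕ) - (n - 1))) + (n - 1 - k) by omega, pow_add]
              ring
            rw [Finset.sum_congr rfl t2', ← Finset.mul_sum, evS' hn hdeg G _ hΦ]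
        rw [t2, hdv, if_neg hi, hev, if_neg hi]
        ring
    · rw [Matrix.updateCol_apply, if_neg h2, Matrix.updateCol_apply, if_neg h1]
      have hEc : ∀ j : Fin (n - 1 + n), E j c = if (j : ℕ) = (c : ℕ) then 1 else 0 := by
        intro j
        rw [hE, if_neg (fun hh => h1 (Fin.val_injective (hh.trans hcLv.symm))),
          if_neg (fun hh => h2 (Fin.val_injective (hh.trans hcPv.symm)))]
      simp only [hEc, Fin.val_eq_val, mul_ite, mul_one, mul_zero]
      simp [Finset.sum_ite_eq']
  -- commuting column updates
  have hcomm : ∀ (B : Matrix (Fin (n - 1 + n)) (Fin (n - 1 + n)) R) (v w : Fin (n - 1 + n) → R),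
      Matrix.updateCol (Matrix.updateCol B cL v) cP w
        = Matrix.updateCol (Matrix.updateCol B cP w) cL v := by
    intro B v w
    ext i c
    by_cases hc1 : c = cP
    · subst hc1
      rw [Matrix.updateCol_apply, if_pos rfl, Matrix.updateCol_apply,
        if_neg (fun h => hcLcP h.symm), Matrix.updateCol_apply, if_pos rfl]
    · by_cases hc2 : c = cL
      · subst hc2
        rw [Matrix.updateCol_apply, if_neg hc1, Matrix.updateCol_apply, if_pos rfl,
          Matrix.updateCol_apply, if_pos rfl]
      · rw [Matrix.updateCol_apply, if_neg hc1, Matrix.updateCol_apply, if_neg hc2,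
          Matrix.updateCol_apply, if_neg hc2, Matrix.updateCol_apply, if_neg hc1]
  let Q : Matrix (Fin (n - 1 + n)) (Fin (n - 1 + n)) R :=
    Matrix.updateCol (Matrix.updateCol M cP dv) cL (Φ • ev)
  have hz : (Matrix.updateCol
      (Matrix.updateCol M cL (fun i => (u ^ ℓ * Φ) * ev i)) cP ev).det = 0 := by
    rw [hcomm]
    have h3 : (fun i => (u ^ ℓ * Φ) * ev i) = ((u ^ ℓ * Φ) • ev) := by
      funext i; simp [smul_eq_mul]
    rw [h3, Matrix.det_updateCol_smul]
    have h4 : (Matrix.updateCol (Matrix.updateCol M cP ev) cL ev).det = 0 := by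
      apply Matrix.det_zero_of_column_eq hcLcP
      intro k
      rw [Matrix.updateCol_apply, if_pos rfl, Matrix.updateCol_apply,
        if_neg (Ne.symm hcLcP), Matrix.updateCol_apply, if_pos rfl]
    rw [h4, mul_zero]
  have hdetM : M.det = u ^ (2 * ℓ) * Q.det := by
    show M.det = u ^ (2 * ℓ)
      * (Matrix.updateCol (Matrix.updateCol M cP dv) cL (Φ • ev)).det
    have h0 : M.det = (M * E).det := by rw [Matrix.det_mul, hdetE, mul_one]
    have hsplit : (fun i => u ^ ℓ * dv i + c2 * ev i) = (u ^ ℓ • dv + c2 • ev) := by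
      funext i; simp [smul_eq_mul]
    rw [h0, hME, hsplit, Matrix.det_updateCol_add, Matrix.det_updateCol_smul,
      Matrix.det_updateCol_smul, hz, mul_zero, add_zero, hcomm]
    have h5 : (fun i => (u ^ ℓ * Φ) * ev i) = (u ^ ℓ • (Φ • ev)) := by
      funext i; simp [smul_eq_mul]; ring
    rw [h5, Matrix.det_updateCol_smul, two_mul, pow_add]
    ring
  -- the row-operation matrix A
  let A : Matrix (Fin (n - 1 + n)) (Fin (n - 1 + n)) R := fun i k =>
    if (i : ℕ) < n - 1 then
      (if (k : ℕ) = (i : ℕ) then ((n : ℕ) : R)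
        else if (k : ℕ) = (i : ℕ) + (n - 1) then -1 else 0)
    else (if (k : ℕ) = (i : ℕ) then 1 else 0)
  have hA : ∀ i k : Fin (n - 1 + n), A i k =
      if (i : ℕ) < n - 1 then
        (if (k : ℕ) = (i : ℕ) then ((n : ℕ) : R)
          else if (k : ℕ) = (i : ℕ) + (n - 1) then -1 else 0)
      else (if (k : ℕ) = (i : ℕ) then 1 else 0) := fun _ _ => rfl
  have hdetA : IsUnit A.det := by
    have ht : A.BlockTriangular id := by
      intro x y hxy
      have hy : (y : ℕ) < (x : ℕ) := hxy
      rw [hA]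
      by_cases hx : (x : ℕ) < n - 1
      · rw [if_pos hx, if_neg (by omega), if_neg (by omega)]
      · rw [if_neg hx, if_neg (by omega)]
    rw [Matrix.det_of_upperTriangular ht]
    have hdiag : ∀ x : Fin (n - 1 + n), A x x = if (x : ℕ) < n - 1 then ((n : ℕ) : R) else 1 := by
      intro x
      rw [hA]
      by_cases hx : (x : ℕ) < n - 1
      · rw [if_pos hx, if_pos rfl, if_pos hx]
      · rw [if_neg hx, if_pos rfl, if_neg hx]
    rw [Finset.prod_congr rfl (fun x _ => hdiag x), Finset.prod_ite, Finset.prod_const,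
      Finset.prod_const]
    exact (hnR.pow _).mul (isUnit_one.pow _)
  have hc0cL : c0 ≠ cL := by
    intro h; have := congrArg Fin.val h; rw [hc0v, hcLv] at this; omega
  have hc0cP : c0 ≠ cP := by
    intro h; have := congrArg Fin.val h; rw [hc0v, hcPv] at this; omega
  have hQc0 : ∀ k : Fin (n - 1 + n), Q k c0 =
      if (k : ℕ) = 0 then S.coeff n
      else if (k : ℕ) = n - 1 then S.derivative.coeff (n - 1) else 0 := by
    intro k
    show (Matrix.updateCol (Matrix.updateCol M cP dv) cL (Φ • ev)) k c0 = _
    rw [Matrix.updateCol_apply, if_neg hc0cL, Matrix.updateCol_apply, if_neg hc0cP]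
    by_cases hk : (k : ℕ) < n - 1
    · rw [hMS k c0 hk]
      by_cases hk0 : (k : ℕ) = 0
      · rw [if_pos (by rw [hc0v]; omega), if_pos hk0]
        congr 1
        rw [hc0v]; omega
      · rw [if_neg (by rw [hc0v]; omega), if_neg hk0, if_neg (by omega)]
    · rw [hMS' k c0 hk]
      by_cases hk0 : (k : ℕ) = n - 1
      · rw [if_pos (by rw [hc0v]; omega), if_neg (by omega), if_pos hk0]
        congr 1
        rw [hc0v]; omega
      · rw [if_neg (by rw [hc0v]; have := k.isLt; omega), if_neg (by omega), if_neg hk0]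
  have hcol0 : ∀ i : Fin (n - 1 + n), (A * Q) i c0
      = if i = rS then S.derivative.coeff (n - 1) else 0 := by
    intro i
    rw [Matrix.mul_apply]
    by_cases hi : (i : ℕ) < n - 1
    · have hi2lt : (i : ℕ) + (n - 1) < n - 1 + n := by omega
      set i2 : Fin (n - 1 + n) := ⟨(i : ℕ) + (n - 1), hi2lt⟩ with hi2def
      have hi2v : (i2 : ℕ) = (i : ℕ) + (n - 1) := rfl
      have hAi : ∀ k, A i k = ((n : ℕ) : R) * (if k = i then 1 else 0)
          + (-1) * (if k = i2 then 1 else 0) := by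
        intro k
        rw [hA, if_pos hi]
        by_cases e1 : (k : ℕ) = (i : ℕ)
        · rw [if_pos e1, if_pos (Fin.val_injective e1),
            if_neg (fun h => by rw [congrArg Fin.val h, hi2v] at e1; omega)]
          ring
        · rw [if_neg e1, if_neg (fun h => e1 (congrArg Fin.val h))]
          by_cases e2 : (k : ℕ) = (i : ℕ) + (n - 1)
          · rw [if_pos e2, if_pos (Fin.val_injective (e2.trans hi2v.symm))]
            ring
          · rw [if_neg e2, if_neg (fun h => e2 ((congrArg Fin.val h).trans hi2v))]
            ring
      have hterm : ∀ k, A i k * Q k c0 = ((n : ℕ) : R) * (if k = i then Q k c0 else 0)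
          + (-1) * (if k = i2 then Q k c0 else 0) := by
        intro k; rw [hAi]; split_ifs <;> ring
      rw [Finset.sum_congr rfl (fun k _ => hterm k), Finset.sum_add_distrib,
        ← Finset.mul_sum, ← Finset.mul_sum,
        Finset.sum_ite_eq' Finset.univ i (fun k => Q k c0),
        Finset.sum_ite_eq' Finset.univ i2 (fun k => Q k c0),
        if_pos (Finset.mem_univ i), if_pos (Finset.mem_univ i2), hQc0 i, hQc0 i2]
      have grS : ¬ (i = rS) := fun h => by
        have hh := congrArg Fin.val h; rw [hrSv] at hh; omega
      by_cases hi0 : (i : ℕ) = 0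
      · have g2 : ¬ (i2 : ℕ) = 0 := by rw [hi2v]; omega
        have g3 : (i2 : ℕ) = n - 1 := by rw [hi2v, hi0]; omega
        rw [if_pos hi0, if_neg g2, if_pos g3, if_neg grS,
          Polynomial.coeff_derivative, show n - 1 + 1 = n by omega,
          show ((n - 1 : ℕ) : R) + 1 = ((n : ℕ) : R) by
            rw [Nat.cast_sub (by omega : 1 ≤ n)]; push_cast; ring]
        ring
      · have g2 : ¬ (i : ℕ) = n - 1 := by omega
        have g3 : ¬ (i2 : ℕ) = 0 := by rw [hi2v]; omega
        have g4 : ¬ (i2 : ℕ) = n - 1 := by rw [hi2v]; omega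
        rw [if_neg hi0, if_neg g2, if_neg g3, if_neg g4, if_neg grS]
        ring
    · have hAi : ∀ k, A i k = if k = i then 1 else 0 := by
        intro k
        rw [hA, if_neg hi]
        by_cases e1 : (k : ℕ) = (i : ℕ)
        · rw [if_pos e1, if_pos (Fin.val_injective e1)]
        · rw [if_neg e1, if_neg (fun h => e1 (congrArg Fin.val h))]
      rw [Finset.sum_congr rfl (fun k _ => by rw [hAi k, ite_mul, one_mul, zero_mul]),
        Finset.sum_ite_eq' Finset.univ i (fun k => Q k c0), if_pos (Finset.mem_univ i),
        hQc0 i]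
      by_cases hirS : (i : ℕ) = n - 1
      · have g1 : ¬ (i : ℕ) = 0 := by omega
        rw [if_neg g1, if_pos hirS, if_pos (Fin.val_injective (hirS.trans hrSv.symm))]
      · have g1 : ¬ (i : ℕ) = 0 := by have := i.isLt; omega
        have g2 : ¬ (i = rS) := fun h => hirS ((congrArg Fin.val h).trans hrSv)
        rw [if_neg g1, if_neg hirS, if_neg g2]
  -- expand along column 0
  obtain ⟨D, hD⟩ : ∃ D : R, (A * Q).det = S.derivative.coeff (n - 1) * D := by
    refine ⟨(Matrix.updateCol (A * Q) c0 (fun i => if i = rS then 1 else 0)).det, ?_⟩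
    have h2 : (S.derivative.coeff (n - 1) • (fun i => if i = rS then (1 : R) else 0))
        = fun i => (A * Q) i c0 := by
      funext i
      rw [hcol0 i, Pi.smul_apply, smul_eq_mul, mul_ite, mul_one, mul_zero]
    have h1 : A * Q = Matrix.updateCol (A * Q) c0
        (S.derivative.coeff (n - 1) • (fun i => if i = rS then (1 : R) else 0)) := by
      rw [h2, Matrix.updateCol_eq_self]
    conv_lhs => rw [h1]
    rw [Matrix.det_updateCol_smul]
  have hbn : S.derivative.coeff (n - 1) = S.leadingCoeff * ((n : ℕ) : R) := by
    rw [Polynomial.coeff_derivative, Polynomial.leadingCoeff, hdeg,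
      show n - 1 + 1 = n by omega,
      show ((n - 1 : ℕ) : R) + 1 = ((n : ℕ) : R) by
        rw [Nat.cast_sub (by omega : 1 ≤ n)]; push_cast; ring]
  have hfin : A.det * M.det = (u ^ (2 * ℓ) * S.leadingCoeff) * (((n : ℕ) : R) * D) := by
    rw [hdetM, show A.det * (u ^ (2 * ℓ) * Q.det) = u ^ (2 * ℓ) * (A.det * Q.det) by ring,
      ← Matrix.det_mul, hD, hbn]
    ring
  obtain ⟨w, hw⟩ := hdetA
  refine ⟨((n : ℕ) : R) * D * ((w⁻¹ : Rˣ) : R), ?_⟩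
  calc M.det = ((w⁻¹ : Rˣ) : R) * (A.det * M.det) := by
        rw [← hw, ← mul_assoc, Units.inv_mul, one_mul]
    _ = u ^ (2 * ℓ) * S.leadingCoeff * (((n : ℕ) : R) * D * ((w⁻¹ : Rˣ) : R)) := by
        rw [hfin]; ring





/-- If `S` is a polynomial of degree `n ≥ 2` over `L⟦u⟧` (`L` algebraically closed of
characteristic `0`), and `G, Φ ∈ L⟦u⟧` satisfy `S(G) = 0` and `S'(G) = u^ℓ·Φ`, then
`u^{2ℓ}·lc(S)` divides `Res_x(S, S')`; equivalently, `u^{2ℓ}` divides the discriminant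
of `S` with respect to `x`. -/
theorem discriminant_multiple_root
    (L : Type*) [Field L] [CharZero L] [IsAlgClosed L]
    (n : ℕ) (ℓ : ℕ) (hn : 2 ≤ n)
    (S : Polynomial (PowerSeries L)) (hdeg : S.natDegree = n)
    (G Φ : PowerSeries L)
    (hG : S.eval G = 0)
    (hΦ : S.derivative.eval G = PowerSeries.X ^ ℓ * Φ) :
    PowerSeries.X ^ (2 * ℓ) * S.leadingCoeff ∣ resultant n (n - 1) S S.derivative := by
  have hu : IsUnit ((n : ℕ) : PowerSeries L) := by
    rw [show ((n : ℕ) : PowerSeries L) = PowerSeries.C (R := L) ((n : ℕ) : L) from (map_natCast _ n).symm]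
    exact (isUnit_iff_ne_zero.mpr (Nat.cast_ne_zero.mpr (by omega))).map (PowerSeries.C (R := L))
  exact key n ℓ hn hu S hdeg PowerSeries.X G Φ hG hΦ


end Stmt2
end

section
/- Let L be a field of characteristic 0 with algebraic closure L̄, and let Δ be a nonzero polynomial in u with coefficients in L⟦t⟧. (1) If the image of Δ in the two-variable formal power series ring L⟦u,t⟧ equals δ² for some δ ∈ L⟦u,t⟧, then for every integer d ≥ 1 and every U ∈ L̄⟦s⟧ with zero constant term, the root multiplicity of U in the polynomial Δ(s^d, u) is even. (2) If the image of Δ in (L[u])⟦t⟧ equals δ² for some δ ∈ (L[u])⟦t⟧, then for every integer d ≥ 1 and every U ∈ L̄⟦s⟧ (with arbitrary constant term), the root multiplicity of U in Δ(s^d, u) is even. -/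
namespace Stmt7

noncomputable section

variable (L : Type*) [Field L] [CharZero L]

/-- The embedding of `(L⟦t⟧)[u]` into the two-variable power series ring `L⟦u,t⟧`,
realized as `(L⟦u⟧)⟦t⟧`. -/
def embTU : Polynomial (PowerSeries L) →+* PowerSeries (PowerSeries L) :=
  Polynomial.eval₂RingHom
    (PowerSeries.map (PowerSeries.C (R := L)))
    (PowerSeries.C (R := PowerSeries L) PowerSeries.X)

/-- The embedding of `(L⟦t⟧)[u]` into `(L[u])⟦t⟧`. -/
def embUT : Polynomial (PowerSeries L) →+* PowerSeries (Polynomial L) :=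
  Polynomial.eval₂RingHom
    (PowerSeries.map (Polynomial.C : L →+* Polynomial L))
    (PowerSeries.C (R := Polynomial L) Polynomial.X)

/-- `φ` is the ring homomorphism `L⟦t⟧ → L̄⟦s⟧` substituting `t = s^d` (and embedding
the coefficients into the algebraic closure). -/
def IsSubstPow (d : ℕ) (φ : PowerSeries L →+* PowerSeries (AlgebraicClosure L)) : Prop :=
  ∀ f : PowerSeries L, φ f = PowerSeries.mk fun m =>
    if d ∣ m then algebraMap L (AlgebraicClosure L) (PowerSeries.coeff (R := L) (m / d) f) else 0

/-! ### A hand-rolled substitution homomorphism on power series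

Given a ring hom `g : R →+* S⟦X⟧` and `a : S⟦X⟧` with zero constant term, we construct
the ring homomorphism `R⟦t⟧ →+* S⟦X⟧` sending `f(t) = Σ fₙ tⁿ` to `Σ g(fₙ) aⁿ`. -/

section Subst

variable {R S : Type*} [CommRing R] [CommRing S]

theorem coeff_eval₂_eq_zero (g : R →+* PowerSeries S) {a : PowerSeries S}
    (ha : PowerSeries.constantCoeff (R := S) a = 0) {k : ℕ} {P : Polynomial R}
    (hP : ∀ i ≤ k, P.coeff i = 0) :
    PowerSeries.coeff (R := S) k (P.eval₂ g a) = 0 := by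
  rw [Polynomial.eval₂_eq_sum_range, map_sum]
  refine Finset.sum_eq_zero fun i _ => ?_
  by_cases hik : i ≤ k
  · rw [hP i hik, map_zero, zero_mul, map_zero]
  · push_neg at hik
    have hdvd : (PowerSeries.X : PowerSeries S) ^ i ∣ g (P.coeff i) * a ^ i :=
      Dvd.dvd.mul_left (pow_dvd_pow_of_dvd (PowerSeries.X_dvd_iff.2 ha) i) _
    exact PowerSeries.X_pow_dvd_iff.1 hdvd k hik

theorem coeff_eval₂_congr (g : R →+* PowerSeries S) {a : PowerSeries S}
    (ha : PowerSeries.constantCoeff (R := S) a = 0) {k : ℕ} {P Q : Polynomial R}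
    (hPQ : ∀ i ≤ k, P.coeff i = Q.coeff i) :
    PowerSeries.coeff (R := S) k (P.eval₂ g a) = PowerSeries.coeff (R := S) k (Q.eval₂ g a) := by
  have h : PowerSeries.coeff (R := S) k ((P - Q).eval₂ g a) = 0 :=
    coeff_eval₂_eq_zero g ha fun i hi => by
      rw [Polynomial.coeff_sub, hPQ i hi, sub_self]
  rw [Polynomial.eval₂_sub, map_sub, sub_eq_zero] at h
  exact h

/-- Substitution `f(t) ↦ Σ g(fₙ) aⁿ` where `a` has zero constant term. -/
def substFun (g : R →+* PowerSeries S) (a : PowerSeries S) (f : PowerSeries R) :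
    PowerSeries S :=
  PowerSeries.mk fun k =>
    PowerSeries.coeff (R := S) k ((PowerSeries.trunc (k + 1) f).eval₂ g a)

theorem coeff_substFun (g : R →+* PowerSeries S) {a : PowerSeries S}
    (ha : PowerSeries.constantCoeff (R := S) a = 0) (f : PowerSeries R) {k : ℕ}
    {P : Polynomial R} (hP : ∀ i ≤ k, P.coeff i = PowerSeries.coeff (R := R) i f) :
    PowerSeries.coeff (R := S) k (substFun g a f) = PowerSeries.coeff (R := S) k (P.eval₂ g a) := by
  rw [substFun, PowerSeries.coeff_mk]
  refine (coeff_eval₂_congr g ha fun i hi => ?_).symm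
  rw [hP i hi, PowerSeries.coeff_trunc, if_pos (Nat.lt_succ_of_le hi)]

/-- `substFun` as a ring homomorphism. -/
def substHom (g : R →+* PowerSeries S) (a : PowerSeries S)
    (ha : PowerSeries.constantCoeff (R := S) a = 0) : PowerSeries R →+* PowerSeries S where
  toFun := substFun g a
  map_one' := by
    ext k
    rw [coeff_substFun g ha 1 (P := 1) fun i hi => by
      simp [Polynomial.coeff_one, PowerSeries.coeff_one]]
    rw [Polynomial.eval₂_one]
  map_zero' := by
    ext k
    rw [coeff_substFun g ha 0 (P := 0) fun i hi => by simp]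
    simp
  map_add' f h := by
    ext k
    rw [map_add, coeff_substFun g ha (f + h)
        (P := PowerSeries.trunc (k + 1) f + PowerSeries.trunc (k + 1) h)
        (fun i hi => by
          rw [Polynomial.coeff_add, PowerSeries.coeff_trunc, PowerSeries.coeff_trunc,
            if_pos (Nat.lt_succ_of_le hi), if_pos (Nat.lt_succ_of_le hi), map_add]),
      Polynomial.eval₂_add, map_add,
      coeff_substFun g ha f (P := PowerSeries.trunc (k + 1) f)
        (fun i hi => by rw [PowerSeries.coeff_trunc, if_pos (Nat.lt_succ_of_le hi)]),
      coeff_substFun g ha h (P := PowerSeries.trunc (k + 1) h)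
        (fun i hi => by rw [PowerSeries.coeff_trunc, if_pos (Nat.lt_succ_of_le hi)])]
  map_mul' f h := by
    ext k
    rw [coeff_substFun g ha (f * h)
        (P := PowerSeries.trunc (k + 1) f * PowerSeries.trunc (k + 1) h)
        (fun i hi => by
          rw [Polynomial.coeff_mul, PowerSeries.coeff_mul]
          refine Finset.sum_congr rfl fun pq hpq => ?_
          rw [Finset.HasAntidiagonal.mem_antidiagonal] at hpq
          have h1 : pq.1 < k + 1 := Nat.lt_succ_of_le (le_trans (hpq ▸ Nat.le_add_right _ _) hi)
          have h2 : pq.2 < k + 1 := Nat.lt_succ_of_le (le_trans (hpq ▸ Nat.le_add_left _ _) hi)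
          rw [PowerSeries.coeff_trunc, if_pos h1, PowerSeries.coeff_trunc, if_pos h2]),
      Polynomial.eval₂_mul, PowerSeries.coeff_mul, PowerSeries.coeff_mul]
    refine Finset.sum_congr rfl fun pq hpq => ?_
    rw [Finset.HasAntidiagonal.mem_antidiagonal] at hpq
    have h1 : pq.1 ≤ k := hpq ▸ Nat.le_add_right _ _
    have h2 : pq.2 ≤ k := hpq ▸ Nat.le_add_left _ _
    rw [coeff_substFun g ha f (P := PowerSeries.trunc (k + 1) f)
        (fun i hi => by rw [PowerSeries.coeff_trunc, if_pos (Nat.lt_succ_of_le (hi.trans h1))]),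
      coeff_substFun g ha h (P := PowerSeries.trunc (k + 1) h)
        (fun i hi => by rw [PowerSeries.coeff_trunc, if_pos (Nat.lt_succ_of_le (hi.trans h2))])]

@[simp] theorem substHom_C (g : R →+* PowerSeries S) {a : PowerSeries S}
    (ha : PowerSeries.constantCoeff (R := S) a = 0) (r : R) :
    substHom g a ha (PowerSeries.C (R := R) r) = g r := by
  ext k
  rw [show substHom g a ha (PowerSeries.C (R := R) r) = substFun g a (PowerSeries.C (R := R) r) from rfl,
    coeff_substFun g ha _ (P := Polynomial.C r)
      (fun i hi => by rw [Polynomial.coeff_C, PowerSeries.coeff_C]),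
    Polynomial.eval₂_C]

@[simp] theorem substHom_X (g : R →+* PowerSeries S) {a : PowerSeries S}
    (ha : PowerSeries.constantCoeff (R := S) a = 0) :
    substHom g a ha PowerSeries.X = a := by
  ext k
  rw [show substHom g a ha PowerSeries.X = substFun g a PowerSeries.X from rfl,
    coeff_substFun g ha _ (P := Polynomial.X)
      (fun i hi => by
        rw [Polynomial.coeff_X, PowerSeries.coeff_X]; split_ifs <;> (try rfl) <;> omega),
    Polynomial.eval₂_X]

theorem substHom_map {R' : Type*} [CommRing R'] (ρ : R' →+* R)
    (g : R →+* PowerSeries S) {a : PowerSeries S}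
    (ha : PowerSeries.constantCoeff (R := S) a = 0) (f : PowerSeries R') :
    substHom g a ha (PowerSeries.map ρ f) = substHom (g.comp ρ) a ha f := by
  ext k
  rw [show substHom g a ha (PowerSeries.map ρ f) = substFun g a (PowerSeries.map ρ f) from rfl,
    show substHom (g.comp ρ) a ha f = substFun (g.comp ρ) a f from rfl,
    coeff_substFun g ha _ (P := (PowerSeries.trunc (k + 1) f).map ρ)
      (fun i hi => by
        rw [Polynomial.coeff_map, PowerSeries.coeff_trunc, if_pos (Nat.lt_succ_of_le hi),
          PowerSeries.coeff_map]),
    coeff_substFun (g.comp ρ) ha _ (P := PowerSeries.trunc (k + 1) f)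
      (fun i hi => by rw [PowerSeries.coeff_trunc, if_pos (Nat.lt_succ_of_le hi)]),
    Polynomial.eval₂_map]

theorem constantCoeff_X_pow_eq_zero {d : ℕ} (hd : 1 ≤ d) :
    PowerSeries.constantCoeff (R := S) ((PowerSeries.X : PowerSeries S) ^ d) = 0 := by
  rw [map_pow, PowerSeries.constantCoeff_X, zero_pow (by omega)]

/-- Substituting `t = X^d` with coefficients mapped by `ρ`. -/
theorem substHom_C_comp_X_pow (ρ : R →+* S) {d : ℕ} (hd : 1 ≤ d) (f : PowerSeries R) :
    substHom ((PowerSeries.C (R := S)).comp ρ) (PowerSeries.X ^ d)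
        (constantCoeff_X_pow_eq_zero hd) f =
      PowerSeries.mk fun m =>
        if d ∣ m then ρ (PowerSeries.coeff (R := R) (m / d) f) else 0 := by
  ext m
  rw [show substHom ((PowerSeries.C (R := S)).comp ρ) (PowerSeries.X ^ d)
      (constantCoeff_X_pow_eq_zero hd) f
      = substFun ((PowerSeries.C (R := S)).comp ρ) (PowerSeries.X ^ d) f from rfl,
    substFun, PowerSeries.coeff_mk, PowerSeries.coeff_mk,
    PowerSeries.eval₂_trunc_eq_sum_range, map_sum]
  have hterm : ∀ i : ℕ, PowerSeries.coeff (R := S) m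
      (((PowerSeries.C (R := S)).comp ρ) (PowerSeries.coeff (R := R) i f) * (PowerSeries.X ^ d) ^ i)
      = if m = d * i then ρ (PowerSeries.coeff (R := R) i f) else 0 := by
    intro i
    rw [RingHom.comp_apply, ← pow_mul, PowerSeries.coeff_C_mul, PowerSeries.coeff_X_pow]
    split_ifs <;> simp
  simp only [hterm]
  by_cases hdm : d ∣ m
  · obtain ⟨c, hc⟩ := hdm
    have hcm : c < m + 1 := Nat.lt_succ_of_le (hc ▸ Nat.le_mul_of_pos_left c (by omega))
    rw [if_pos ⟨c, hc⟩, Finset.sum_eq_single_of_mem c (Finset.mem_range.2 hcm)]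
    · rw [if_pos hc, hc, Nat.mul_div_cancel_left c (by omega)]
    · intro b _ hb
      rw [if_neg]
      intro hmb
      exact hb (Nat.eq_of_mul_eq_mul_left (show 0 < d by omega)
        (show d * b = d * c by rw [← hmb, hc]))
  · rw [if_neg hdm, Finset.sum_eq_zero]
    intro b _
    rw [if_neg fun hmb => hdm ⟨b, hmb⟩]

end Subst

/-- If a power series is a square and has a least nonzero coefficient at index `n`,
then `n` is even. -/
theorem even_of_sq {S : Type*} [CommRing S] [NoZeroDivisors S] {h G : PowerSeries S}
    (hG : G = h ^ 2) {n : ℕ} (hn : PowerSeries.coeff (R := S) n G ≠ 0)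
    (hlow : ∀ j < n, PowerSeries.coeff (R := S) j G = 0) : Even n := by
  classical
  have hh0 : h ≠ 0 := by
    rintro rfl
    exact hn (by rw [hG]; simp)
  have hex : ∃ b, PowerSeries.coeff (R := S) b h ≠ 0 := by
    by_contra hc
    push_neg at hc
    exact hh0 (PowerSeries.ext fun b => by simpa using hc b)
  set b := Nat.find hex with hb
  have hbne : PowerSeries.coeff (R := S) b h ≠ 0 := Nat.find_spec hex
  have hbmin : ∀ i < b, PowerSeries.coeff (R := S) i h = 0 := fun i hi =>
    not_not.1 (Nat.find_min hex hi)
  have hGh : G = h * h := by rw [hG, sq]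
  have key : ∀ j < 2 * b, PowerSeries.coeff (R := S) j G = 0 := by
    intro j hj
    rw [hGh, PowerSeries.coeff_mul]
    refine Finset.sum_eq_zero fun pq hpq => ?_
    rw [Finset.HasAntidiagonal.mem_antidiagonal] at hpq
    rcases lt_or_ge pq.1 b with hp | hp
    · rw [hbmin _ hp, zero_mul]
    · rw [hbmin pq.2 (by omega), mul_zero]
  have hco : PowerSeries.coeff (R := S) (2 * b) G ≠ 0 := by
    rw [hGh, PowerSeries.coeff_mul,
      Finset.sum_eq_single_of_mem (b, b) (Finset.HasAntidiagonal.mem_antidiagonal.2 (two_mul b).symm)]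
    · exact mul_ne_zero hbne hbne
    · intro pq hpq hne
      rw [Finset.HasAntidiagonal.mem_antidiagonal] at hpq
      rcases lt_or_ge pq.1 b with hp | hp
      · rw [hbmin _ hp, zero_mul]
      · have hq : pq.2 < b := by
          rcases lt_or_ge pq.2 b with h' | h'
          · exact h'
          · exact absurd (Prod.ext (by omega) (by omega)) hne
        rw [hbmin _ hq, mul_zero]
  have h1 : ¬ (2 * b < n) := fun hlt => hco (hlow _ hlt)
  have h2 : ¬ (n < 2 * b) := fun hlt => hn (key _ hlt)
  have : n = 2 * b := by omega
  exact ⟨b, by omega⟩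

omit [CharZero L] in
theorem substPow_injective {d : ℕ} (hd : 1 ≤ d)
    {φ : PowerSeries L →+* PowerSeries (AlgebraicClosure L)} (hφ : IsSubstPow L d φ) :
    Function.Injective φ := by
  intro f g hfg
  have h0 : φ (f - g) = 0 := by rw [map_sub, hfg, sub_self]
  rw [hφ (f - g)] at h0
  have : f - g = 0 := by
    ext n
    have := congrArg (PowerSeries.coeff (R := AlgebraicClosure L) (d * n)) h0
    rw [PowerSeries.coeff_mk, if_pos (Dvd.intro n rfl),
      Nat.mul_div_cancel_left n (by omega), map_zero] at this
    exact (map_eq_zero_iff _ (algebraMap L (AlgebraicClosure L)).injective).1 this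
  exact sub_eq_zero.1 this

omit [CharZero L] in
/-- The core argument: if all the evaluations `Δ(s^d, U + X^N)` are squares, then the
root multiplicity of `U` in `Δ(s^d, u)` is even. -/
theorem main_even {d : ℕ} (hd : 1 ≤ d)
    {φ : PowerSeries L →+* PowerSeries (AlgebraicClosure L)} (hφ : IsSubstPow L d φ)
    (U : PowerSeries (AlgebraicClosure L))
    (Δ : Polynomial (PowerSeries L)) (hΔ : Δ ≠ 0)
    (H : ∀ N : ℕ, 1 ≤ N → ∃ h : PowerSeries (AlgebraicClosure L),
      Polynomial.eval₂ φ (U + PowerSeries.X ^ N) Δ = h ^ 2) :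
    Even (Polynomial.rootMultiplicity U (Δ.map φ)) := by
  classical
  have hinj : Function.Injective φ := substPow_injective L hd hφ
  set P : Polynomial (PowerSeries (AlgebraicClosure L)) := Δ.map φ with hPdef
  have hP0 : P ≠ 0 := (Polynomial.map_ne_zero_iff hinj).2 hΔ
  set Q : Polynomial (PowerSeries (AlgebraicClosure L)) :=
    P.comp (Polynomial.X + Polynomial.C U) with hQdef
  have hQtaylor : Q = Polynomial.taylor U P := (Polynomial.taylor_apply U P).symm
  have hQ0 : Q ≠ 0 := by
    rw [hQtaylor]
    intro h
    exact hP0 (Polynomial.taylor_injective U (by rw [h, map_zero]))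
  have hm : Polynomial.rootMultiplicity U P = Q.natTrailingDegree :=
    Polynomial.rootMultiplicity_eq_natTrailingDegree
  set m := Q.natTrailingDegree with hmdef
  set q : PowerSeries (AlgebraicClosure L) := Q.coeff m with hqdef
  have hq : q ≠ 0 := by
    rw [hqdef, hmdef]
    exact fun h => hQ0 (Polynomial.trailingCoeff_eq_zero.1 h)
  have hex : ∃ n, PowerSeries.coeff (R := AlgebraicClosure L) n q ≠ 0 := by
    by_contra hc
    push_neg at hc
    exact hq (PowerSeries.ext fun n => by simpa using hc n)
  set aN := Nat.find hex with haNdef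
  have haN : PowerSeries.coeff (R := AlgebraicClosure L) aN q ≠ 0 := Nat.find_spec hex
  have hmin : ∀ i < aN, PowerSeries.coeff (R := AlgebraicClosure L) i q = 0 := fun i hi =>
    not_not.1 (Nat.find_min hex hi)
  have hGQ : ∀ N : ℕ, Polynomial.eval₂ φ (U + PowerSeries.X ^ N) Δ
      = Q.eval (PowerSeries.X ^ N) := by
    intro N
    rw [Polynomial.eval₂_eq_eval_map, ← hPdef, hQdef, Polynomial.eval_comp,
      Polynomial.eval_add, Polynomial.eval_X, Polynomial.eval_C, add_comm]
  have coeffG : ∀ N j : ℕ,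
      PowerSeries.coeff (R := AlgebraicClosure L) j (Q.eval (PowerSeries.X ^ N))
      = ∑ i ∈ Finset.range (Q.natDegree + 1),
          (if N * i ≤ j then
            PowerSeries.coeff (R := AlgebraicClosure L) (j - N * i) (Q.coeff i) else 0) := by
    intro N j
    rw [Polynomial.eval_eq_sum_range, map_sum]
    refine Finset.sum_congr rfl fun i _ => ?_
    rw [← pow_mul, PowerSeries.coeff_mul_X_pow']
  have hmem : m ∈ Finset.range (Q.natDegree + 1) :=
    Finset.mem_range.2 (Nat.lt_succ_of_le Q.natTrailingDegree_le_natDegree)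
  have claimA : ∀ N : ℕ, aN < N →
      PowerSeries.coeff (R := AlgebraicClosure L) (N * m + aN) (Q.eval (PowerSeries.X ^ N))
        = PowerSeries.coeff (R := AlgebraicClosure L) aN q := by
    intro N hN
    rw [coeffG, Finset.sum_eq_single_of_mem m hmem]
    · rw [if_pos (Nat.le_add_right _ _), Nat.add_sub_cancel_left, hqdef]
    · intro i _ hne
      rcases lt_or_ge i m with hi | hi
      · rw [Polynomial.coeff_eq_zero_of_lt_natTrailingDegree hi]
        split_ifs <;> simp
      · have him : m < i := by omega
        have h1 : N * (m + 1) ≤ N * i := Nat.mul_le_mul_left N (by omega)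
        have h2 : N * (m + 1) = N * m + N := Nat.mul_succ N m
        rw [if_neg (by omega)]
  have claimB : ∀ N : ℕ, aN < N → ∀ j, j < N * m + aN →
      PowerSeries.coeff (R := AlgebraicClosure L) j (Q.eval (PowerSeries.X ^ N)) = 0 := by
    intro N hN j hj
    rw [coeffG]
    refine Finset.sum_eq_zero fun i _ => ?_
    rcases lt_trichotomy i m with hi | rfl | hi
    · rw [Polynomial.coeff_eq_zero_of_lt_natTrailingDegree hi]
      split_ifs <;> simp
    · split_ifs with h
      · exact hmin _ (by omega)
      · rfl
    · have h1 : N * (m + 1) ≤ N * i := Nat.mul_le_mul_left N (by omega)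
      have h2 : N * (m + 1) = N * m + N := Nat.mul_succ N m
      rw [if_neg (by omega)]
  have heven : ∀ N : ℕ, aN < N → Even (N * m + aN) := by
    intro N hN
    obtain ⟨h, hh⟩ := H N (by omega)
    rw [hGQ] at hh
    exact even_of_sq hh (by rw [claimA N hN]; exact haN) (claimB N hN)
  have e1 : Even ((aN + 1) * m + aN) := heven (aN + 1) (by omega)
  have e2 : Even ((aN + 2) * m + aN) := heven (aN + 2) (by omega)
  have hsplit : (aN + 2) * m + aN = ((aN + 1) * m + aN) + m := by ring
  rw [hsplit, Nat.even_add] at e2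
  rw [hm]
  exact e2.1 e1

omit [CharZero L] in
/-- Compatibility of the substitution homomorphism with `embTU`. -/
theorem comp_embTU {d N : ℕ} (hd : 1 ≤ d)
    {φ : PowerSeries L →+* PowerSeries (AlgebraicClosure L)} (hφ : IsSubstPow L d φ)
    {U : PowerSeries (AlgebraicClosure L)}
    (ha : PowerSeries.constantCoeff (R := AlgebraicClosure L) (U + PowerSeries.X ^ N) = 0) :
    ((substHom
        (substHom ((PowerSeries.C (R := AlgebraicClosure L)).comp
            (algebraMap L (AlgebraicClosure L))) (U + PowerSeries.X ^ N) ha)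
        (PowerSeries.X ^ d) (constantCoeff_X_pow_eq_zero hd)).comp (embTU L))
      = Polynomial.eval₂RingHom φ (U + PowerSeries.X ^ N) := by
  apply Polynomial.ringHom_ext
  · intro a
    rw [RingHom.comp_apply]
    have h1 : embTU L (Polynomial.C a) = PowerSeries.map (PowerSeries.C (R := L)) a := by
      simp only [embTU, Polynomial.coe_eval₂RingHom, Polynomial.eval₂_C]
    have h2 : (substHom ((PowerSeries.C (R := AlgebraicClosure L)).comp
        (algebraMap L (AlgebraicClosure L))) (U + PowerSeries.X ^ N) ha).comp
        (PowerSeries.C (R := L))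
        = (PowerSeries.C (R := AlgebraicClosure L)).comp (algebraMap L (AlgebraicClosure L)) :=
      RingHom.ext fun l => substHom_C _ ha l
    rw [h1, substHom_map, h2, substHom_C_comp_X_pow _ hd, ← hφ a,
      Polynomial.coe_eval₂RingHom, Polynomial.eval₂_C]
  · rw [RingHom.comp_apply]
    have h1 : embTU L Polynomial.X = PowerSeries.C (R := PowerSeries L) PowerSeries.X := by
      simp only [embTU, Polynomial.coe_eval₂RingHom, Polynomial.eval₂_X]
    rw [h1, substHom_C, substHom_X, Polynomial.coe_eval₂RingHom, Polynomial.eval₂_X]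

omit [CharZero L] in
/-- Compatibility of the substitution homomorphism with `embUT`. -/
theorem comp_embUT {d N : ℕ} (hd : 1 ≤ d)
    {φ : PowerSeries L →+* PowerSeries (AlgebraicClosure L)} (hφ : IsSubstPow L d φ)
    {U : PowerSeries (AlgebraicClosure L)} :
    ((substHom
        (Polynomial.eval₂RingHom ((PowerSeries.C (R := AlgebraicClosure L)).comp
            (algebraMap L (AlgebraicClosure L))) (U + PowerSeries.X ^ N))
        (PowerSeries.X ^ d) (constantCoeff_X_pow_eq_zero hd)).comp (embUT L))
      = Polynomial.eval₂RingHom φ (U + PowerSeries.X ^ N) := by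
  apply Polynomial.ringHom_ext
  · intro a
    rw [RingHom.comp_apply]
    have h1 : embUT L (Polynomial.C a) = PowerSeries.map (Polynomial.C : L →+* Polynomial L) a := by
      simp only [embUT, Polynomial.coe_eval₂RingHom, Polynomial.eval₂_C]
    have h2 : (Polynomial.eval₂RingHom ((PowerSeries.C (R := AlgebraicClosure L)).comp
        (algebraMap L (AlgebraicClosure L))) (U + PowerSeries.X ^ N)).comp
        (Polynomial.C : L →+* Polynomial L)
        = (PowerSeries.C (R := AlgebraicClosure L)).comp (algebraMap L (AlgebraicClosure L)) :=
      RingHom.ext fun l => by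
        rw [RingHom.comp_apply, Polynomial.coe_eval₂RingHom, Polynomial.eval₂_C]
    rw [h1, substHom_map, h2, substHom_C_comp_X_pow _ hd, ← hφ a,
      Polynomial.coe_eval₂RingHom, Polynomial.eval₂_C]
  · rw [RingHom.comp_apply]
    have h1 : embUT L Polynomial.X = PowerSeries.C (R := Polynomial L) Polynomial.X := by
      simp only [embUT, Polynomial.coe_eval₂RingHom, Polynomial.eval₂_X]
    rw [h1, substHom_C, Polynomial.coe_eval₂RingHom, Polynomial.eval₂_X,
      Polynomial.coe_eval₂RingHom, Polynomial.eval₂_X]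

/-- Even multiplicity of the finite roots of a square: let `Δ ∈ (L⟦t⟧)[u]` be nonzero.
(1) If `Δ` is a square in `L⟦u,t⟧`, then for every `d ≥ 1` and every root
`U ∈ L̄⟦s⟧` with zero constant term, the root multiplicity of `U` in `Δ(s^d, u)` is even.
(2) If `Δ` is a square in `(L[u])⟦t⟧`, the same holds for every `U ∈ L̄⟦s⟧`. -/
theorem even_multiplicity_of_square
    (Δ : Polynomial (PowerSeries L)) (hΔ : Δ ≠ 0) :
    ((∃ δ : PowerSeries (PowerSeries L), embTU L Δ = δ ^ 2) →
      ∀ d : ℕ, 1 ≤ d →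
      ∀ φ : PowerSeries L →+* PowerSeries (AlgebraicClosure L), IsSubstPow L d φ →
      ∀ U : PowerSeries (AlgebraicClosure L),
        PowerSeries.constantCoeff (R := AlgebraicClosure L) U = 0 →
        Even (Polynomial.rootMultiplicity U (Δ.map φ)))
    ∧ ((∃ δ : PowerSeries (Polynomial L), embUT L Δ = δ ^ 2) →
      ∀ d : ℕ, 1 ≤ d →
      ∀ φ : PowerSeries L →+* PowerSeries (AlgebraicClosure L), IsSubstPow L d φ →
      ∀ U : PowerSeries (AlgebraicClosure L),
        Even (Polynomial.rootMultiplicity U (Δ.map φ))) := by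
  constructor
  · rintro ⟨δ, hδ⟩ d hd φ hφ U hU
    refine main_even L hd hφ U Δ hΔ fun N hN => ?_
    have ha : PowerSeries.constantCoeff (R := AlgebraicClosure L) (U + PowerSeries.X ^ N) = 0 := by
      rw [map_add, hU, constantCoeff_X_pow_eq_zero hN, add_zero]
    refine ⟨substHom
        (substHom ((PowerSeries.C (R := AlgebraicClosure L)).comp
            (algebraMap L (AlgebraicClosure L))) (U + PowerSeries.X ^ N) ha)
        (PowerSeries.X ^ d) (constantCoeff_X_pow_eq_zero hd) δ, ?_⟩
    have hc := RingHom.congr_fun (comp_embTU L hd hφ ha) Δ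
    rw [RingHom.comp_apply, hδ, map_pow] at hc
    rw [← Polynomial.coe_eval₂RingHom φ (U + PowerSeries.X ^ N)]
    exact hc.symm
  · rintro ⟨δ, hδ⟩ d hd φ hφ U
    refine main_even L hd hφ U Δ hΔ fun N hN => ?_
    refine ⟨substHom
        (Polynomial.eval₂RingHom ((PowerSeries.C (R := AlgebraicClosure L)).comp
            (algebraMap L (AlgebraicClosure L))) (U + PowerSeries.X ^ N))
        (PowerSeries.X ^ d) (constantCoeff_X_pow_eq_zero hd) δ, ?_⟩
    have hc := RingHom.congr_fun (comp_embUT L (N := N) hd hφ (U := U)) Δ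
    rw [RingHom.comp_apply, hδ, map_pow] at hc
    rw [← Polynomial.coe_eval₂RingHom φ (U + PowerSeries.X ^ N)]
    exact hc.symm

end

end Stmt7
end

section
/- Let K be a field. (1) Let Φ ∈ (K[u])⟦t⟧ and U ∈ K⟦t⟧. If the substitution Φ(t,U) ∈ K⟦t⟧ is zero, then there exists Ψ ∈ (K[u])⟦t⟧ such that Φ = (u − U)·Ψ. (2) Let Φ ∈ K⟦u,t⟧ be a formal power series in the two variables u and t, and let U ∈ K⟦t⟧ have zero constant term. If the substitution of u = U into Φ (which is a well-defined element of K⟦t⟧ since U has zero constant term) is zero, then there exists Ψ ∈ K⟦u,t⟧ such that Φ = (u − U)·Ψ, where now u − U denotes the element u − ι(U) of K⟦u,t⟧, ι being the inclusion K⟦t⟧ → K⟦u,t⟧. -/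
namespace Stmt9

variable (K : Type*) [Field K]

/-- Substitution of `u = U` into `Φ ∈ (K[u])⟦t⟧`: the `tᵐ`-coefficient of
`Σ_n tⁿ·φ_n(U)` is `Σ_{n ≤ m} [t^{m−n}] φ_n(U)`. -/
noncomputable def substPoly (Φ : PowerSeries (Polynomial K)) (U : PowerSeries K) :
    PowerSeries K :=
  PowerSeries.mk fun m =>
    ∑ n ∈ Finset.range (m + 1),
      PowerSeries.coeff (R := K) (m - n)
        (Polynomial.aeval U (PowerSeries.coeff (R := Polynomial K) n Φ))

/-- Substitution of `u = U` into `Φ ∈ K⟦u,t⟧` (realized as `(K⟦t⟧)⟦u⟧`), for `U ∈ K⟦t⟧`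
with zero constant term: the `tᵐ`-coefficient of `Σ_j U^j·c_j(t)` is
`Σ_{j ≤ m} [tᵐ](U^j·c_j)`. -/
noncomputable def substSeries (Φ : PowerSeries (PowerSeries K)) (U : PowerSeries K) :
    PowerSeries K :=
  PowerSeries.mk fun m =>
    ∑ j ∈ Finset.range (m + 1),
      PowerSeries.coeff (R := K) m (U ^ j * PowerSeries.coeff (R := PowerSeries K) j Φ)

variable {K}

/- ### Auxiliary machinery -/

lemma coeff_vanish {U : PowerSeries K} (hU : PowerSeries.constantCoeff (R := K) U = 0)
    (f : PowerSeries K) {k n : ℕ} (h : n < k) : PowerSeries.coeff (R := K) n (U ^ k * f) = 0 := by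
  have hdvd : (PowerSeries.X : PowerSeries K) ^ k ∣ U ^ k * f :=
    Dvd.dvd.mul_right (pow_dvd_pow_of_dvd (PowerSeries.X_dvd_iff.mpr hU) k) f
  exact (PowerSeries.X_pow_dvd_iff.mp hdvd) n h

lemma coeff_pow_vanish {U : PowerSeries K} (hU : PowerSeries.constantCoeff (R := K) U = 0)
    {k n : ℕ} (h : n < k) : PowerSeries.coeff (R := K) n (U ^ k) = 0 := by
  have := coeff_vanish hU 1 h
  rwa [mul_one] at this

/-- The convergent sum `Σ_k U^k · c k` (convergence enforced by truncation). -/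
noncomputable def Dsum (U : PowerSeries K) (c : ℕ → PowerSeries K) : PowerSeries K :=
  PowerSeries.mk fun m => ∑ k ∈ Finset.range (m + 1), PowerSeries.coeff (R := K) m (U ^ k * c k)

lemma Dsum_congr {U : PowerSeries K} {c d : ℕ → PowerSeries K} (h : ∀ k, c k = d k) :
    Dsum U c = Dsum U d := by
  have : c = d := funext h
  rw [this]

lemma Dsum_eq {U : PowerSeries K} (hU : PowerSeries.constantCoeff (R := K) U = 0)
    (c : ℕ → PowerSeries K) :
    Dsum U c = c 0 + U * Dsum U (fun k => c (k + 1)) := by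
  ext m
  rw [map_add, PowerSeries.coeff_mul, Dsum, PowerSeries.coeff_mk, Finset.sum_range_succ']
  simp only [pow_zero, one_mul]
  rw [add_comm ((PowerSeries.coeff (R := K) m) (c 0))]
  congr 1
  have key : ∀ k, U ^ (k + 1) * c (k + 1) = U * (U ^ k * c (k + 1)) := by
    intro k; ring
  calc ∑ k ∈ Finset.range m, PowerSeries.coeff (R := K) m (U ^ (k + 1) * c (k + 1))
      = ∑ k ∈ Finset.range m, ∑ p ∈ Finset.HasAntidiagonal.antidiagonal m,
          PowerSeries.coeff (R := K) p.1 U * PowerSeries.coeff (R := K) p.2 (U ^ k * c (k + 1)) := by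
        refine Finset.sum_congr rfl fun k _ => ?_
        rw [key, PowerSeries.coeff_mul]
    _ = ∑ p ∈ Finset.HasAntidiagonal.antidiagonal m, ∑ k ∈ Finset.range m,
          PowerSeries.coeff (R := K) p.1 U * PowerSeries.coeff (R := K) p.2 (U ^ k * c (k + 1)) :=
        Finset.sum_comm
    _ = ∑ p ∈ Finset.HasAntidiagonal.antidiagonal m,
          PowerSeries.coeff (R := K) p.1 U * PowerSeries.coeff (R := K) p.2 (Dsum U fun k => c (k + 1)) := by
        refine Finset.sum_congr rfl fun p hp => ?_
        have hpm : p.1 + p.2 = m := Finset.HasAntidiagonal.mem_antidiagonal.mp hp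
        rw [Dsum, PowerSeries.coeff_mk, Finset.mul_sum]
        have h1 : ∑ k ∈ Finset.range m,
            PowerSeries.coeff (R := K) p.1 U * PowerSeries.coeff (R := K) p.2 (U ^ k * c (k + 1)) =
            ∑ k ∈ Finset.range (m + 1),
            PowerSeries.coeff (R := K) p.1 U * PowerSeries.coeff (R := K) p.2 (U ^ k * c (k + 1)) := by
          refine Finset.sum_subset (Finset.range_subset_range.mpr (Nat.le_succ m)) fun k hk hk' => ?_
          have hk2 : k = m := by
            simp only [Finset.mem_range] at hk hk'; omega
          subst hk2
          rcases Nat.eq_zero_or_pos p.1 with h0 | h0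
          · have : p.1 = 0 := h0
            rw [this, PowerSeries.coeff_zero_eq_constantCoeff, hU, zero_mul]
          · have : p.2 < k := by omega
            rw [coeff_vanish hU _ this, mul_zero]
        have h2 : ∑ k ∈ Finset.range (p.2 + 1),
            PowerSeries.coeff (R := K) p.1 U * PowerSeries.coeff (R := K) p.2 (U ^ k * c (k + 1)) =
            ∑ k ∈ Finset.range (m + 1),
            PowerSeries.coeff (R := K) p.1 U * PowerSeries.coeff (R := K) p.2 (U ^ k * c (k + 1)) := by
          refine Finset.sum_subset (Finset.range_subset_range.mpr (by omega)) fun k hk hk' => ?_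
          have : p.2 < k := by
            simp only [Finset.mem_range] at hk hk'; omega
          rw [coeff_vanish hU _ this, mul_zero]
        rw [h1, ← h2]

/-- The candidate cofactor for part (2). -/
noncomputable def Psi2 (U : PowerSeries K) (Φ : PowerSeries (PowerSeries K)) :
    PowerSeries (PowerSeries K) :=
  PowerSeries.mk fun j => Dsum U (fun k => PowerSeries.coeff (R := PowerSeries K) (j + 1 + k) Φ)

lemma part2 (Φ : PowerSeries (PowerSeries K)) (U : PowerSeries K)
    (hU : PowerSeries.constantCoeff (R := K) U = 0) (h : substSeries K Φ U = 0) :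
    Φ = (PowerSeries.X - PowerSeries.C (R := PowerSeries K) U) * Psi2 U Φ := by
  have h0 : Dsum U (fun k => PowerSeries.coeff (R := PowerSeries K) k Φ) = 0 := h
  refine PowerSeries.ext fun j => ?_
  rw [sub_mul, map_sub, PowerSeries.coeff_C_mul]
  cases j with
  | zero =>
    rw [PowerSeries.coeff_zero_X_mul]
    have heq := Dsum_eq hU (fun k => PowerSeries.coeff (R := PowerSeries K) k Φ)
    rw [h0] at heq
    have hps : PowerSeries.coeff (R := PowerSeries K) 0 (Psi2 U Φ) =
        Dsum U fun k => PowerSeries.coeff (R := PowerSeries K) (k + 1) Φ := by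
      rw [Psi2, PowerSeries.coeff_mk]
      exact Dsum_congr fun k => by rw [Nat.zero_add, Nat.add_comm]
    rw [hps, zero_sub]
    exact eq_neg_of_add_eq_zero_left heq.symm
  | succ j =>
    have heq := Dsum_eq hU (fun k => PowerSeries.coeff (R := PowerSeries K) (j + 1 + k) Φ)
    simp only [Nat.add_zero] at heq
    rw [PowerSeries.coeff_succ_X_mul]
    have hps1 : PowerSeries.coeff (R := PowerSeries K) j (Psi2 U Φ) =
        Dsum U fun k => PowerSeries.coeff (R := PowerSeries K) (j + 1 + k) Φ := by
      rw [Psi2, PowerSeries.coeff_mk]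
    have hps2 : PowerSeries.coeff (R := PowerSeries K) (j + 1) (Psi2 U Φ) =
        Dsum U fun k => PowerSeries.coeff (R := PowerSeries K) (j + 1 + (k + 1)) Φ := by
      rw [Psi2, PowerSeries.coeff_mk]
      exact Dsum_congr fun k => by rw [show j + 1 + 1 + k = j + 1 + (k + 1) by omega]
    rw [hps1, hps2, heq]
    ring

/- ### The embedding `(K[u])⟦t⟧ → (K⟦t⟧)⟦u⟧` -/

noncomputable def Efun (Φ : PowerSeries (Polynomial K)) : PowerSeries (PowerSeries K) :=
  PowerSeries.mk fun j => PowerSeries.mk fun m =>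
    (PowerSeries.coeff (R := Polynomial K) m Φ).coeff j

lemma coeff_Efun (Φ : PowerSeries (Polynomial K)) (j m : ℕ) :
    PowerSeries.coeff (R := K) m (PowerSeries.coeff (R := PowerSeries K) j (Efun Φ)) =
      (PowerSeries.coeff (R := Polynomial K) m Φ).coeff j := by
  rw [Efun, PowerSeries.coeff_mk, PowerSeries.coeff_mk]

lemma Efun_mul (Φ Χ : PowerSeries (Polynomial K)) :
    Efun (Φ * Χ) = Efun Φ * Efun Χ := by
  refine PowerSeries.ext fun j => PowerSeries.ext fun m => ?_
  rw [coeff_Efun, PowerSeries.coeff_mul, PowerSeries.coeff_mul, Polynomial.finset_sum_coeff]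
  calc ∑ p ∈ Finset.HasAntidiagonal.antidiagonal m,
        (PowerSeries.coeff (R := Polynomial K) p.1 Φ * PowerSeries.coeff (R := Polynomial K) p.2 Χ).coeff j
      = ∑ p ∈ Finset.HasAntidiagonal.antidiagonal m, ∑ q ∈ Finset.HasAntidiagonal.antidiagonal j,
          (PowerSeries.coeff (R := Polynomial K) p.1 Φ).coeff q.1 *
            (PowerSeries.coeff (R := Polynomial K) p.2 Χ).coeff q.2 := by
        exact Finset.sum_congr rfl fun p _ => Polynomial.coeff_mul _ _ _
    _ = ∑ q ∈ Finset.HasAntidiagonal.antidiagonal j, ∑ p ∈ Finset.HasAntidiagonal.antidiagonal m,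
          (PowerSeries.coeff (R := Polynomial K) p.1 Φ).coeff q.1 *
            (PowerSeries.coeff (R := Polynomial K) p.2 Χ).coeff q.2 := Finset.sum_comm
    _ = ∑ q ∈ Finset.HasAntidiagonal.antidiagonal j,
          PowerSeries.coeff (R := K) m (PowerSeries.coeff (R := PowerSeries K) q.1 (Efun Φ) *
            PowerSeries.coeff (R := PowerSeries K) q.2 (Efun Χ)) := by
        refine Finset.sum_congr rfl fun q _ => ?_
        rw [PowerSeries.coeff_mul]
        exact Finset.sum_congr rfl fun p _ => by rw [coeff_Efun, coeff_Efun]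
    _ = PowerSeries.coeff (R := K) m (∑ q ∈ Finset.HasAntidiagonal.antidiagonal j,
          PowerSeries.coeff (R := PowerSeries K) q.1 (Efun Φ) *
            PowerSeries.coeff (R := PowerSeries K) q.2 (Efun Χ)) := (map_sum _ _ _).symm

lemma Efun_inj {Φ Χ : PowerSeries (Polynomial K)} (h : Efun Φ = Efun Χ) : Φ = Χ := by
  refine PowerSeries.ext fun m => Polynomial.ext fun j => ?_
  have := congrArg (fun F => PowerSeries.coeff (R := K) m (PowerSeries.coeff (R := PowerSeries K) j F)) h
  simpa only [coeff_Efun] using this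

lemma exists_Efun_eq (F : PowerSeries (PowerSeries K))
    (h : ∀ m, ∃ B, ∀ j, B ≤ j →
      PowerSeries.coeff (R := K) m (PowerSeries.coeff (R := PowerSeries K) j F) = 0) :
    ∃ G, Efun G = F := by
  choose B hB using h
  refine ⟨PowerSeries.mk fun m => ∑ i ∈ Finset.range (B m),
    Polynomial.C (PowerSeries.coeff (R := K) m (PowerSeries.coeff (R := PowerSeries K) i F)) *
      Polynomial.X ^ i, ?_⟩
  refine PowerSeries.ext fun j => PowerSeries.ext fun m => ?_
  rw [coeff_Efun, PowerSeries.coeff_mk, Polynomial.finset_sum_coeff]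
  simp only [Polynomial.coeff_C_mul, Polynomial.coeff_X_pow, mul_ite, mul_one, mul_zero]
  rw [Finset.sum_ite_eq (Finset.range (B m))]
  by_cases hj : j ∈ Finset.range (B m)
  · rw [if_pos hj]
  · rw [if_neg hj, hB m j (by simpa using hj)]

lemma subst_compat (Φ : PowerSeries (Polynomial K)) (U : PowerSeries K)
    (hU : PowerSeries.constantCoeff (R := K) U = 0) :
    substSeries K (Efun Φ) U = substPoly K Φ U := by
  refine PowerSeries.ext fun m => ?_
  rw [substSeries, substPoly, PowerSeries.coeff_mk, PowerSeries.coeff_mk]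
  have hR : ∑ n ∈ Finset.range (m + 1),
      PowerSeries.coeff (R := K) (m - n) (Polynomial.aeval U (PowerSeries.coeff (R := Polynomial K) n Φ)) =
      ∑ k ∈ Finset.range (m + 1),
      PowerSeries.coeff (R := K) (m - (m - k))
        (Polynomial.aeval U (PowerSeries.coeff (R := Polynomial K) (m - k) Φ)) := by
    rw [← Finset.sum_range_reflect
      (fun n => PowerSeries.coeff (R := K) (m - n)
        (Polynomial.aeval U (PowerSeries.coeff (R := Polynomial K) n Φ))) (m + 1)]
    simp only [Nat.add_sub_cancel]
  rw [hR]
  have hL : ∀ j, PowerSeries.coeff (R := K) m (U ^ j * PowerSeries.coeff (R := PowerSeries K) j (Efun Φ)) =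
      ∑ k ∈ Finset.range (m + 1),
        PowerSeries.coeff (R := K) k (U ^ j) * (PowerSeries.coeff (R := Polynomial K) (m - k) Φ).coeff j := by
    intro j
    rw [PowerSeries.coeff_mul, Finset.Nat.sum_antidiagonal_eq_sum_range_succ_mk]
    exact Finset.sum_congr rfl fun k _ => by rw [coeff_Efun]
  calc ∑ j ∈ Finset.range (m + 1),
        PowerSeries.coeff (R := K) m (U ^ j * PowerSeries.coeff (R := PowerSeries K) j (Efun Φ))
      = ∑ j ∈ Finset.range (m + 1), ∑ k ∈ Finset.range (m + 1),
          PowerSeries.coeff (R := K) k (U ^ j) * (PowerSeries.coeff (R := Polynomial K) (m - k) Φ).coeff j :=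
        Finset.sum_congr rfl fun j _ => hL j
    _ = ∑ k ∈ Finset.range (m + 1), ∑ j ∈ Finset.range (m + 1),
          PowerSeries.coeff (R := K) k (U ^ j) * (PowerSeries.coeff (R := Polynomial K) (m - k) Φ).coeff j :=
        Finset.sum_comm
    _ = ∑ k ∈ Finset.range (m + 1),
          PowerSeries.coeff (R := K) (m - (m - k))
            (Polynomial.aeval U (PowerSeries.coeff (R := Polynomial K) (m - k) Φ)) := by
        refine Finset.sum_congr rfl fun k hk => ?_
        have hkm : k ≤ m := by simpa [Nat.lt_succ_iff] using hk
        have hmk : m - (m - k) = k := by omega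
        rw [hmk]
        set p := PowerSeries.coeff (R := Polynomial K) (m - k) Φ with hp
        set N := max (m + 1) (p.natDegree + 1) with hN
        have hdeg : p.natDegree < N := by omega
        rw [Polynomial.aeval_eq_sum_range' hdeg, map_sum]
        have h1 : ∑ j ∈ Finset.range (m + 1), PowerSeries.coeff (R := K) k (U ^ j) * p.coeff j =
            ∑ j ∈ Finset.range N, PowerSeries.coeff (R := K) k (U ^ j) * p.coeff j := by
          refine Finset.sum_subset (Finset.range_subset_range.mpr (by omega)) fun j hj hj' => ?_
          have : k < j := by simp only [Finset.mem_range] at hj hj'; omega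
          rw [coeff_pow_vanish hU this, zero_mul]
        rw [h1]
        refine Finset.sum_congr rfl fun i _ => ?_
        rw [map_smul, smul_eq_mul, mul_comm]

lemma Psi2_bound (Φ : PowerSeries (Polynomial K)) (U : PowerSeries K) (m : ℕ) :
    ∀ j, (Finset.range (m + 1)).sup
        (fun q => (PowerSeries.coeff (R := Polynomial K) q Φ).natDegree) ≤ j →
    PowerSeries.coeff (R := K) m (PowerSeries.coeff (R := PowerSeries K) j (Psi2 U (Efun Φ))) = 0 := by
  intro j hj
  rw [Psi2, PowerSeries.coeff_mk, Dsum, PowerSeries.coeff_mk]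
  refine Finset.sum_eq_zero fun k _ => ?_
  rw [PowerSeries.coeff_mul]
  refine Finset.sum_eq_zero fun p hp => ?_
  have hpm : p.1 + p.2 = m := Finset.HasAntidiagonal.mem_antidiagonal.mp hp
  rw [coeff_Efun]
  have hdeg : (PowerSeries.coeff (R := Polynomial K) p.2 Φ).natDegree < j + 1 + k := by
    have : (PowerSeries.coeff (R := Polynomial K) p.2 Φ).natDegree ≤
        (Finset.range (m + 1)).sup
          (fun q => (PowerSeries.coeff (R := Polynomial K) q Φ).natDegree) :=
      Finset.le_sup (f := fun q => (PowerSeries.coeff (R := Polynomial K) q Φ).natDegree)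
        (Finset.mem_range.mpr (by omega))
    omega
  rw [Polynomial.coeff_eq_zero_of_natDegree_lt hdeg, mul_zero]

/- ### Translation `u ↦ u + u₀` -/

lemma aeval_trans (u0 : K) (V : PowerSeries K) (p : Polynomial K) :
    Polynomial.aeval V (Polynomial.aeval (Polynomial.X + Polynomial.C u0) p) =
      Polynomial.aeval (V + PowerSeries.C (R := K) u0) p := by
  rw [← Polynomial.aeval_algHom_apply]
  congr 1
  simp [PowerSeries.algebraMap_apply]

lemma trans_inv (u0 : K) (p : Polynomial K) :
    Polynomial.aeval (Polynomial.X - Polynomial.C u0)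
      (Polynomial.aeval (Polynomial.X + Polynomial.C u0) p) = p := by
  rw [← Polynomial.aeval_algHom_apply]
  have : Polynomial.aeval (Polynomial.X - Polynomial.C u0)
      (Polynomial.X + Polynomial.C u0) = (Polynomial.X : Polynomial K) := by
    simp [Polynomial.algebraMap_eq]
  rw [this, Polynomial.aeval_X_left_apply]

lemma map_sigma_D (u0 : K) (U' : PowerSeries K) :
    PowerSeries.map (Polynomial.aeval (Polynomial.X - Polynomial.C u0) :
        Polynomial K →ₐ[K] Polynomial K).toRingHom
      (PowerSeries.C (R := Polynomial K) Polynomial.X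
        - PowerSeries.map (Polynomial.C : K →+* Polynomial K) U')
    = PowerSeries.C (R := Polynomial K) Polynomial.X
        - PowerSeries.map (Polynomial.C : K →+* Polynomial K) (U' + PowerSeries.C (R := K) u0) := by
  refine PowerSeries.ext fun n => ?_
  simp only [map_sub, PowerSeries.coeff_map, PowerSeries.coeff_C, map_add]
  split_ifs with h
  · simp only [AlgHom.toRingHom_eq_coe, RingHom.coe_coe, map_sub, Polynomial.aeval_X,
      Polynomial.aeval_C, Polynomial.algebraMap_eq]
    ring
  · simp only [AlgHom.toRingHom_eq_coe, RingHom.coe_coe, map_zero, Polynomial.aeval_C,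
      Polynomial.algebraMap_eq, map_zero, Polynomial.C_0]
    ring

lemma Efun_D (U' : PowerSeries K) :
    Efun (PowerSeries.C (R := Polynomial K) Polynomial.X
        - PowerSeries.map (Polynomial.C : K →+* Polynomial K) U')
      = PowerSeries.X - PowerSeries.C (R := PowerSeries K) U' := by
  refine PowerSeries.ext fun j => PowerSeries.ext fun m => ?_
  rw [coeff_Efun]
  simp only [map_sub, PowerSeries.coeff_C, PowerSeries.coeff_map, PowerSeries.coeff_X,
    Polynomial.coeff_sub]
  split_ifs with h1 h2 h2 <;>
    simp_all [Polynomial.coeff_X, Polynomial.coeff_C, PowerSeries.coeff_one,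
      PowerSeries.coeff_C]
  omega

/- ### Main theorem -/

variable (K)

/-- Lemma 1 of the paper: if `U` is a root of `Φ`, then `(u − U)` divides `Φ`.
(1) the version for `Φ ∈ (K[u])⟦t⟧` and arbitrary `U ∈ K⟦t⟧`;
(2) the version for `Φ ∈ K⟦u,t⟧` and `U ∈ K⟦t⟧` with zero constant term. -/
theorem root_factorization :
    (∀ (Φ : PowerSeries (Polynomial K)) (U : PowerSeries K),
      substPoly K Φ U = 0 →
      ∃ Ψ : PowerSeries (Polynomial K),
        Φ = (PowerSeries.C (R := Polynomial K) Polynomial.X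
              - PowerSeries.map (Polynomial.C : K →+* Polynomial K) U) * Ψ)
    ∧ (∀ (Φ : PowerSeries (PowerSeries K)) (U : PowerSeries K),
      PowerSeries.constantCoeff (R := K) U = 0 →
      substSeries K Φ U = 0 →
      ∃ Ψ : PowerSeries (PowerSeries K),
        Φ = (PowerSeries.X - PowerSeries.C (R := PowerSeries K) U) * Ψ) := by
  constructor
  · intro Φ U h
    set u0 := PowerSeries.constantCoeff (R := K) U with hu0
    set U' := U - PowerSeries.C (R := K) u0 with hU'def
    have hUeq : U' + PowerSeries.C (R := K) u0 = U := by rw [hU'def]; ring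
    have hU' : PowerSeries.constantCoeff (R := K) U' = 0 := by
      rw [hU'def, map_sub, PowerSeries.constantCoeff_C, hu0, sub_self]
    set τ : Polynomial K →ₐ[K] Polynomial K :=
      Polynomial.aeval (Polynomial.X + Polynomial.C u0) with hτ
    set σ : Polynomial K →ₐ[K] Polynomial K :=
      Polynomial.aeval (Polynomial.X - Polynomial.C u0) with hσ
    set Φ₂ := PowerSeries.map τ.toRingHom Φ with hΦ₂
    -- substitution is preserved by the translation
    have hsub : substPoly K Φ₂ U' = substPoly K Φ U := by
      refine PowerSeries.ext fun m => ?_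
      rw [substPoly, substPoly, PowerSeries.coeff_mk, PowerSeries.coeff_mk]
      refine Finset.sum_congr rfl fun n _ => ?_
      rw [hΦ₂, PowerSeries.coeff_map]
      have := aeval_trans u0 U' (PowerSeries.coeff (R := Polynomial K) n Φ)
      rw [hUeq] at this
      rw [hτ]
      rw [AlgHom.toRingHom_eq_coe, RingHom.coe_coe, this]
    have hss : substSeries K (Efun Φ₂) U' = 0 := by
      rw [subst_compat _ _ hU', hsub, h]
    have hfact := part2 (Efun Φ₂) U' hU' hss
    obtain ⟨Ψp, hΨp⟩ := exists_Efun_eq (Psi2 U' (Efun Φ₂))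
      (fun m => ⟨_, Psi2_bound Φ₂ U' m⟩)
    have hfact2 : Efun Φ₂ = Efun ((PowerSeries.C (R := Polynomial K) Polynomial.X
        - PowerSeries.map (Polynomial.C : K →+* Polynomial K) U') * Ψp) := by
      rw [Efun_mul, Efun_D, hΨp]
      exact hfact
    have hΦ₂eq : Φ₂ = (PowerSeries.C (R := Polynomial K) Polynomial.X
        - PowerSeries.map (Polynomial.C : K →+* Polynomial K) U') * Ψp := Efun_inj hfact2
    refine ⟨PowerSeries.map σ.toRingHom Ψp, ?_⟩
    have hback : PowerSeries.map σ.toRingHom Φ₂ = Φ := by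
      refine PowerSeries.ext fun n => ?_
      rw [hΦ₂, PowerSeries.coeff_map, PowerSeries.coeff_map]
      exact trans_inv u0 _
    calc Φ = PowerSeries.map σ.toRingHom Φ₂ := hback.symm
      _ = PowerSeries.map σ.toRingHom ((PowerSeries.C (R := Polynomial K) Polynomial.X
            - PowerSeries.map (Polynomial.C : K →+* Polynomial K) U') * Ψp) := by
          rw [← hΦ₂eq]
      _ = PowerSeries.map σ.toRingHom (PowerSeries.C (R := Polynomial K) Polynomial.X
            - PowerSeries.map (Polynomial.C : K →+* Polynomial K) U')
          * PowerSeries.map σ.toRingHom Ψp := map_mul _ _ _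
      _ = (PowerSeries.C (R := Polynomial K) Polynomial.X
            - PowerSeries.map (Polynomial.C : K →+* Polynomial K) U)
          * PowerSeries.map σ.toRingHom Ψp := by
          rw [map_sigma_D u0 U', hUeq]
  · intro Φ U hU h
    exact ⟨Psi2 U Φ, part2 Φ U hU h⟩

end Stmt9
end

section
/- Let K be a field, let P ∈ K[x₀, x₁, …, x_k, t, v], and suppose F ∈ (K[u])⟦t⟧ and F₁, …, F_k ∈ K⟦t⟧ satisfy P(F, F₁, …, F_k, t, u) = 0 in (K[u])⟦t⟧. Let U ∈ K⟦t⟧ and let F(U) ∈ K⟦t⟧ denote the substitution of u = U into F. If (∂P/∂x₀)(F(U), F₁, …, F_k, t, U) = 0 in K⟦t⟧, then also (∂P/∂v)(F(U), F₁, …, F_k, t, U) = 0 in K⟦t⟧. -/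
namespace Stmt10

variable (K : Type*) [Field K]

/-- Substitution of `u = U` into `F ∈ (K[u])⟦t⟧`: the `tᵐ`-coefficient of
`Σ_n tⁿ·φ_n(U)` is `Σ_{n ≤ m} [t^{m−n}] φ_n(U)`. -/
noncomputable def substPoly (F : PowerSeries (Polynomial K)) (U : PowerSeries K) :
    PowerSeries K :=
  PowerSeries.mk fun m =>
    ∑ n ∈ Finset.range (m + 1),
      PowerSeries.coeff (m - n)
        (Polynomial.aeval U (PowerSeries.coeff n F))

open PowerSeries Finset

variable {K}

/-- Partial sums approximating `substPoly`. -/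
noncomputable def SP (U : PowerSeries K) (M : ℕ) (F : PowerSeries (Polynomial K)) :
    PowerSeries K :=
  ∑ n ∈ Finset.range M, (PowerSeries.X : PowerSeries K) ^ n *
    Polynomial.aeval U (PowerSeries.coeff n F)

lemma coeff_SP (U : PowerSeries K) {M : ℕ} (F : PowerSeries (Polynomial K)) {m : ℕ}
    (h : m < M) :
    PowerSeries.coeff m (SP U M F) = PowerSeries.coeff m (substPoly K F U) := by
  rw [SP, substPoly, PowerSeries.coeff_mk, map_sum]
  rw [Finset.sum_congr rfl (fun n _ => PowerSeries.coeff_X_pow_mul' _ n m)]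
  rw [← Finset.sum_filter]
  congr 1
  ext n
  simp only [Finset.mem_filter, Finset.mem_range]
  omega

lemma substPoly_add (F G : PowerSeries (Polynomial K)) (U : PowerSeries K) :
    substPoly K (F + G) U = substPoly K F U + substPoly K G U := by
  ext m
  simp [substPoly, Finset.sum_add_distrib]

lemma sum_antidiag_eq_sum_product {β : Type*} [AddCommMonoid β] {M : ℕ} (h : ℕ × ℕ → β)
    (hz : ∀ p : ℕ × ℕ, M ≤ p.1 + p.2 → h p = 0) :
    ∑ N ∈ Finset.range M, ∑ p ∈ Finset.HasAntidiagonal.antidiagonal N, h p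
      = ∑ p ∈ Finset.range M ×ˢ Finset.range M, h p := by
  have hdisj : (↑(Finset.range M) : Set ℕ).PairwiseDisjoint Finset.HasAntidiagonal.antidiagonal := by
    intro a _ b _ hab
    simp only [Finset.disjoint_left]
    intro p hpa hpb
    rw [Finset.HasAntidiagonal.mem_antidiagonal] at hpa hpb
    exact hab (hpa.symm.trans hpb)
  rw [← Finset.sum_biUnion hdisj]
  refine Finset.sum_subset ?_ ?_
  · intro p hp
    rw [Finset.mem_biUnion] at hp
    obtain ⟨N, hN, hpN⟩ := hp
    rw [Finset.HasAntidiagonal.mem_antidiagonal] at hpN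
    rw [Finset.mem_range] at hN
    rw [Finset.mem_product, Finset.mem_range, Finset.mem_range]
    omega
  · intro p _ hnp
    refine hz p ?_
    by_contra hlt
    exact hnp (Finset.mem_biUnion.2 ⟨p.1 + p.2, Finset.mem_range.2 (by omega),
      Finset.HasAntidiagonal.mem_antidiagonal.2 rfl⟩)

lemma substPoly_mul (F G : PowerSeries (Polynomial K)) (U : PowerSeries K) :
    substPoly K (F * G) U = substPoly K F U * substPoly K G U := by
  ext m
  set M := m + 1 with hM
  have hmM : m < M := Nat.lt_succ_self m
  set h : ℕ × ℕ → K := fun p =>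
    PowerSeries.coeff m ((PowerSeries.X : PowerSeries K) ^ (p.1 + p.2) *
      (Polynomial.aeval U (PowerSeries.coeff p.1 F) *
       Polynomial.aeval U (PowerSeries.coeff p.2 G))) with hh
  have e1 : PowerSeries.coeff m (SP U M (F * G))
      = ∑ N ∈ Finset.range M, ∑ p ∈ Finset.HasAntidiagonal.antidiagonal N, h p := by
    rw [SP, map_sum]
    refine Finset.sum_congr rfl fun N _ => ?_
    rw [PowerSeries.coeff_mul N F G, map_sum, Finset.mul_sum, map_sum]
    refine Finset.sum_congr rfl fun p hp => ?_
    rw [Finset.HasAntidiagonal.mem_antidiagonal] at hp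
    rw [hh]
    simp only [map_mul]
    rw [hp]
  have e2 : PowerSeries.coeff m (SP U M F * SP U M G)
      = ∑ p ∈ Finset.range M ×ˢ Finset.range M, h p := by
    rw [SP, SP, Finset.sum_mul_sum, ← Finset.sum_product', map_sum]
    refine Finset.sum_congr rfl fun p _ => ?_
    rw [hh]
    simp only
    congr 1
    rw [pow_add]
    ring
  have hz : ∀ p : ℕ × ℕ, M ≤ p.1 + p.2 → h p = 0 := by
    intro p hp
    rw [hh]
    simp only
    rw [PowerSeries.coeff_X_pow_mul', if_neg (by omega)]
  calc PowerSeries.coeff m (substPoly K (F * G) U)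
      = PowerSeries.coeff m (SP U M (F * G)) := (coeff_SP U (F * G) hmM).symm
    _ = ∑ N ∈ Finset.range M, ∑ p ∈ Finset.HasAntidiagonal.antidiagonal N, h p := e1
    _ = ∑ p ∈ Finset.range M ×ˢ Finset.range M, h p := sum_antidiag_eq_sum_product h hz
    _ = PowerSeries.coeff m (SP U M F * SP U M G) := e2.symm
    _ = PowerSeries.coeff m (substPoly K F U * substPoly K G U) := by
        rw [PowerSeries.coeff_mul, PowerSeries.coeff_mul]
        refine Finset.sum_congr rfl fun p hp => ?_
        rw [Finset.HasAntidiagonal.mem_antidiagonal] at hp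
        rw [coeff_SP U F (show p.1 < M by omega), coeff_SP U G (show p.2 < M by omega)]

lemma substPoly_mapC (G : PowerSeries K) (U : PowerSeries K) :
    substPoly K (PowerSeries.map (Polynomial.C : K →+* Polynomial K) G) U = G := by
  ext m
  rw [substPoly, PowerSeries.coeff_mk]
  rw [Finset.sum_eq_single_of_mem m (Finset.self_mem_range_succ m)]
  · simp [PowerSeries.algebraMap_apply]
  · intro n hn hne
    rw [Finset.mem_range] at hn
    simp only [PowerSeries.coeff_map, Polynomial.aeval_C]
    rw [show (algebraMap K (PowerSeries K)) (PowerSeries.coeff n G)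
        = PowerSeries.C (PowerSeries.coeff n G) from rfl, PowerSeries.coeff_C,
      if_neg (by omega)]

lemma substPoly_CX (U : PowerSeries K) :
    substPoly K (PowerSeries.C Polynomial.X) U = U := by
  ext m
  rw [substPoly, PowerSeries.coeff_mk]
  rw [Finset.sum_eq_single_of_mem 0 (Finset.mem_range.2 (Nat.succ_pos m))]
  · simp
  · intro n _ hne
    rw [PowerSeries.coeff_C, if_neg hne]
    simp

/-- `substPoly` bundled as a ring homomorphism. -/
noncomputable def psi (U : PowerSeries K) :
    PowerSeries (Polynomial K) →+* PowerSeries K where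
  toFun F := substPoly K F U
  map_one' := by
    have h := substPoly_mapC (1 : PowerSeries K) U
    rwa [map_one] at h
  map_mul' F G := substPoly_mul F G U
  map_zero' := by ext m; simp [substPoly]
  map_add' F G := substPoly_add F G U

/-- Coefficientwise `d/du` derivation on `(K[u])⟦t⟧`. -/
noncomputable def Du (F : PowerSeries (Polynomial K)) : PowerSeries (Polynomial K) :=
  PowerSeries.mk fun n => Polynomial.derivative (PowerSeries.coeff n F)

lemma Du_add (a b : PowerSeries (Polynomial K)) : Du (a + b) = Du a + Du b := by
  ext n; simp [Du]

lemma Du_mul (a b : PowerSeries (Polynomial K)) :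
    Du (a * b) = Du a * b + a * Du b := by
  ext n
  simp only [Du, PowerSeries.coeff_mk, map_add, PowerSeries.coeff_mul, map_sum,
    Polynomial.derivative_mul, PowerSeries.coeff_mk]
  rw [← Finset.sum_add_distrib]

lemma Du_mapC (G : PowerSeries K) :
    Du (PowerSeries.map (Polynomial.C : K →+* Polynomial K) G) = 0 := by
  ext n; simp [Du]

lemma Du_algebraMap (a : K) : Du (algebraMap K (PowerSeries (Polynomial K)) a) = 0 := by
  have : algebraMap K (PowerSeries (Polynomial K)) a
      = PowerSeries.map (Polynomial.C : K →+* Polynomial K) (PowerSeries.C a) := by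
    ext n
    simp [PowerSeries.coeff_C, apply_ite (Polynomial.C : K →+* Polynomial K),
      PowerSeries.algebraMap_apply]
  rw [this, Du_mapC]

lemma Du_X : Du (PowerSeries.X : PowerSeries (Polynomial K)) = 0 := by
  rw [← PowerSeries.map_X (f := (Polynomial.C : K →+* Polynomial K)), Du_mapC]

lemma Du_CX : Du (PowerSeries.C (Polynomial.X : Polynomial K)) = 1 := by
  ext n
  simp [Du, PowerSeries.coeff_C, apply_ite (Polynomial.derivative (R := K)),
    PowerSeries.coeff_one]

/-- Chain rule for `Du` through `aeval`. -/
lemma Du_aeval {σ : Type*} [Fintype σ] [DecidableEq σ]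
    (f : σ → PowerSeries (Polynomial K)) (Q : MvPolynomial σ K) :
    Du (MvPolynomial.aeval f Q)
      = ∑ v : σ, MvPolynomial.aeval f (MvPolynomial.pderiv v Q) * Du (f v) := by
  induction Q using MvPolynomial.induction_on with
  | C a =>
    simp [MvPolynomial.aeval_C, MvPolynomial.pderiv_C, Du_algebraMap]
  | add p q hp hq =>
    simp only [map_add, Du_add, hp, hq, add_mul, Finset.sum_add_distrib]
  | mul_X p i hp =>
    have key : ∀ v, (MvPolynomial.aeval f) (MvPolynomial.pderiv v (p * MvPolynomial.X i))
        = (MvPolynomial.aeval f) (MvPolynomial.pderiv v p) * f i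
          + (MvPolynomial.aeval f) p * (if v = i then 1 else 0) := by
      intro v
      rw [MvPolynomial.pderiv_mul, map_add, map_mul, map_mul, MvPolynomial.aeval_X]
      congr 1
      by_cases hv : v = i
      · subst hv; rw [MvPolynomial.pderiv_X_self, map_one, if_pos rfl]
      · rw [MvPolynomial.pderiv_X_of_ne (fun h2 => hv h2.symm), map_zero, if_neg hv]
    have hsum : ∑ v : σ, (MvPolynomial.aeval f) (MvPolynomial.pderiv v (p * MvPolynomial.X i)) * Du (f v)
        = ∑ v : σ, ((MvPolynomial.aeval f) (MvPolynomial.pderiv v p) * f i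
            + (MvPolynomial.aeval f) p * (if v = i then 1 else 0)) * Du (f v) :=
      Finset.sum_congr rfl fun v _ => by rw [key v]
    rw [map_mul, MvPolynomial.aeval_X, Du_mul, hp, hsum]
    simp only [add_mul, Finset.sum_add_distrib]
    congr 1
    · rw [Finset.sum_mul]
      exact Finset.sum_congr rfl fun v _ => by ring
    · rw [Finset.sum_eq_single_of_mem i (Finset.mem_univ i)]
      · rw [if_pos rfl]; ring
      · intro v _ hvi; rw [if_neg hvi]; ring

lemma Du_zero : Du (0 : PowerSeries (Polynomial K)) = 0 := by
  ext n; simp [Du]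

lemma algebraMap_eq_mapC (a : K) : algebraMap K (PowerSeries (Polynomial K)) a
    = PowerSeries.map (Polynomial.C : K →+* Polynomial K) (PowerSeries.C a) := by
  ext n
  simp [PowerSeries.coeff_C, apply_ite (Polynomial.C : K →+* Polynomial K),
    PowerSeries.algebraMap_apply]

lemma psi_algebraMap (U : PowerSeries K) (a : K) :
    psi U (algebraMap K (PowerSeries (Polynomial K)) a) = algebraMap K (PowerSeries K) a := by
  rw [algebraMap_eq_mapC]
  show substPoly K _ U = _
  rw [substPoly_mapC]
  simp [PowerSeries.algebraMap_apply]

variable (K)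

/-- The key observation of the paper: if `P(F(u), F₁, …, F_k, t, u) = 0` and the series
`U ∈ K⟦t⟧` satisfies `(∂P/∂x₀)(F(U), F₁, …, F_k, t, U) = 0`, then also
`(∂P/∂v)(F(U), F₁, …, F_k, t, U) = 0`.  Here `P` is a polynomial in the variables
`x₀, …, x_k` (indexed by `Fin (k+1)`), `t` and `v` (indexed by `Fin 2`). -/
theorem key_observation (k : ℕ)
    (P : MvPolynomial (Fin (k + 1) ⊕ Fin 2) K)
    (F : PowerSeries (Polynomial K)) (Fs : Fin k → PowerSeries K) (U : PowerSeries K)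
    (hP : MvPolynomial.aeval
      (Sum.elim
        (Fin.cases (motive := fun _ => PowerSeries (Polynomial K)) F
          (fun i => PowerSeries.map (Polynomial.C : K →+* Polynomial K) (Fs i)))
        ![PowerSeries.X, PowerSeries.C Polynomial.X]) P = 0)
    (hPx0 : MvPolynomial.aeval
      (Sum.elim
        (Fin.cases (motive := fun _ => PowerSeries K) (substPoly K F U) Fs)
        ![PowerSeries.X, U])
      (MvPolynomial.pderiv (Sum.inl 0) P) = 0) :
    MvPolynomial.aeval
      (Sum.elim
        (Fin.cases (motive := fun _ => PowerSeries K) (substPoly K F U) Fs)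
        ![PowerSeries.X, U])
      (MvPolynomial.pderiv (Sum.inr 1) P) = 0 := by
  classical
  set f : Fin (k + 1) ⊕ Fin 2 → PowerSeries (Polynomial K) :=
    Sum.elim
      (Fin.cases (motive := fun _ => PowerSeries (Polynomial K)) F
        (fun i => PowerSeries.map (Polynomial.C : K →+* Polynomial K) (Fs i)))
      ![PowerSeries.X, PowerSeries.C Polynomial.X] with hf
  set g : Fin (k + 1) ⊕ Fin 2 → PowerSeries K :=
    Sum.elim
      (Fin.cases (motive := fun _ => PowerSeries K) (substPoly K F U) Fs)
      ![PowerSeries.X, U] with hg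
  have hfg : ∀ v, psi U (f v) = g v := by
    rintro (i | j)
    · refine Fin.cases ?_ ?_ i
      · simp only [hf, hg, Sum.elim_inl, Fin.cases_zero]
        rfl
      · intro i
        simp only [hf, hg, Sum.elim_inl, Fin.cases_succ]
        exact substPoly_mapC (Fs i) U
    · fin_cases j
      · simp only [hf, hg, Sum.elim_inr, Matrix.cons_val_zero]
        have h := substPoly_mapC (PowerSeries.X : PowerSeries K) U
        rwa [PowerSeries.map_X] at h
      · simp only [hf, hg, Sum.elim_inr, Matrix.cons_val_one, Matrix.head_cons]
        exact substPoly_CX U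
  have hcomp : ∀ Q : MvPolynomial (Fin (k + 1) ⊕ Fin 2) K,
      psi U (MvPolynomial.aeval f Q) = MvPolynomial.aeval g Q := by
    intro Q
    induction Q using MvPolynomial.induction_on with
    | C a => rw [MvPolynomial.aeval_C, MvPolynomial.aeval_C, psi_algebraMap]
    | add p q hp hq => rw [map_add, map_add, map_add, hp, hq]
    | mul_X p i hp =>
      rw [map_mul, map_mul, map_mul, MvPolynomial.aeval_X, MvPolynomial.aeval_X, hp, hfg]
  have h0 : (∑ v : Fin (k + 1) ⊕ Fin 2,
      MvPolynomial.aeval f (MvPolynomial.pderiv v P) * Du (f v)) = 0 := by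
    rw [← Du_aeval f P, hP, Du_zero]
  rw [Fintype.sum_sum_type, Fin.sum_univ_succ, Fin.sum_univ_two] at h0
  simp only [hf, Sum.elim_inl, Sum.elim_inr, Fin.cases_zero, Fin.cases_succ,
    Matrix.cons_val_zero, Matrix.cons_val_one, Matrix.head_cons,
    Du_mapC, Du_X, Du_CX, mul_zero, mul_one, add_zero, zero_add,
    Finset.sum_const_zero] at h0
  rw [← hf] at h0
  have h1 := congrArg (psi U) h0
  rw [map_add, map_mul, map_zero, hcomp, hcomp, hPx0, zero_mul, zero_add] at h1
  exact h1

end Stmt10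
end

section
/- For n ∈ ℕ, let a_n be the number of sequences (w₀, w₁, …, w_n) of nonnegative integers such that w₀ = 0, w_n = 0, and w_{i+1} − w_i ∈ {3, −2} for all 0 ≤ i < n, and let F₁ = Σ_{n≥0} a_n·tⁿ ∈ ℚ⟦t⟧. Then F₁ = 1 + 2·t⁵·F₁⁵ − t⁵·F₁⁶ + t⁵·F₁⁷ + t¹⁰·F₁¹⁰. -/
/-- Walks of length `n` on the half-line `ℕ`, starting and ending at `0`,
with steps `+3` and `−2`. -/
def Walk32 (n : ℕ) : Type :=
  { w : Fin (n + 1) → ℕ //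
      w 0 = 0 ∧ w (Fin.last n) = 0 ∧
      ∀ i : Fin n, (w i.succ : ℤ) = (w i.castSucc : ℤ) + 3
        ∨ (w i.succ : ℤ) = (w i.castSucc : ℤ) - 2 }

namespace Walk32Aux

open PowerSeries

/-- Walks of length `n` from `h` to `0` on the half-line. -/
def WalkF (n h : ℕ) : Type :=
  { w : Fin (n + 1) → ℕ //
      w 0 = h ∧ w (Fin.last n) = 0 ∧
      ∀ i : Fin n, (w i.succ : ℤ) = (w i.castSucc : ℤ) + 3
        ∨ (w i.succ : ℤ) = (w i.castSucc : ℤ) - 2 }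

/-- The counting function: `wcount n h` = number of walks of length `n` from `h` to `0`. -/
def wcount : ℕ → ℕ → ℕ
  | 0, h => if h = 0 then 1 else 0
  | n+1, h => wcount n (h+3) + if 2 ≤ h then wcount n (h-2) else 0

section Combinatorics

variable {n h v : ℕ}

lemma head_step (w : Fin (n+2) → ℕ)
    (hs : ∀ i : Fin (n+1), (w i.succ : ℤ) = (w i.castSucc : ℤ) + 3
      ∨ (w i.succ : ℤ) = (w i.castSucc : ℤ) - 2) :
    (w 1 : ℤ) = (w 0 : ℤ) + 3 ∨ (w 1 : ℤ) = (w 0 : ℤ) - 2 := by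
  have h0 := hs 0
  simpa using h0

lemma tail_mem (w : Fin (n+2) → ℕ) (hv : w 1 = v)
    (hl : w (Fin.last (n+1)) = 0)
    (hs : ∀ i : Fin (n+1), (w i.succ : ℤ) = (w i.castSucc : ℤ) + 3
      ∨ (w i.succ : ℤ) = (w i.castSucc : ℤ) - 2) :
    Fin.tail w 0 = v ∧ Fin.tail w (Fin.last n) = 0 ∧
      ∀ i : Fin n, ((Fin.tail w) i.succ : ℤ) = ((Fin.tail w) i.castSucc : ℤ) + 3
        ∨ ((Fin.tail w) i.succ : ℤ) = ((Fin.tail w) i.castSucc : ℤ) - 2 := by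
  refine ⟨hv, ?_, ?_⟩
  · show w (Fin.last n).succ = 0
    rw [Fin.succ_last]; exact hl
  · intro i
    have h0 := hs i.succ
    show (w i.succ.succ : ℤ) = (w i.castSucc.succ : ℤ) + 3
      ∨ (w i.succ.succ : ℤ) = (w i.castSucc.succ : ℤ) - 2
    rwa [Fin.succ_castSucc]

lemma cons_mem (w : Fin (n+1) → ℕ) (h0 : w 0 = v)
    (hl : w (Fin.last n) = 0)
    (hs : ∀ i : Fin n, (w i.succ : ℤ) = (w i.castSucc : ℤ) + 3
      ∨ (w i.succ : ℤ) = (w i.castSucc : ℤ) - 2)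
    (hstep : (v : ℤ) = (h : ℤ) + 3 ∨ (v : ℤ) = (h : ℤ) - 2) :
    (Fin.cons h w : Fin (n+2) → ℕ) 0 = h ∧
      (Fin.cons h w : Fin (n+2) → ℕ) (Fin.last (n+1)) = 0 ∧
      ∀ i : Fin (n+1),
        ((Fin.cons h w : Fin (n+2) → ℕ) i.succ : ℤ)
            = ((Fin.cons h w : Fin (n+2) → ℕ) i.castSucc : ℤ) + 3
        ∨ ((Fin.cons h w : Fin (n+2) → ℕ) i.succ : ℤ)
            = ((Fin.cons h w : Fin (n+2) → ℕ) i.castSucc : ℤ) - 2 := by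
  refine ⟨rfl, ?_, ?_⟩
  · rw [← Fin.succ_last, Fin.cons_succ]; exact hl
  · intro i
    induction i using Fin.cases with
    | zero =>
      simpa [h0] using hstep
    | succ j =>
      have h1 := hs j
      rw [← Fin.succ_castSucc]
      simpa [Fin.cons_succ] using h1

/-- First-step decomposition, case `2 ≤ h`. -/
noncomputable def equivGe (n h : ℕ) (hh : 2 ≤ h) :
    WalkF (n+1) h ≃ (WalkF n (h+3)) ⊕ (WalkF n (h-2)) where
  toFun w :=
    if hv : w.1 1 = h + 3 then
      Sum.inl ⟨Fin.tail w.1, tail_mem w.1 hv w.2.2.1 w.2.2.2⟩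
    else
      Sum.inr ⟨Fin.tail w.1, tail_mem w.1 (by
        have hst := head_step w.1 w.2.2.2
        have h0 := w.2.1
        rw [h0] at hst
        omega) w.2.2.1 w.2.2.2⟩
  invFun p :=
    match p with
    | Sum.inl w => ⟨Fin.cons h w.1,
        cons_mem w.1 w.2.1 w.2.2.1 w.2.2.2 (Or.inl (by push_cast; ring))⟩
    | Sum.inr w => ⟨Fin.cons h w.1,
        cons_mem w.1 w.2.1 w.2.2.1 w.2.2.2 (Or.inr (by omega))⟩
  left_inv w := by
    by_cases hv : w.1 1 = h + 3 <;>
      · simp only [hv, dif_pos, dif_neg, not_false_iff]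
        apply Subtype.ext
        show Fin.cons h (Fin.tail w.1) = w.1
        have hc := Fin.cons_self_tail (w.1)
        rwa [w.2.1] at hc
  right_inv p := by
    match p with
    | Sum.inl w =>
      have hv : (Fin.cons h w.1 : Fin (n+2) → ℕ) 1 = h + 3 := by
        show (Fin.cons h w.1 : Fin (n+2) → ℕ) (Fin.succ 0) = h + 3
        rw [Fin.cons_succ]; exact w.2.1
      simp only [hv, dif_pos]
      congr 1
    | Sum.inr w =>
      have hv : ¬ (Fin.cons h w.1 : Fin (n+2) → ℕ) 1 = h + 3 := by
        have : (Fin.cons h w.1 : Fin (n+2) → ℕ) (Fin.succ 0) = h - 2 := by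
          rw [Fin.cons_succ]; exact w.2.1
        show ¬ (Fin.cons h w.1 : Fin (n+2) → ℕ) (Fin.succ 0) = h + 3
        omega
      simp only [hv, dif_neg, not_false_iff]
      congr 1

/-- First-step decomposition, case `h < 2`. -/
noncomputable def equivLt (n h : ℕ) (hh : h < 2) :
    WalkF (n+1) h ≃ WalkF n (h+3) where
  toFun w := ⟨Fin.tail w.1, tail_mem w.1 (by
      have hst := head_step w.1 w.2.2.2
      have h0 := w.2.1
      rw [h0] at hst
      omega) w.2.2.1 w.2.2.2⟩
  invFun w := ⟨Fin.cons h w.1,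
      cons_mem w.1 w.2.1 w.2.2.1 w.2.2.2 (Or.inl (by push_cast; ring))⟩
  left_inv w := by
    apply Subtype.ext
    show Fin.cons h (Fin.tail w.1) = w.1
    have hc := Fin.cons_self_tail (w.1)
    rwa [w.2.1] at hc
  right_inv w := by
    apply Subtype.ext
    simp only [Fin.tail_cons]

lemma walkF_finite : ∀ n h : ℕ, Finite (WalkF n h)
  | 0, h => by
    have : Subsingleton (WalkF 0 h) := by
      constructor
      intro a b
      apply Subtype.ext
      funext i
      have hi : i = 0 := Fin.fin_one_eq_zero i
      rw [hi, a.2.1, b.2.1]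
    exact Finite.of_subsingleton
  | n+1, h => by
    have i3 := walkF_finite n (h+3)
    have i2 := walkF_finite n (h-2)
    rcases le_or_gt 2 h with hh | hh
    · exact Finite.of_equiv _ (equivGe n h hh).symm
    · exact Finite.of_equiv _ (equivLt n h hh).symm

lemma walkF_card : ∀ n h : ℕ, Nat.card (WalkF n h) = wcount n h
  | 0, h => by
    match h with
    | 0 =>
      have : Unique (WalkF 0 0) := by
        refine ⟨⟨⟨fun _ => 0, rfl, rfl, fun i => i.elim0⟩⟩, ?_⟩
        intro a
        apply Subtype.ext
        funext i
        have hi : i = 0 := Fin.fin_one_eq_zero i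
        rw [hi, a.2.1]
        rfl
      simp [wcount, Nat.card_unique]
    | h+1 =>
      have : IsEmpty (WalkF 0 (h+1)) := by
        constructor
        intro a
        have h1 := a.2.1
        have h2' : a.1 0 = 0 := a.2.2.1
        rw [h1] at h2'
        exact Nat.succ_ne_zero h h2'
      simp [wcount, Nat.card_of_isEmpty]
  | n+1, h => by
    have i3 := walkF_finite n (h+3)
    have i2 := walkF_finite n (h-2)
    rcases le_or_gt 2 h with hh | hh
    · rw [Nat.card_congr (equivGe n h hh), Nat.card_sum,
        walkF_card n (h+3), walkF_card n (h-2)]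
      simp [wcount, hh]
    · rw [Nat.card_congr (equivLt n h hh), walkF_card n (h+3)]
      simp [wcount, Nat.not_le.2 hh]

lemma walk32_card (n : ℕ) : Nat.card (Walk32 n) = wcount n 0 :=
  walkF_card n 0

end Combinatorics

section Series

/-- The generating function of walks from `h` to `0`. -/
noncomputable def Cs (h : ℕ) : PowerSeries ℚ :=
  PowerSeries.mk fun n => (wcount n h : ℚ)

lemma Cs_eq (h : ℕ) :
    Cs h = (if h = 0 then 1 else 0) + X * Cs (h+3)
      + (if 2 ≤ h then X * Cs (h-2) else 0) := by
  ext n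
  cases n with
  | zero =>
    simp only [map_add, coeff_zero_X_mul, Cs, coeff_mk, wcount]
    split_ifs <;> simp
  | succ n =>
    rw [map_add, map_add, coeff_succ_X_mul]
    have h1 : (PowerSeries.coeff (n+1)) (if h = 0 then (1 : PowerSeries ℚ) else 0) = 0 := by
      split_ifs <;> simp
    have h2 : (PowerSeries.coeff (n+1)) (if 2 ≤ h then X * Cs (h-2) else 0)
        = if 2 ≤ h then ((wcount n (h-2) : ℚ)) else 0 := by
      split_ifs <;> simp [Cs, coeff_succ_X_mul]
    rw [h1, h2]
    simp only [Cs, coeff_mk, wcount]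
    split_ifs <;> push_cast <;> ring

lemma uniq (G : ℕ → PowerSeries ℚ)
    (hG : ∀ h, G h = (if h = 0 then 1 else 0) + X * G (h+3)
      + (if 2 ≤ h then X * G (h-2) else 0)) :
    ∀ h, G h = Cs h := by
  have key : ∀ n h, PowerSeries.coeff n (G h) = PowerSeries.coeff n (Cs h) := by
    intro n
    induction n with
    | zero =>
      intro h
      rw [hG h, Cs_eq h]
      simp only [map_add, coeff_zero_X_mul]
      split_ifs <;> simp
    | succ n ih =>
      intro h
      rw [hG h, Cs_eq h]
      simp only [map_add, coeff_succ_X_mul]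
      split_ifs <;> simp [coeff_succ_X_mul, ih]
  intro h
  ext n
  exact key n h

end Series

section FixedPoint

/-- `Φ(d,E) = t(d⁴ + 3d²tE + t²E²)`. -/
noncomputable def Phi (d E : PowerSeries ℚ) : PowerSeries ℚ :=
  X * (d^4 + 3*d^2*(X*E) + (X*E)^2)

/-- `Ψ(d,E) = 1 + tE(d³ + 2dtE)`. -/
noncomputable def Psi (d E : PowerSeries ℚ) : PowerSeries ℚ :=
  1 + X * (E * (d^3 + 2*(d*(X*E))))

/-- Two power series agree in all coefficients below `n`. -/
def Agl (n : ℕ) (a b : PowerSeries ℚ) : Prop :=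
  ∀ k < n, PowerSeries.coeff k a = PowerSeries.coeff k b

lemma Agl.rfl {n : ℕ} {a : PowerSeries ℚ} : Agl n a a := fun _ _ => _root_.rfl

lemma Agl.mono {m n : ℕ} {a b : PowerSeries ℚ} (h : Agl n a b) (hm : m ≤ n) :
    Agl m a b := fun k hk => h k (lt_of_lt_of_le hk hm)

lemma Agl.add {n : ℕ} {a b c d : PowerSeries ℚ} (h1 : Agl n a b) (h2 : Agl n c d) :
    Agl n (a + c) (b + d) := by
  intro k hk
  simp [map_add, h1 k hk, h2 k hk]

lemma Agl.mul {n : ℕ} {a b c d : PowerSeries ℚ} (h1 : Agl n a b) (h2 : Agl n c d) :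
    Agl n (a * c) (b * d) := by
  intro k hk
  rw [PowerSeries.coeff_mul, PowerSeries.coeff_mul]
  apply Finset.sum_congr _root_.rfl
  intro p hp
  rw [Finset.HasAntidiagonal.mem_antidiagonal] at hp
  rw [h1 p.1 (by omega), h2 p.2 (by omega)]

lemma Agl.pow {n : ℕ} {a b : PowerSeries ℚ} (h : Agl n a b) (m : ℕ) :
    Agl n (a ^ m) (b ^ m) := by
  induction m with
  | zero => simpa using Agl.rfl
  | succ m ih => rw [pow_succ, pow_succ]; exact ih.mul h

lemma Agl.Xmul {n : ℕ} {a b : PowerSeries ℚ} (h : Agl n a b) :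
    Agl (n+1) (X * a) (X * b) := by
  intro k hk
  cases k with
  | zero => simp [coeff_zero_X_mul]
  | succ k => rw [coeff_succ_X_mul, coeff_succ_X_mul]; exact h k (by omega)

lemma agl_Phi {n : ℕ} {d E d' E' : PowerSeries ℚ} (hd : Agl n d d') (hE : Agl n E E') :
    Agl (n+1) (Phi d E) (Phi d' E') := by
  have hXE : Agl n (X*E) (X*E') := (hE.Xmul).mono (by omega)
  exact (((hd.pow 4).add (((Agl.rfl).mul (hd.pow 2)).mul hXE)).add (hXE.pow 2)).Xmul

lemma agl_Psi {n : ℕ} {d E d' E' : PowerSeries ℚ} (hd : Agl n d d') (hE : Agl n E E') :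
    Agl (n+1) (Psi d E) (Psi d' E') := by
  have hXE : Agl n (X*E) (X*E') := (hE.Xmul).mono (by omega)
  exact (Agl.rfl).add ((hE.mul ((hd.pow 3).add ((Agl.rfl).mul (hd.mul hXE)))).Xmul)

/-- Picard iteration for the fixed point system. -/
noncomputable def it : ℕ → PowerSeries ℚ × PowerSeries ℚ
  | 0 => (0, 1)
  | k+1 => (Phi (it k).1 (it k).2, Psi (it k).1 (it k).2)

lemma stab : ∀ n m m' : ℕ, n ≤ m → n ≤ m' →
    Agl n (it m).1 (it m').1 ∧ Agl n (it m).2 (it m').2 := by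
  intro n
  induction n with
  | zero =>
    intro m m' _ _
    exact ⟨fun k hk => absurd hk (by omega), fun k hk => absurd hk (by omega)⟩
  | succ n ih =>
    intro m m' hm hm'
    obtain ⟨m0, rfl⟩ : ∃ m0, m = m0 + 1 := ⟨m - 1, by omega⟩
    obtain ⟨m1, rfl⟩ : ∃ m1, m' = m1 + 1 := ⟨m' - 1, by omega⟩
    obtain ⟨h1, h2⟩ := ih m0 m1 (by omega) (by omega)
    exact ⟨agl_Phi h1 h2, agl_Psi h1 h2⟩

/-- The series `d₁` (first passage from `0` to `-1`). -/
noncomputable def dd : PowerSeries ℚ :=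
  PowerSeries.mk fun n => PowerSeries.coeff n (it (n+1)).1

/-- The series `E` (excursions). -/
noncomputable def ee : PowerSeries ℚ :=
  PowerSeries.mk fun n => PowerSeries.coeff n (it (n+1)).2

lemma agl_dd (n : ℕ) : Agl n dd (it n).1 := by
  intro k hk
  rw [dd, PowerSeries.coeff_mk]
  exact (stab (k+1) (k+1) n (le_refl _) hk).1 k (by omega)

lemma agl_ee (n : ℕ) : Agl n ee (it n).2 := by
  intro k hk
  rw [ee, PowerSeries.coeff_mk]
  exact (stab (k+1) (k+1) n (le_refl _) hk).2 k (by omega)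

lemma dd_eq : dd = Phi dd ee := by
  ext n
  have h := (agl_Phi (agl_dd n) (agl_ee n)) n (by omega)
  rw [h]
  show PowerSeries.coeff n (PowerSeries.mk fun m => PowerSeries.coeff m (it (m+1)).1) = _
  rw [PowerSeries.coeff_mk]
  rfl

lemma ee_eq : ee = Psi dd ee := by
  ext n
  have h := (agl_Psi (agl_dd n) (agl_ee n)) n (by omega)
  rw [h]
  show PowerSeries.coeff n (PowerSeries.mk fun m => PowerSeries.coeff m (it (m+1)).2) = _
  rw [PowerSeries.coeff_mk]
  rfl

lemma hd : dd = X * (dd^4 + 3*dd^2*(X*ee) + (X*ee)^2) := dd_eq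

lemma he : ee = 1 + X * (ee * (dd^3 + 2*(dd*(X*ee)))) := ee_eq

end FixedPoint

section Mseq

/-- First passage generating functions from height `k` down to `0`. -/
noncomputable def M : ℕ → PowerSeries ℚ
  | 0 => 1
  | 1 => dd
  | k+2 => dd * M (k+1) + X * ee * M k

lemma M_add2 (k : ℕ) : M (k+2) = dd * M (k+1) + X * ee * M k := rfl

lemma M0 : M 0 = 1 := rfl
lemma M1 : M 1 = dd := rfl

lemma M2 : M 2 = dd^2 + X*ee := by
  show M (0+2) = _
  rw [M_add2]
  show dd * M 1 + X * ee * M 0 = _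
  rw [M1, M0]; ring

lemma M3 : M 3 = dd^3 + 2*dd*(X*ee) := by
  show M (1+2) = _
  rw [M_add2]
  show dd * M 2 + X * ee * M 1 = _
  rw [M2, M1]; ring

lemma M4 : M 4 = dd^4 + 3*dd^2*(X*ee) + (X*ee)^2 := by
  show M (2+2) = _
  rw [M_add2]
  show dd * M 3 + X * ee * M 2 = _
  rw [M3, M2]; ring

lemma M5 : M 5 = dd^5 + 4*dd^3*(X*ee) + 3*dd*(X*ee)^2 := by
  show M (3+2) = _
  rw [M_add2]
  show dd * M 4 + X * ee * M 3 = _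
  rw [M4, M3]; ring

lemma M6 : M 6 = dd^6 + 5*dd^4*(X*ee) + 6*dd^2*(X*ee)^2 + (X*ee)^3 := by
  show M (4+2) = _
  rw [M_add2]
  show dd * M 5 + X * ee * M 4 = _
  rw [M5, M4]; ring

lemma base0 : M 2 = X * M 5 + X * M 0 := by
  rw [M2, M5, M0]
  linear_combination dd * hd + X * he

lemma base1 : M 3 = X * M 6 + X * M 1 := by
  rw [M3, M6, M1]
  linear_combination (dd^2 + X*ee) * hd + (X*dd) * he

lemma keyM : ∀ k, M (k+2) = X * M (k+5) + X * M k := by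
  have key2 : ∀ k, (M (k+2) = X*M (k+5) + X*M k) ∧ (M (k+3) = X*M (k+6) + X*M (k+1)) := by
    intro k
    induction k with
    | zero => exact ⟨base0, base1⟩
    | succ k ih =>
      refine ⟨ih.2, ?_⟩
      have e1 : M (k+4) = dd * M (k+3) + X*ee*M (k+2) := M_add2 (k+2)
      have e2 : M (k+7) = dd * M (k+6) + X*ee*M (k+5) := M_add2 (k+5)
      have e3 : M (k+2) = dd * M (k+1) + X*ee*M k := M_add2 k
      show M (k+4) = X * M (k+7) + X * M (k+2)
      linear_combination e1 - X*e2 + dd*ih.2 + (X*ee)*ih.1 - X*e3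
  exact fun k => (key2 k).1

lemma hsysG : ∀ h, M h * ee = (if h = 0 then 1 else 0) + X * (M (h+3) * ee)
    + (if 2 ≤ h then X * (M (h-2) * ee) else 0) := by
  intro h
  match h with
  | 0 =>
    rw [if_pos _root_.rfl, if_neg (by omega), M0]
    show (1 : PowerSeries ℚ) * ee = 1 + X * (M 3 * ee) + 0
    rw [M3]
    linear_combination he
  | 1 =>
    rw [if_neg (by omega), if_neg (by omega), M1]
    show dd * ee = 0 + X * (M 4 * ee) + 0
    rw [M4]
    linear_combination ee * hd
  | k+2 =>
    rw [if_neg (by omega), if_pos (by omega)]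
    have hk := keyM k
    show M (k+2) * ee = 0 + X * (M (k+5) * ee) + X * (M k * ee)
    linear_combination ee * hk

lemma ee_Cs : ee = Cs 0 := by
  have h := uniq (fun h => M h * ee) hsysG 0
  rw [M0, one_mul] at h
  exact h

lemma final : ee = 1 + 2 * X ^ 5 * ee ^ 5 - X ^ 5 * ee ^ 6
    + X ^ 5 * ee ^ 7 + X ^ 10 * ee ^ 10 := by
  linear_combination (X*dd^2*ee + ((-1) : PowerSeries ℚ)*X^2*ee^2 + (3 : PowerSeries ℚ)*X^2*ee^3 + X^2*dd^5*ee^3 + (2 : PowerSeries ℚ)*X^3*dd^3*ee^3 + ((-1) : PowerSeries ℚ)*X^3*dd^3*ee^4 + X^3*dd^3*ee^5 + ((-1) : PowerSeries ℚ)*X^3*dd^8*ee^3 + ((-2) : PowerSeries ℚ)*X^4*dd*ee^4 + (3 : PowerSeries ℚ)*X^4*dd*ee^5 + ((-1) : PowerSeries ℚ)*X^4*dd^6*ee^4 + ((-1) : PowerSeries ℚ)*X^4*dd^6*ee^5 + (2 : PowerSeries ℚ)*X^5*dd^4*ee^5 + ((-2) : PowerSeries ℚ)*X^5*dd^4*ee^6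 + X^5*dd^4*ee^7 + X^6*dd^2*ee^6 + (2 : PowerSeries ℚ)*X^6*dd^2*ee^7 + ((-1) : PowerSeries ℚ)*X^6*dd^7*ee^7 + ((-1) : PowerSeries ℚ)*X^7*ee^7 + (2 : PowerSeries ℚ)*X^7*ee^8 + ((-1) : PowerSeries ℚ)*X^7*dd^5*ee^8 + (2 : PowerSeries ℚ)*X^8*dd^3*ee^8 + ((-1) : PowerSeries ℚ)*X^8*dd^3*ee^9 + ((-1) : PowerSeries ℚ)*X^8*dd^8*ee^8 + ((-2) : PowerSeries ℚ)*X^9*dd*ee^9 + ((-1) : PowerSeries ℚ)*X^9*dd^6*ee^9 + (2 : PowerSeries ℚ)*X^10*dd^4*ee^10) * hd + ((1 : PowerSeries ℚ) + ((-3) : PowerSeries ℚ)*X^2*dd*ee^2 + ((-1) : PowerSeries ℚ)*X^2*dd^6*ee + ((-1) : PowerSeries ℚ)*X^2*dd^6*ee^2 + ((-2) : PowerSeries ℚ)*X^3*dd^4*ee^2 + ((-1) : PowerSeries ℚ)*X^3*dd^4*ee^4 + X^3*dd^9*ee^2 + (2 : PowerSeries ℚ)*X^4*dd^2*ee^3 +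 ((-3) : PowerSeries ℚ)*X^4*dd^2*ee^4 + (2 : PowerSeries ℚ)*X^4*dd^7*ee^3 + X^4*dd^7*ee^4 + X^5*ee^4 + ((-1) : PowerSeries ℚ)*X^5*ee^6 + ((-2) : PowerSeries ℚ)*X^5*dd^5*ee^4 + (2 : PowerSeries ℚ)*X^5*dd^5*ee^5 + ((-1) : PowerSeries ℚ)*X^5*dd^5*ee^6 + ((-1) : PowerSeries ℚ)*X^6*dd^3*ee^5 + ((-2) : PowerSeries ℚ)*X^6*dd^3*ee^6 + X^6*dd^8*ee^6 + ((-4) : PowerSeries ℚ)*X^7*dd*ee^7 + ((-1) : PowerSeries ℚ)*X^7*dd^6*ee^6 + (2 : PowerSeries ℚ)*X^7*dd^6*ee^7 + ((-2) : PowerSeries ℚ)*X^8*dd^4*ee^7 + (2 : PowerSeries ℚ)*X^8*dd^4*ee^8 + X^8*dd^9*ee^7 + (2 : PowerSeries ℚ)*X^9*dd^2*ee^8 + (2 : PowerSeries ℚ)*X^9*dd^7*ee^8 + X^10*ee^9 + ((-2) : PowerSeries ℚ)*X^10*dd^5*ee^9 + ((-1) : PowerSeries ℚ)*X^11*dd^3*ee^10)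 * he

end Mseq

end Walk32Aux

/-- The length generating function `F₁ = Σ_n a_n tⁿ` of walks on the half-line `ℕ`
starting and ending at `0` with steps `+3, −2` satisfies
`F₁ = 1 + 2t⁵F₁⁵ − t⁵F₁⁶ + t⁵F₁⁷ + t¹⁰F₁¹⁰`. -/
theorem walks_3_minus2_gf
    (F₁ : PowerSeries ℚ)
    (hF₁ : F₁ = PowerSeries.mk fun n => (Nat.card (Walk32 n) : ℚ)) :
    F₁ = 1 + 2 * PowerSeries.X ^ 5 * F₁ ^ 5 - PowerSeries.X ^ 5 * F₁ ^ 6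
          + PowerSeries.X ^ 5 * F₁ ^ 7 + PowerSeries.X ^ 10 * F₁ ^ 10 := by
  have hC : F₁ = Walk32Aux.Cs 0 := by
    rw [hF₁]
    ext n
    simp [Walk32Aux.Cs, PowerSeries.coeff_mk, Walk32Aux.walk32_card n]
  rw [hC, ← Walk32Aux.ee_Cs]
  exact Walk32Aux.final
end

section
/- Let F ∈ (ℚ[u])⟦t⟧ and let F₁ ∈ ℚ⟦t⟧ be obtained from F by evaluating each polynomial coefficient at u = 1. Suppose that, in (ℚ[u])⟦t⟧, (u − 1)·F = (u − 1) + t·u²·(u − 1)·F² + t·u·(u·F − F₁). Then F₁ = 1 − 16·t + 18·t·F₁ − 27·t²·F₁². -/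
open PowerSeries Polynomial

noncomputable def Dq (f : PowerSeries (Polynomial ℚ)) : PowerSeries (Polynomial ℚ) :=
  PowerSeries.mk fun n => Polynomial.derivative (PowerSeries.coeff n f)

lemma Dq_coeff (f : PowerSeries (Polynomial ℚ)) (n : ℕ) :
    PowerSeries.coeff n (Dq f) = Polynomial.derivative (PowerSeries.coeff n f) :=
  PowerSeries.coeff_mk _ _

lemma Dq_add (f g : PowerSeries (Polynomial ℚ)) : Dq (f + g) = Dq f + Dq g := by
  ext n; simp [Dq_coeff]

lemma Dq_mul (f g : PowerSeries (Polynomial ℚ)) : Dq (f * g) = Dq f * g + f * Dq g := by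
  ext n
  simp only [Dq_coeff, PowerSeries.coeff_mul, map_add, map_sum, Polynomial.derivative_mul,
    Finset.sum_add_distrib]

lemma Dq_C (p : Polynomial ℚ) :
    Dq (PowerSeries.C p) = PowerSeries.C (Polynomial.derivative p) := by
  ext n
  simp only [Dq_coeff, PowerSeries.coeff_C]
  split <;> simp

lemma Dq_X : Dq (PowerSeries.X : PowerSeries (Polynomial ℚ)) = 0 := by
  ext n
  simp only [Dq_coeff, PowerSeries.coeff_X]
  split <;> simp

lemma Dq_map (f : PowerSeries ℚ) :
    Dq (PowerSeries.map (Polynomial.C : ℚ →+* Polynomial ℚ) f) = 0 := by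
  ext n; simp [Dq_coeff]

lemma Dq_one : Dq (1 : PowerSeries (Polynomial ℚ)) = 0 := by
  have := Dq_C 1
  simpa using this

lemma Dq_sub (f g : PowerSeries (Polynomial ℚ)) : Dq (f - g) = Dq f - Dq g := by
  ext n; simp [Dq_coeff]

lemma Dq_ofNat (n : ℕ) [n.AtLeastTwo] :
    Dq (no_index (OfNat.ofNat n) : PowerSeries (Polynomial ℚ)) = 0 := by
  have h1 : (OfNat.ofNat n : PowerSeries (Polynomial ℚ))
      = PowerSeries.C (OfNat.ofNat n : Polynomial ℚ) := (map_ofNat _ n).symm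
  rw [h1, Dq_C]
  have h2 : (OfNat.ofNat n : Polynomial ℚ) = Polynomial.C (OfNat.ofNat n : ℚ) :=
    (map_ofNat _ n).symm
  rw [h2]
  simp

lemma one_sub_X_ne_zero : (1 - Polynomial.X : Polynomial ℚ) ≠ 0 := by
  intro h
  have := congrArg (Polynomial.eval 0) h
  simp at this

lemma cancel_lemma (S W : PowerSeries (Polynomial ℚ)) (r : PowerSeries ℚ)
    (hS : PowerSeries.coeff 0 S = 1 - Polynomial.X)
    (h : S * W = PowerSeries.map (Polynomial.C : ℚ →+* Polynomial ℚ) r) : r = 0 := by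
  have key : ∀ m : ℕ, PowerSeries.coeff m r = 0 ∧ PowerSeries.coeff m W = 0 := by
    intro m
    induction m using Nat.strong_induction_on with
    | _ m ih =>
      have hc := congrArg (PowerSeries.coeff m) h
      rw [PowerSeries.coeff_mul, PowerSeries.coeff_map] at hc
      rw [Finset.sum_eq_single ((0 : ℕ), m)] at hc
      · rw [hS] at hc
        have h1 := congrArg (Polynomial.eval 1) hc
        simp only [Polynomial.eval_mul, Polynomial.eval_sub, Polynomial.eval_one,
          Polynomial.eval_X, Polynomial.eval_C] at h1
        norm_num at h1
        have hr : PowerSeries.coeff m r = 0 := h1.symm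
        refine ⟨hr, ?_⟩
        rw [hr] at hc
        simp only [map_zero] at hc
        rcases mul_eq_zero.mp hc with h' | h'
        · exact absurd h' one_sub_X_ne_zero
        · exact h'
      · intro b hb hbne
        have hb' : b.1 + b.2 = m := Finset.HasAntidiagonal.mem_antidiagonal.mp hb
        have : b.2 < m := by
          rcases Nat.lt_or_ge b.2 m with h' | h'
          · exact h'
          · exfalso
            have : b.2 = m := le_antisymm (by omega) h'
            apply hbne
            have : b.1 = 0 := by omega
            exact Prod.ext this ‹b.2 = m›
        rw [(ih b.2 this).2, mul_zero]
      · intro hne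
        exact absurd (Finset.HasAntidiagonal.mem_antidiagonal.mpr (by simp)) hne
  ext n
  exact (key n).1

set_option maxHeartbeats 4000000 in
set_option maxRecDepth 100000 in
/-- Tutte's equation for rooted planar maps, counted by edges (`t`) and root-face
degree (`u`): any solution `F` in `(ℚ[u])⟦t⟧` of
`(u-1)·F = (u-1) + t·u²·(u-1)·F² + t·u·(u·F - F₁)`, where `F₁` is obtained from `F`
by evaluating each polynomial coefficient at `u = 1`, satisfies
`F₁ = 1 - 16t + 18t·F₁ - 27t²·F₁²`. -/
theorem planar_maps_edge_gf
    (F : PowerSeries (Polynomial ℚ))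
    (F₁ : PowerSeries ℚ)
    (hF₁ : F₁ = PowerSeries.map (Polynomial.evalRingHom (1 : ℚ)) F)
    (hF : (PowerSeries.C (R := Polynomial ℚ) Polynomial.X - 1) * F
        = (PowerSeries.C (R := Polynomial ℚ) Polynomial.X - 1)
          + PowerSeries.X * (PowerSeries.C (R := Polynomial ℚ) Polynomial.X) ^ 2
              * (PowerSeries.C (R := Polynomial ℚ) Polynomial.X - 1) * F ^ 2
          + PowerSeries.X * PowerSeries.C (R := Polynomial ℚ) Polynomial.X
              * (PowerSeries.C (R := Polynomial ℚ) Polynomial.X * F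
                  - PowerSeries.map (Polynomial.C : ℚ →+* Polynomial ℚ) F₁)) :
    F₁ = 1 - 16 * PowerSeries.X + 18 * PowerSeries.X * F₁
          - 27 * PowerSeries.X ^ 2 * F₁ ^ 2 := by
  set U : PowerSeries (Polynomial ℚ) := PowerSeries.C (R := Polynomial ℚ) Polynomial.X with hU
  set g : PowerSeries (Polynomial ℚ) :=
    PowerSeries.map (Polynomial.C : ℚ →+* Polynomial ℚ) F₁ with hg
  set X : PowerSeries (Polynomial ℚ) := PowerSeries.X with hX
  -- the square-root element
  set S : PowerSeries (Polynomial ℚ) :=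
    2*X*U^2*(U-1)*F + (X*U^2 - (U-1)) with hSdef
  have hS2 : S*S = (X*U^2 - (U-1))*(X*U^2 - (U-1)) - 4*X*U^2*(U-1)*((U-1) - X*U*g) := by
    rw [hSdef]
    linear_combination (-(4*X*U^2*(U-1))) * hF
  have hDelta : Dq ((X*U^2 - (U-1))*(X*U^2 - (U-1)) - 4*X*U^2*(U-1)*((U-1) - X*U*g))
      = -2 + 2*U - 4*X*U + 18*X*U^2 - 12*X^2*U^2*g - 16*X*U^3 + 4*X^2*U^3 + 16*X^2*U^3*g := by
    have hDU : Dq U = 1 := by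
      rw [hU, Dq_C]; simp
    simp only [pow_two, Dq_sub, Dq_mul, Dq_add, Dq_ofNat, Dq_one, hDU, Dq_map, hX, Dq_X, hg]
    ring
  have hDS : Dq S * S + S * Dq S
      = -2 + 2*U - 4*X*U + 18*X*U^2 - 12*X^2*U^2*g - 16*X*U^3 + 4*X^2*U^3 + 16*X^2*U^3*g := by
    rw [← Dq_mul, hS2, hDelta]
  -- the certificate
  have hcert : S * (((8 + (-154)*X + (-16)*X*g + 470*X^2 + 538*X^2*g + 8*X^2*g^2 + 60*X^3 + (-1784)*X^3*g + (-616)*X^3*g^2 + 534*X^4 + (-558)*X^4*g + 2794*X^4*g^2 + 232*X^4*g^3 + (-144)*X^5 + (-1488)*X^5*g + 2406*X^5*g^2 + (-2136)*X^5*g^3 + 272*X^6*g + 1082*X^6*g^2 + (-4308)*X^6*g^3 + 656*X^6*g^4 + (-128)*X^7*g^2 + 88*X^7*g^3 + 3264*X^7*g^4 + (-216)*X^8*g^4 + (-864)*X^8*g^5) + (8*X + (-194)*X^2 + 872*X^3 + 502*X^3*g + (-24)*X^3*g^2 + 1042*X^4 + (-4190)*X^4*g + (-124)*X^4*g^2 +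 16*X^4*g^3 + (-184)*X^5 + (-2346)*X^5*g + 9226*X^5*g^2 + (-488)*X^5*g^3 + (-32)*X^6 + 224*X^6*g + 1288*X^6*g^2 + (-10580)*X^6*g^3 + 304*X^6*g^4 + 32*X^7*g + (-88)*X^7*g^2 + 112*X^7*g^3 + 5824*X^7*g^4 + 48*X^8*g^3 + (-96)*X^8*g^4 + (-1152)*X^8*g^5)*U + ((-64)*X + 1184*X^2 + 192*X^2*g + (-3204)*X^3 + (-5248)*X^3*g + (-192)*X^3*g^2 + 232*X^4 + 13988*X^4*g + 8672*X^4*g^2 + 64*X^4*g^3 + 412*X^5 + (-1524)*X^5*g + (-25536)*X^5*g^2 + (-6336)*X^5*g^3 + (-72)*X^6 + (-668)*X^6*g + 3980*X^6*g^2 + 24992*X^6*g^3 + 1728*X^6*g^4 + 64*X^7*g + (-4352)*X^7*g^3 + (-13312)*X^7*g^4 + 8*X^8*g^2 + 256*X^8*g^3 + 1664*X^8*g^4 + 3072*X^8*g^5)*U^2) * S + 2 * (((4 + (-77)*X + (-8)*X*g + 235*X^2 + 269*X^2*g + 4*X^2*g^2 + 46*X^3 + (-908)*X^3*g + (-308)*X^3*g^2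 + 7*X^4 + (-35)*X^4*g + 1445*X^4*g^2 + 116*X^4*g^3 + (-8)*X^5 + (-40)*X^5*g + (-53)*X^5*g^2 + (-1116)*X^5*g^3 + 8*X^6*g + 21*X^6*g^2 + (-6)*X^6*g^3 + 344*X^6*g^4 + 12*X^7*g^3 + 48*X^7*g^4) + ((-4) + 73*X + 8*X*g + (-178)*X^2 + (-253)*X^2*g + (-4)*X^2*g^2 + (-48)*X^3 + 589*X^3*g + 288*X^3*g^2 + (-98)*X^4 + 244*X^4*g + (-795)*X^4*g^2 + (-108)*X^4*g^3 + 30*X^5 + 345*X^5*g + (-736)*X^5*g^2 + 544*X^5*g^3 + (-72)*X^6*g + (-311)*X^6*g^2 + 1244*X^6*g^3 + (-160)*X^6*g^4 + 42*X^7*g^2 + (-8)*X^7*g^3 + (-992)*X^7*g^4 + 72*X^8*g^4 + 288*X^8*g^5)*U + ((-8)*X + 158*X^2 + 16*X^2*g + (-491)*X^3 + (-578)*X^3*g + (-8)*X^3*g^2 + (-307)*X^4 + 2173*X^4*g + 716*X^4*g^2 + 73*X^5 + 664*X^5*g + (-4278)*X^5*g^2 + (-328)*X^5*g^3 + 8*X^6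 + (-98)*X^6*g + (-269)*X^6*g^2 + 4500*X^6*g^3 + 32*X^6*g^4 + (-8)*X^7*g + 35*X^7*g^2 + (-168)*X^7*g^3 + (-2384)*X^7*g^4 + (-10)*X^8*g^3 + 80*X^8*g^4 + 480*X^8*g^5)*U^2 + (16*X + (-296)*X^2 + (-48)*X^2*g + 801*X^3 + 1312*X^3*g + 48*X^3*g^2 + (-58)*X^4 + (-3497)*X^4*g + (-2168)*X^4*g^2 + (-16)*X^4*g^3 + (-103)*X^5 + 381*X^5*g + 6384*X^5*g^2 + 1584*X^5*g^3 + 18*X^6 + 167*X^6*g + (-995)*X^6*g^2 + (-6248)*X^6*g^3 + (-432)*X^6*g^4 + (-16)*X^7*g + 1088*X^7*g^3 + 3328*X^7*g^4 + (-2)*X^8*g^2 + (-64)*X^8*g^3 + (-416)*X^8*g^4 + (-768)*X^8*g^5)*U^3) * Dq S))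
      = PowerSeries.map (Polynomial.C : ℚ →+* Polynomial ℚ)
          (8*PowerSeries.X^3
            * ((-4) + PowerSeries.X + 12*PowerSeries.X*F₁ - 2*PowerSeries.X^2*F₁
               - 12*PowerSeries.X^2*F₁^2 + PowerSeries.X^3*F₁^2 + 4*PowerSeries.X^3*F₁^3)
            * (1 - 16*PowerSeries.X - F₁ + 18*PowerSeries.X*F₁
               - 27*PowerSeries.X^2*F₁^2)) := by
    have hmap : PowerSeries.map (Polynomial.C : ℚ →+* Polynomial ℚ)
          (8*PowerSeries.X^3
            * ((-4) + PowerSeries.X + 12*PowerSeries.X*F₁ - 2*PowerSeries.X^2*F₁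
               - 12*PowerSeries.X^2*F₁^2 + PowerSeries.X^3*F₁^2 + 4*PowerSeries.X^3*F₁^3)
            * (1 - 16*PowerSeries.X - F₁ + 18*PowerSeries.X*F₁
               - 27*PowerSeries.X^2*F₁^2))
        = 8*X^3 * ((-4) + X + 12*X*g - 2*X^2*g - 12*X^2*g^2 + X^3*g^2 + 4*X^3*g^3)
            * (1 - 16*X - g + 18*X*g - 27*X^2*g^2) := by
      simp only [map_mul, map_add, map_sub, map_pow, map_neg, map_ofNat, map_one,
        PowerSeries.map_X, hX, hg]
    rw [hmap]
    linear_combination (((8 + (-154)*X + (-16)*X*g + 470*X^2 + 538*X^2*g + 8*X^2*g^2 + 60*X^3 + (-1784)*X^3*g + (-616)*X^3*g^2 + 534*X^4 + (-558)*X^4*g + 2794*X^4*g^2 + 232*X^4*g^3 + (-144)*X^5 + (-1488)*X^5*g + 2406*X^5*g^2 + (-2136)*X^5*g^3 + 272*X^6*g + 1082*X^6*g^2 + (-4308)*X^6*g^3 + 656*X^6*g^4 + (-128)*X^7*g^2 + 88*X^7*g^3 + 3264*X^7*g^4 + (-216)*X^8*g^4 + (-864)*X^8*g^5) + (8*X +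 (-194)*X^2 + 872*X^3 + 502*X^3*g + (-24)*X^3*g^2 + 1042*X^4 + (-4190)*X^4*g + (-124)*X^4*g^2 + 16*X^4*g^3 + (-184)*X^5 + (-2346)*X^5*g + 9226*X^5*g^2 + (-488)*X^5*g^3 + (-32)*X^6 + 224*X^6*g + 1288*X^6*g^2 + (-10580)*X^6*g^3 + 304*X^6*g^4 + 32*X^7*g + (-88)*X^7*g^2 + 112*X^7*g^3 + 5824*X^7*g^4 + 48*X^8*g^3 + (-96)*X^8*g^4 + (-1152)*X^8*g^5)*U + ((-64)*X + 1184*X^2 + 192*X^2*g + (-3204)*X^3 + (-5248)*X^3*g + (-192)*X^3*g^2 + 232*X^4 + 13988*X^4*g + 8672*X^4*g^2 + 64*X^4*g^3 + 412*X^5 + (-1524)*X^5*g + (-25536)*X^5*g^2 + (-6336)*X^5*g^3 + (-72)*X^6 + (-668)*X^6*g + 3980*X^6*g^2 + 24992*X^6*g^3 + 1728*X^6*g^4 + 64*X^7*g + (-4352)*X^7*g^3 + (-13312)*X^7*g^4 + 8*X^8*g^2 + 256*X^8*g^3 + 1664*X^8*g^4 + 3072*X^8*g^5)*U^2)) * hS2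 + (((4 + (-77)*X + (-8)*X*g + 235*X^2 + 269*X^2*g + 4*X^2*g^2 + 46*X^3 + (-908)*X^3*g + (-308)*X^3*g^2 + 7*X^4 + (-35)*X^4*g + 1445*X^4*g^2 + 116*X^4*g^3 + (-8)*X^5 + (-40)*X^5*g + (-53)*X^5*g^2 + (-1116)*X^5*g^3 + 8*X^6*g + 21*X^6*g^2 + (-6)*X^6*g^3 + 344*X^6*g^4 + 12*X^7*g^3 + 48*X^7*g^4) + ((-4) + 73*X + 8*X*g + (-178)*X^2 + (-253)*X^2*g + (-4)*X^2*g^2 + (-48)*X^3 + 589*X^3*g + 288*X^3*g^2 + (-98)*X^4 + 244*X^4*g + (-795)*X^4*g^2 + (-108)*X^4*g^3 + 30*X^5 + 345*X^5*g + (-736)*X^5*g^2 + 544*X^5*g^3 + (-72)*X^6*g + (-311)*X^6*g^2 + 1244*X^6*g^3 + (-160)*X^6*g^4 + 42*X^7*g^2 + (-8)*X^7*g^3 + (-992)*X^7*g^4 + 72*X^8*g^4 + 288*X^8*g^5)*U + ((-8)*X + 158*X^2 + 16*X^2*g + (-491)*X^3 + (-578)*X^3*g + (-8)*X^3*g^2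 + (-307)*X^4 + 2173*X^4*g + 716*X^4*g^2 + 73*X^5 + 664*X^5*g + (-4278)*X^5*g^2 + (-328)*X^5*g^3 + 8*X^6 + (-98)*X^6*g + (-269)*X^6*g^2 + 4500*X^6*g^3 + 32*X^6*g^4 + (-8)*X^7*g + 35*X^7*g^2 + (-168)*X^7*g^3 + (-2384)*X^7*g^4 + (-10)*X^8*g^3 + 80*X^8*g^4 + 480*X^8*g^5)*U^2 + (16*X + (-296)*X^2 + (-48)*X^2*g + 801*X^3 + 1312*X^3*g + 48*X^3*g^2 + (-58)*X^4 + (-3497)*X^4*g + (-2168)*X^4*g^2 + (-16)*X^4*g^3 + (-103)*X^5 + 381*X^5*g + 6384*X^5*g^2 + 1584*X^5*g^3 + 18*X^6 + 167*X^6*g + (-995)*X^6*g^2 + (-6248)*X^6*g^3 + (-432)*X^6*g^4 + (-16)*X^7*g + 1088*X^7*g^3 + 3328*X^7*g^4 + (-2)*X^8*g^2 + (-64)*X^8*g^3 + (-416)*X^8*g^4 + (-768)*X^8*g^5)*U^3)) * hDS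
  have hS0 : PowerSeries.coeff 0 S = 1 - Polynomial.X := by
    rw [hSdef]
    simp only [PowerSeries.coeff_zero_eq_constantCoeff, map_add, map_mul, map_sub, map_pow,
      map_one, map_ofNat, hX, PowerSeries.constantCoeff_X, hU, PowerSeries.constantCoeff_C]
    ring
  have h0 : (8*PowerSeries.X^3
            * ((-4) + PowerSeries.X + 12*PowerSeries.X*F₁ - 2*PowerSeries.X^2*F₁
               - 12*PowerSeries.X^2*F₁^2 + PowerSeries.X^3*F₁^2 + 4*PowerSeries.X^3*F₁^3)
            * (1 - 16*PowerSeries.X - F₁ + 18*PowerSeries.X*F₁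
               - 27*PowerSeries.X^2*F₁^2) : PowerSeries ℚ) = 0 :=
    cancel_lemma S _ _ hS0 hcert
  have h8 : (8 : PowerSeries ℚ) ≠ 0 := by
    intro h
    have := congrArg (PowerSeries.constantCoeff (R := ℚ)) h
    rw [map_ofNat, map_zero] at this
    exact absurd this (by norm_num)
  have hX3 : (PowerSeries.X : PowerSeries ℚ)^3 ≠ 0 :=
    pow_ne_zero _ PowerSeries.X_ne_zero
  have hG : ((-4) + PowerSeries.X + 12*PowerSeries.X*F₁ - 2*PowerSeries.X^2*F₁
               - 12*PowerSeries.X^2*F₁^2 + PowerSeries.X^3*F₁^2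
               + 4*PowerSeries.X^3*F₁^3 : PowerSeries ℚ) ≠ 0 := by
    intro h
    have := congrArg (PowerSeries.constantCoeff (R := ℚ)) h
    simp only [map_add, map_sub, map_mul, map_pow, map_neg, map_ofNat,
      PowerSeries.constantCoeff_X] at this
    norm_num at this
  have hE : (1 - 16*PowerSeries.X - F₁ + 18*PowerSeries.X*F₁
               - 27*PowerSeries.X^2*F₁^2 : PowerSeries ℚ) = 0 := by
    rcases mul_eq_zero.mp h0 with h | h
    · rcases mul_eq_zero.mp h with h' | h'
      · rcases mul_eq_zero.mp h' with h'' | h''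
        · exact absurd h'' h8
        · exact absurd h'' hX3
      · exact absurd h' hG
    · exact h
  linear_combination (-1 : PowerSeries ℚ) * hE
end

section
/- Let F ∈ (ℚ[u])⟦t⟧ and let F₁ ∈ ℚ⟦t⟧ be obtained from F by evaluating each polynomial coefficient at u = 0. Suppose that, in (ℚ[u])⟦t⟧, u·F = (F − F₁) − u·t²·F₁·F + 2·t·u·F·(1 + u·t²·F) + u·(1 + u·t²·F)³. Then F₁ = 1 − 8·t + 2·t·(5 − 6·t)·F₁ − 2·t²·(1 + 3·t)·F₁² − t⁴·F₁³. -/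
open Polynomial PowerSeries Finset

noncomputable section

namespace BrownQuad

def ev (s : PowerSeries ℚ) : Polynomial ℚ →+* PowerSeries ℚ := (Polynomial.aeval s).toRingHom

lemma coeff_eval₂ (s : PowerSeries ℚ) (q : Polynomial (Polynomial ℚ)) (N : ℕ) :
    PowerSeries.coeff N (q.eval₂ (ev s) PowerSeries.X)
      = ∑ i ∈ Finset.range (N + 1), PowerSeries.coeff (N - i) (ev s (q.coeff i)) := by
  have hdeg : q.natDegree < max (q.natDegree + 1) (N + 1) :=
    lt_of_lt_of_le (Nat.lt_succ_self _) (le_max_left _ _)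
  rw [Polynomial.eval₂_eq_sum_range' (ev s) hdeg PowerSeries.X, map_sum]
  rw [← Finset.sum_subset (Finset.range_subset_range.mpr (le_max_right (q.natDegree + 1) (N + 1)))]
  · apply Finset.sum_congr rfl
    intro i hi
    rw [Finset.mem_range, Nat.lt_succ_iff] at hi
    rw [PowerSeries.coeff_mul_X_pow' _ _ _, if_pos hi]
  · intro i _ hi
    rw [Finset.mem_range, Nat.lt_succ_iff, not_le] at hi
    rw [PowerSeries.coeff_mul_X_pow' _ _ _, if_neg (by omega)]

def phiAux (s : PowerSeries ℚ) (Φ : PowerSeries (Polynomial ℚ)) : PowerSeries ℚ :=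
  PowerSeries.mk fun N =>
    ∑ i ∈ Finset.range (N + 1), PowerSeries.coeff (N - i) (ev s (PowerSeries.coeff i Φ))

lemma phiAux_coeff (s : PowerSeries ℚ) (Φ : PowerSeries (Polynomial ℚ)) (N : ℕ) :
    PowerSeries.coeff N (phiAux s Φ)
      = ∑ i ∈ Finset.range (N + 1), PowerSeries.coeff (N - i) (ev s (PowerSeries.coeff i Φ)) :=
  PowerSeries.coeff_mk _ _

lemma coeff_eval₂_trunc (s : PowerSeries ℚ) (Φ : PowerSeries (Polynomial ℚ)) {N M : ℕ}
    (h : N < M) :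
    PowerSeries.coeff N ((trunc M Φ).eval₂ (ev s) PowerSeries.X)
      = PowerSeries.coeff N (phiAux s Φ) := by
  rw [coeff_eval₂, phiAux_coeff]
  apply Finset.sum_congr rfl
  intro i hi
  rw [Finset.mem_range, Nat.lt_succ_iff] at hi
  rw [coeff_trunc, if_pos (lt_of_le_of_lt hi h)]

lemma coeff_eval₂_trunc_coe (s : PowerSeries ℚ) (P : Polynomial (Polynomial ℚ)) {N M : ℕ}
    (h : N < M) :
    PowerSeries.coeff N ((trunc M (P : PowerSeries (Polynomial ℚ))).eval₂ (ev s) PowerSeries.X)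
      = PowerSeries.coeff N (P.eval₂ (ev s) PowerSeries.X) := by
  rw [coeff_eval₂, coeff_eval₂]
  apply Finset.sum_congr rfl
  intro i hi
  rw [Finset.mem_range, Nat.lt_succ_iff] at hi
  rw [coeff_trunc, if_pos (lt_of_le_of_lt hi h), Polynomial.coeff_coe]

def phi (s : PowerSeries ℚ) : PowerSeries (Polynomial ℚ) →+* PowerSeries ℚ where
  toFun := phiAux s
  map_one' := by
    ext N
    rw [← coeff_eval₂_trunc s 1 (Nat.lt_succ_self N), trunc_one, Polynomial.eval₂_one]
  map_mul' Φ Ψ := by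
    ext N
    rw [← coeff_eval₂_trunc s (Φ * Ψ) (Nat.lt_succ_self N), ← trunc_trunc_mul_trunc,
      ← Polynomial.coe_mul, coeff_eval₂_trunc_coe s _ (Nat.lt_succ_self N),
      Polynomial.eval₂_mul, PowerSeries.coeff_mul, PowerSeries.coeff_mul]
    apply Finset.sum_congr rfl
    intro p hp
    rw [Finset.HasAntidiagonal.mem_antidiagonal] at hp
    rw [coeff_eval₂_trunc s Φ (by omega : p.1 < N + 1),
      coeff_eval₂_trunc s Ψ (by omega : p.2 < N + 1)]
  map_zero' := by
    ext N
    simp [phiAux_coeff]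
  map_add' Φ Ψ := by
    ext N
    simp [phiAux_coeff, Finset.sum_add_distrib]

lemma phi_apply (s : PowerSeries ℚ) (Φ) : phi s Φ = phiAux s Φ := rfl

@[simp] lemma phi_C (s : PowerSeries ℚ) (p : Polynomial ℚ) :
    phi s (PowerSeries.C (R := Polynomial ℚ) p) = Polynomial.aeval s p := by
  ext N
  rw [phi_apply, ← coeff_eval₂_trunc s _ (Nat.lt_succ_self N), trunc_C, Polynomial.eval₂_C]
  rfl

@[simp] lemma phi_U (s : PowerSeries ℚ) :
    phi s (PowerSeries.C (R := Polynomial ℚ) Polynomial.X) = s := by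
  rw [phi_C, Polynomial.aeval_X]

@[simp] lemma phi_X (s : PowerSeries ℚ) :
    phi s PowerSeries.X = PowerSeries.X := by
  ext N
  rw [phi_apply, phiAux_coeff]
  rcases N with _ | N
  · simp [PowerSeries.coeff_X]
  · rw [Finset.sum_eq_single 1]
    · simp [PowerSeries.coeff_X, PowerSeries.coeff_one, Nat.succ_eq_add_one]
    · intro i _ hne
      simp [PowerSeries.coeff_X, if_neg hne]
    · intro h
      exact absurd (Finset.mem_range.mpr (by omega)) h

@[simp] lemma phi_map_C (s : PowerSeries ℚ) (g : PowerSeries ℚ) :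
    phi s (PowerSeries.map (Polynomial.C : ℚ →+* Polynomial ℚ) g) = g := by
  ext N
  rw [phi_apply, phiAux_coeff]
  rw [Finset.sum_eq_single N]
  · simp [ev, PowerSeries.coeff_map, PowerSeries.coeff_C]
  · intro i hi hne
    rw [Finset.mem_range, Nat.lt_succ_iff] at hi
    simp only [PowerSeries.coeff_map]
    have : aeval s (Polynomial.C (PowerSeries.coeff i g)) =
        PowerSeries.C (PowerSeries.coeff i g) := by
      rw [Polynomial.aeval_C]; rfl
    rw [ev, AlgHom.toRingHom_eq_coe, RingHom.coe_coe, this, PowerSeries.coeff_C,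
      if_neg (by omega)]
  · intro h
    exact absurd (Finset.self_mem_range_succ N) h

lemma ev_congr {s s' : PowerSeries ℚ} (p : Polynomial ℚ) {n m : ℕ}
    (h : (PowerSeries.X : PowerSeries ℚ) ^ n ∣ s - s') (hm : m < n) :
    PowerSeries.coeff m (ev s p) = PowerSeries.coeff m (ev s' p) := by
  have hdvd : (s - s') ∣ ev s p - ev s' p := by
    have h1 : ev s p = Polynomial.eval s (p.map (algebraMap ℚ (PowerSeries ℚ))) := by
      rw [ev]; rw [AlgHom.toRingHom_eq_coe, RingHom.coe_coe, Polynomial.aeval_def,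
        Polynomial.eval₂_eq_eval_map]
    have h2 : ev s' p = Polynomial.eval s' (p.map (algebraMap ℚ (PowerSeries ℚ))) := by
      rw [ev]; rw [AlgHom.toRingHom_eq_coe, RingHom.coe_coe, Polynomial.aeval_def,
        Polynomial.eval₂_eq_eval_map]
    rw [h1, h2]
    exact Polynomial.sub_dvd_eval_sub s s' _
  have := PowerSeries.X_pow_dvd_iff.mp (h.trans hdvd) m hm
  rw [map_sub] at this
  linarith [this]

lemma phi_congr {s s' : PowerSeries ℚ} {Φ : PowerSeries (Polynomial ℚ)}
    (hΦ : PowerSeries.constantCoeff Φ = 0) {n N : ℕ}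
    (hs : ∀ k < n, PowerSeries.coeff k s = PowerSeries.coeff k s') (hN : N ≤ n) :
    PowerSeries.coeff N (phi s Φ) = PowerSeries.coeff N (phi s' Φ) := by
  have hx : (PowerSeries.X : PowerSeries ℚ) ^ n ∣ s - s' := by
    rw [PowerSeries.X_pow_dvd_iff]
    intro m hm
    rw [map_sub, hs m hm, sub_self]
  rw [phi_apply, phi_apply, phiAux_coeff, phiAux_coeff]
  apply Finset.sum_congr rfl
  intro i hi
  rw [Finset.mem_range, Nat.lt_succ_iff] at hi
  rcases Nat.eq_zero_or_pos i with h0 | hpos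
  · subst h0
    rw [PowerSeries.coeff_zero_eq_constantCoeff, hΦ]
    simp
  · exact ev_congr _ hx (by omega)

/-- coefficient-wise `d/du` on `(ℚ[u])⟦t⟧` -/
def D (Φ : PowerSeries (Polynomial ℚ)) : PowerSeries (Polynomial ℚ) :=
  PowerSeries.mk fun n => Polynomial.derivative (PowerSeries.coeff n Φ)

lemma coeff_D (Φ) (n : ℕ) :
    PowerSeries.coeff n (D Φ) = Polynomial.derivative (PowerSeries.coeff n Φ) :=
  PowerSeries.coeff_mk _ _

lemma D_add (a b : PowerSeries (Polynomial ℚ)) : D (a + b) = D a + D b := by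
  ext n; simp [coeff_D]

lemma D_sub (a b : PowerSeries (Polynomial ℚ)) : D (a - b) = D a - D b := by
  ext n; simp [coeff_D]

lemma D_one : D (1 : PowerSeries (Polynomial ℚ)) = 0 := by
  ext n
  simp only [coeff_D, PowerSeries.coeff_one, map_zero]
  split <;> simp

lemma D_X : D (PowerSeries.X : PowerSeries (Polynomial ℚ)) = 0 := by
  ext n
  simp only [coeff_D, PowerSeries.coeff_X, map_zero]
  split <;> simp

lemma D_U : D (PowerSeries.C (R := Polynomial ℚ) Polynomial.X) = 1 := by
  ext n
  simp only [coeff_D, PowerSeries.coeff_C, PowerSeries.coeff_one]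
  split <;> simp

lemma D_map_C (g : PowerSeries ℚ) :
    D (PowerSeries.map (Polynomial.C : ℚ →+* Polynomial ℚ) g) = 0 := by
  ext n
  simp [coeff_D, PowerSeries.coeff_map]

lemma D_mul (a b : PowerSeries (Polynomial ℚ)) : D (a * b) = D a * b + a * D b := by
  ext n : 1
  rw [coeff_D, PowerSeries.coeff_mul, map_sum, map_add, PowerSeries.coeff_mul,
    PowerSeries.coeff_mul, ← Finset.sum_add_distrib]
  apply Finset.sum_congr rfl
  intro p _
  rw [Polynomial.derivative_mul, coeff_D, coeff_D]

end BrownQuad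

open BrownQuad

local notation "tA" => (PowerSeries.X : PowerSeries (Polynomial ℚ))
local notation "tQ" => (PowerSeries.X : PowerSeries ℚ)
local notation "UA" => PowerSeries.C (R := Polynomial ℚ) Polynomial.X

set_option maxHeartbeats 4000000 in
/-- Brown's equation for quadrangular dissections of the disk: any solution `F` in
`(ℚ[u])⟦t⟧` of `u·F = (F - F₁) - u·t²·F₁·F + 2·t·u·F·(1 + u·t²·F) + u·(1 + u·t²·F)³`,
where `F₁` is obtained from `F` by evaluating each polynomial coefficient at `u = 0`,
satisfies `F₁ = 1 - 8t + 2t(5 - 6t)·F₁ - 2t²(1 + 3t)·F₁² - t⁴·F₁³`. -/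
theorem quadrangular_dissections_gf
    (F : PowerSeries (Polynomial ℚ))
    (F₁ : PowerSeries ℚ)
    (hF₁ : F₁ = PowerSeries.map (Polynomial.evalRingHom (0 : ℚ)) F)
    (hF : PowerSeries.C (R := Polynomial ℚ) Polynomial.X * F
        = (F - PowerSeries.map (Polynomial.C : ℚ →+* Polynomial ℚ) F₁)
          - PowerSeries.C (R := Polynomial ℚ) Polynomial.X * PowerSeries.X ^ 2
              * PowerSeries.map (Polynomial.C : ℚ →+* Polynomial ℚ) F₁ * F
          + 2 * PowerSeries.X * PowerSeries.C (R := Polynomial ℚ) Polynomial.X * F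
              * (1 + PowerSeries.C (R := Polynomial ℚ) Polynomial.X * PowerSeries.X ^ 2 * F)
          + PowerSeries.C (R := Polynomial ℚ) Polynomial.X
              * (1 + PowerSeries.C (R := Polynomial ℚ) Polynomial.X * PowerSeries.X ^ 2 * F) ^ 3) :
    F₁ = 1 - 8 * PowerSeries.X + 2 * PowerSeries.X * (5 - 6 * PowerSeries.X) * F₁
          - 2 * PowerSeries.X ^ 2 * (1 + 3 * PowerSeries.X) * F₁ ^ 2
          - PowerSeries.X ^ 4 * F₁ ^ 3 := by
  clear hF₁
  have hq1 : ((1 + UA*tA*tA*F) - 1) * (1 - UA - UA*tA*tA*(PowerSeries.map (Polynomial.C : ℚ →+* Polynomial ℚ) F₁))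
      + (tA*UA*(1+UA*tA*tA*F)*((1+UA*tA*tA*F) - 1) + tA*UA*(1+UA*tA*tA*F)*((1+UA*tA*tA*F) - 1))
      + UA*UA*tA*tA*(1+UA*tA*tA*F)*(1+UA*tA*tA*F)*(1+UA*tA*tA*F)
      = UA*tA*tA*(PowerSeries.map (Polynomial.C : ℚ →+* Polynomial ℚ) F₁) := by
    linear_combination (-(UA*tA*tA)) * hF
  have hq2 := congrArg D hq1
  simp only [D_mul, D_add, D_sub, D_one, D_X, D_U, D_map_C] at hq2
  set Hh : PowerSeries (Polynomial ℚ) :=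
    (1 - UA - UA*tA^2*(PowerSeries.map (Polynomial.C : ℚ →+* Polynomial ℚ) F₁))
      + 2*tA*UA*(2*(1+UA*tA^2*F)-1) + 3*UA^2*tA^2*(1+UA*tA^2*F)^2 with hHdef
  set J : PowerSeries (Polynomial ℚ) := Hh + UA - 1 with hJdef
  have hJ0 : PowerSeries.constantCoeff J = 0 := by
    rw [hJdef, hHdef]
    simp only [map_add, map_sub, map_mul, map_pow, map_one, map_ofNat,
      PowerSeries.constantCoeff_X, PowerSeries.constantCoeff_C]
    ring
  let c : ℕ → PowerSeries ℚ := fun k =>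
    Nat.rec (motive := fun _ => PowerSeries ℚ) 1 (fun _ prev => 1 + phi prev J) k
  have hcsucc : ∀ k, c (k + 1) = 1 + phi (c k) J := fun _ => rfl
  set s : PowerSeries ℚ := PowerSeries.mk (fun n => PowerSeries.coeff n (c (n + 1))) with hsdef
  have hscoeff : ∀ n, PowerSeries.coeff n s = PowerSeries.coeff n (c (n + 1)) := by
    intro n; rw [hsdef]; exact PowerSeries.coeff_mk n _
  have h_step : ∀ k, ∀ m < k, PowerSeries.coeff m (c (k + 1)) = PowerSeries.coeff m (c k) := by
    intro k
    induction k with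
    | zero => intro m hm; exact absurd hm (Nat.not_lt_zero m)
    | succ k ih =>
      intro m hm
      rw [hcsucc (k + 1), hcsucc k, map_add, map_add]
      congr 1
      exact phi_congr hJ0 (fun j hj => ih j hj) (by omega)
  have h_mono : ∀ n m, n < m → ∀ m', m ≤ m' →
      PowerSeries.coeff n (c m') = PowerSeries.coeff n (c m) := by
    intro n m hnm m' hm'
    induction m', hm' using Nat.le_induction with
    | base => rfl
    | succ m'' hm'' ih => rw [h_step m'' n (by omega), ih]
  have h_sagree : ∀ m, ∀ n < m, PowerSeries.coeff n s = PowerSeries.coeff n (c m) := by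
    intro m n h
    rw [hscoeff n]
    exact (h_mono n (n + 1) (Nat.lt_succ_self n) m (by omega)).symm
  have h_fix : s = 1 + phi s J := by
    ext n
    rw [map_add, hscoeff n, hcsucc n, map_add]
    congr 1
    exact (phi_congr hJ0 (h_sagree n) (le_refl n)).symm
  have hb0 : phi s Hh = 0 := by
    have h := h_fix
    rw [hJdef, map_sub, map_add, map_one, phi_U] at h
    linear_combination -h
  have hbp : phi s ((1 - UA - UA*tA^2*(PowerSeries.map (Polynomial.C : ℚ →+* Polynomial ℚ) F₁))
      + 2*tA*UA*(2*(1+UA*tA^2*F)-1) + 3*UA^2*tA^2*(1+UA*tA^2*F)^2) = 0 := by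
    rw [← hHdef]; exact hb0
  simp only [map_add, map_sub, map_mul, map_pow, map_one, map_zero, map_ofNat,
    phi_U, phi_X, phi_map_C] at hbp
  have ha0 := congrArg (fun z => phi s z) hq1
  simp only [map_add, map_sub, map_mul, map_pow, map_one, map_zero, map_ofNat,
    phi_U, phi_X, phi_map_C] at ha0
  have hq3 := congrArg (fun z => phi s z) hq2
  simp only [map_add, map_sub, map_mul, map_pow, map_one, map_zero, map_ofNat,
    phi_U, phi_X, phi_map_C] at hq3
  set V : PowerSeries ℚ := phi s F with hVdef
  set Vd : PowerSeries ℚ := phi s (D F) with hVddef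
  have hA : (-s*F₁*tQ^2 + s*V*tQ^2 + s^2*tQ^2 - s^2*V*tQ^2 + 2*s^2*V*tQ^3 - s^2*V*F₁*tQ^4 + 3*s^3*V*tQ^4 + 2*s^3*V^2*tQ^5 + 3*s^4*V^2*tQ^6 + s^5*V^3*tQ^8) = 0 := by linear_combination ha0
  have hB : (1 - s + 2*s*tQ - s*F₁*tQ^2 + 3*s^2*tQ^2 + 4*s^2*V*tQ^3 + 6*s^3*V*tQ^4 + 3*s^4*V^2*tQ^6) = 0 := by linear_combination hbp
  have hC : (-F₁*tQ^2 + 2*s*tQ^2 - s*V*tQ^2 + 2*s*V*tQ^3 - s*V*F₁*tQ^4 + 6*s^2*V*tQ^4 + 2*s^2*V^2*tQ^5 + 6*s^3*V^2*tQ^6 + 2*s^4*V^3*tQ^8) = 0 := by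
    linear_combination hq3 - (tQ^2*V + s*tQ^2*Vd) * hB
  set y : PowerSeries ℚ := 1 + s*tQ^2*V with hy
  have hXne : (tQ : PowerSeries ℚ) ≠ 0 := PowerSeries.X_ne_zero
  have hy0 : PowerSeries.constantCoeff y = 1 := by
    rw [hy]
    simp
  have hyne : y ≠ 0 := by
    intro h; rw [h, map_zero] at hy0; exact zero_ne_one hy0
  have h1 : (-1 + y - s^2*tQ^2*y^3) = 0 := by
    linear_combination hA - s * hC + (1 - s^2*tQ^2 - s^2*tQ^2*y - s^2*tQ^2*y^2 - 2*s^3*V*tQ^4 - s^3*V*tQ^4*y - s^4*V^2*tQ^6) * hy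
  have h2 : tQ^2 * y * (-F₁ + 2*s*y^2 - s^2*y^2 + 2*s^2*tQ*y^3) = 0 := by
    linear_combination hC + (1 - 2*tQ*y) * h1 + (-1 + 2*tQ*y - F₁*tQ^2 + 2*s*tQ^2 + 2*s*tQ^2*y + 2*s*tQ^2*y^2 + 2*s*V*tQ^3 + 4*s^2*V*tQ^4 + 2*s^2*V*tQ^4*y + 2*s^3*V^2*tQ^6) * hy
  have h3 : (-F₁ + 2*s*y^2 - s^2*y^2 + 2*s^2*tQ*y^3) = 0 := by
    have hmulne : (tQ^2 * y : PowerSeries ℚ) ≠ 0 := mul_ne_zero (pow_ne_zero 2 hXne) hyne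
    rcases mul_eq_zero.mp h2 with h | h
    · exact absurd h hmulne
    · exact h
  have h4 : (1 - 2*y + s - 2*s*tQ*y^2) = 0 := by
    linear_combination (-y) * hB + (-1 - s + 2*tQ*s*y) * h1 + s*tQ^2*y * h3 + (-4*s*tQ*y - 3*s^2*tQ^2*y - 3*s^2*tQ^2*y^2 - 3*s^3*V*tQ^4*y) * hy
  have h5 : (1 - 2*tQ*y^2)^6 * (-1 + 8*tQ + F₁ - 10*F₁*tQ + 12*F₁*tQ^2 + 2*F₁^2*tQ^2 + 6*F₁^2*tQ^3 + F₁^3*tQ^4) = 0 := by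
    linear_combination (1 + y + 4*y^2 - 4*y^3 - 8*tQ - 8*tQ*y - 50*tQ*y^2 + 28*tQ*y^3 - 32*tQ*y^4 + 32*tQ*y^5 + 132*tQ^2*y^2 + 55*tQ^2*y^3 + 348*tQ^2*y^4 - 184*tQ^2*y^5 + 16*tQ^2*y^6 - 80*tQ^2*y^7 - 16*tQ^3*y^3 - 814*tQ^3*y^4 + 152*tQ^3*y^5 - 1544*tQ^3*y^6 + 816*tQ^3*y^7 + 192*tQ^3*y^8 + 64*tQ^3*y^9 + 164*tQ^4*y^5 + 2200*tQ^4*y^6 - 1044*tQ^4*y^7 + 3904*tQ^4*y^8 - 2288*tQ^4*y^9 - 256*tQ^4*y^10 - 8*tQ^5*y^6 - 512*tQ^5*y^7 - 2712*tQ^5*y^8 + 1168*tQ^5*y^9 - 4416*tQ^5*y^10 + 2816*tQ^5*y^11 + 32*tQ^6*y^8 + 592*tQ^6*y^9 + 1472*tQ^6*y^10 + 128*tQ^6*y^11 + 1536*tQ^6*y^12 - 1024*tQ^6*y^13 - 32*tQ^7*y^10 - 192*tQ^7*y^11 - 384*tQ^7*y^12 - 256*tQ^7*y^13) * h1 + (-1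 + 10*tQ + 12*tQ*y^2 - 12*tQ^2 - 114*tQ^2*y^2 - 16*tQ^2*y^3 - 52*tQ^2*y^4 + 162*tQ^3*y^2 - 52*tQ^3*y^3 + 584*tQ^3*y^4 + 128*tQ^3*y^5 + 96*tQ^3*y^6 - 12*tQ^4*y^3 - 849*tQ^4*y^4 + 464*tQ^4*y^5 - 1800*tQ^4*y^6 - 320*tQ^4*y^7 - 64*tQ^4*y^8 + 108*tQ^5*y^5 + 2140*tQ^5*y^6 - 1360*tQ^5*y^7 + 3296*tQ^5*y^8 + 256*tQ^5*y^9 - 4*tQ^6*y^6 - 320*tQ^6*y^7 - 2708*tQ^6*y^8 + 1536*tQ^6*y^9 - 3072*tQ^6*y^10 + 16*tQ^7*y^8 + 368*tQ^7*y^9 + 1664*tQ^7*y^10 - 512*tQ^7*y^11 + 1024*tQ^7*y^12 - 16*tQ^8*y^10 - 128*tQ^8*y^11 - 448*tQ^8*y^12 - 2*F₁*tQ^2 - 6*F₁*tQ^3 + 24*F₁*tQ^3*y^2 + 75*F₁*tQ^4*y^2 - 8*F₁*tQ^4*y^3 - 116*F₁*tQ^4*y^4 - 2*F₁*tQ^5*y^3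 - 380*F₁*tQ^5*y^4 + 64*F₁*tQ^5*y^5 + 288*F₁*tQ^5*y^6 + 16*F₁*tQ^6*y^5 + 1000*F₁*tQ^6*y^6 - 192*F₁*tQ^6*y^7 - 384*F₁*tQ^6*y^8 - 48*F₁*tQ^7*y^7 - 1440*F₁*tQ^7*y^8 + 256*F₁*tQ^7*y^9 + 256*F₁*tQ^7*y^10 + 64*F₁*tQ^8*y^9 + 1072*F₁*tQ^8*y^10 - 128*F₁*tQ^8*y^11 - 64*F₁*tQ^8*y^12 - 32*F₁*tQ^9*y^11 - 320*F₁*tQ^9*y^12 - F₁^2*tQ^4 + 12*F₁^2*tQ^5*y^2 - 60*F₁^2*tQ^6*y^4 + 160*F₁^2*tQ^7*y^6 - 240*F₁^2*tQ^8*y^8 + 192*F₁^2*tQ^9*y^10 - 64*F₁^2*tQ^10*y^12) * h3 + (3*y^2 - 2*y^3 - 30*tQ*y^2 + 18*tQ*y^3 - 24*tQ*y^4 + 16*tQ*y^5 + 36*tQ^2*y^2 - 5*tQ^2*y^3 + 223*tQ^2*y^4 - 86*tQ^2*y^5 + 28*tQ^2*y^6 - 40*tQ^2*y^7 - 16*tQ^3*y^3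 - 350*tQ^3*y^4 + 266*tQ^3*y^5 - 1004*tQ^3*y^6 + 352*tQ^3*y^7 + 80*tQ^3*y^8 + 32*tQ^3*y^9 + 164*tQ^4*y^5 + 1084*tQ^4*y^6 - 1076*tQ^4*y^7 + 2556*tQ^4*y^8 - 1080*tQ^4*y^9 - 128*tQ^4*y^10 - 8*tQ^5*y^6 - 520*tQ^5*y^7 - 1320*tQ^5*y^8 + 1240*tQ^5*y^9 - 2912*tQ^5*y^10 + 1408*tQ^5*y^11 + 32*tQ^6*y^8 + 624*tQ^6*y^9 + 592*tQ^6*y^10 - 160*tQ^6*y^11 + 1024*tQ^6*y^12 - 512*tQ^6*y^13 - 32*tQ^7*y^10 - 224*tQ^7*y^11 - 128*tQ^7*y^12 - 128*tQ^7*y^13 + 6*F₁*tQ^2*y^2 - 4*F₁*tQ^2*y^3 + 18*F₁*tQ^3*y^2 - 16*F₁*tQ^3*y^3 - 48*F₁*tQ^3*y^4 + 32*F₁*tQ^3*y^5 - 12*F₁*tQ^4*y^3 - 153*F₁*tQ^4*y^4 + 158*F₁*tQ^4*y^5 + 116*F₁*tQ^4*y^6 - 88*F₁*tQ^4*y^7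 + 108*F₁*tQ^5*y^5 + 436*F₁*tQ^5*y^6 - 488*F₁*tQ^5*y^7 - 80*F₁*tQ^5*y^8 + 96*F₁*tQ^5*y^9 - 4*F₁*tQ^6*y^6 - 328*F₁*tQ^6*y^7 - 484*F₁*tQ^6*y^8 + 568*F₁*tQ^6*y^9 - 16*F₁*tQ^6*y^10 - 32*F₁*tQ^6*y^11 + 16*F₁*tQ^7*y^8 + 400*F₁*tQ^7*y^9 + 160*F₁*tQ^7*y^10 - 192*F₁*tQ^7*y^11 - 16*F₁*tQ^8*y^10 - 160*F₁*tQ^8*y^11 + 3*F₁^2*tQ^4*y^2 - 2*F₁^2*tQ^4*y^3 - 2*F₁^2*tQ^5*y^3 - 24*F₁^2*tQ^5*y^4 + 16*F₁^2*tQ^5*y^5 + 16*F₁^2*tQ^6*y^5 + 72*F₁^2*tQ^6*y^6 - 48*F₁^2*tQ^6*y^7 - 48*F₁^2*tQ^7*y^7 - 96*F₁^2*tQ^7*y^8 + 64*F₁^2*tQ^7*y^9 + 64*F₁^2*tQ^8*y^9 + 48*F₁^2*tQ^8*y^10 - 32*F₁^2*tQ^8*y^11 - 32*F₁^2*tQ^9*y^11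 - s*y^2 + 10*s*tQ*y^2 + 2*s*tQ*y^3 + 10*s*tQ*y^4 - 12*s*tQ^2*y^2 - 19*s*tQ^2*y^3 - 93*s*tQ^2*y^4 - 32*s*tQ^2*y^5 - 36*s*tQ^2*y^6 + 16*s*tQ^3*y^3 + 130*s*tQ^3*y^4 + 88*s*tQ^3*y^5 + 458*s*tQ^3*y^6 + 136*s*tQ^3*y^7 + 56*s*tQ^3*y^8 - 172*s*tQ^4*y^5 - 430*s*tQ^4*y^6 - 180*s*tQ^4*y^7 - 1324*s*tQ^4*y^8 - 224*s*tQ^4*y^9 - 32*s*tQ^4*y^10 + 8*s*tQ^5*y^6 + 648*s*tQ^5*y^7 + 504*s*tQ^5*y^8 + 336*s*tQ^5*y^9 + 2104*s*tQ^5*y^10 + 128*s*tQ^5*y^11 - 40*s*tQ^6*y^8 - 1104*s*tQ^6*y^9 - 24*s*tQ^6*y^10 - 480*s*tQ^6*y^11 - 1664*s*tQ^6*y^12 + 64*s*tQ^7*y^10 + 864*s*tQ^7*y^11 - 288*s*tQ^7*y^12 + 256*s*tQ^7*y^13 + 512*s*tQ^7*y^14 - 32*s*tQ^8*y^12 - 256*s*tQ^8*y^13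 + 128*s*tQ^8*y^14 - 2*s*F₁*tQ^2*y^2 - 6*s*F₁*tQ^3*y^2 + 4*s*F₁*tQ^3*y^3 + 20*s*F₁*tQ^3*y^4 + 12*s*F₁*tQ^4*y^3 + 63*s*F₁*tQ^4*y^4 - 48*s*F₁*tQ^4*y^5 - 76*s*F₁*tQ^4*y^6 - 128*s*F₁*tQ^5*y^5 - 238*s*F₁*tQ^5*y^6 + 200*s*F₁*tQ^5*y^7 + 136*s*F₁*tQ^5*y^8 + 4*s*F₁*tQ^6*y^6 + 520*s*F₁*tQ^6*y^7 + 396*s*F₁*tQ^6*y^8 - 368*s*F₁*tQ^6*y^9 - 112*s*F₁*tQ^6*y^10 - 24*s*F₁*tQ^7*y^8 - 1008*s*F₁*tQ^7*y^9 - 264*s*F₁*tQ^7*y^10 + 288*s*F₁*tQ^7*y^11 + 32*s*F₁*tQ^7*y^12 + 48*s*F₁*tQ^8*y^10 + 928*s*F₁*tQ^8*y^11 + 32*s*F₁*tQ^8*y^12 - 64*s*F₁*tQ^8*y^13 - 32*s*F₁*tQ^9*y^12 - 320*s*F₁*tQ^9*y^13 - s*F₁^2*tQ^4*y^2 + 2*s*F₁^2*tQ^5*y^3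 + 10*s*F₁^2*tQ^5*y^4 - 20*s*F₁^2*tQ^6*y^5 - 40*s*F₁^2*tQ^6*y^6 + 80*s*F₁^2*tQ^7*y^7 + 80*s*F₁^2*tQ^7*y^8 - 160*s*F₁^2*tQ^8*y^9 - 80*s*F₁^2*tQ^8*y^10 + 160*s*F₁^2*tQ^9*y^11 + 32*s*F₁^2*tQ^9*y^12 - 64*s*F₁^2*tQ^10*y^13) * h4
  have h6 : (-1 + 8*tQ + F₁ - 10*F₁*tQ + 12*F₁*tQ^2 + 2*F₁^2*tQ^2 + 6*F₁^2*tQ^3 + F₁^3*tQ^4) = 0 := by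
    have hd0 : PowerSeries.constantCoeff (1 - 2*tQ*y^2) = 1 := by
      simp
    have hdne : (1 - 2*tQ*y^2 : PowerSeries ℚ) ≠ 0 := by
      intro h; rw [h, map_zero] at hd0; exact zero_ne_one hd0
    rcases mul_eq_zero.mp h5 with h | h
    · exact absurd h (pow_ne_zero 6 hdne)
    · exact h
  linear_combination h6
end
end

section
/- Let K = ℚ(s) be the field of rational functions in one variable s over ℚ. There exists a unique formal power series T ∈ K⟦t⟧ with zero constant term such that T·(1 − 2·T)·(s − 3·T + 3·T²) = s²·t. Moreover, for every n ≥ 0, the coefficient of tⁿ in T is (the image in K of) a polynomial in s with nonnegative integer coefficients. -/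
open Finset

/-- The triple `(Uₙ, Dₙ, Φₙ)` of coefficient polynomials (in `ℕ[s]`) of the series
`U`, `D = U - sU²`, `Φ = 1/(1-3D)` satisfying the positive system
`Φ = 1 + 3DΦ`, `D = t + sU² + 3tDΦ`, `U = D + sU²`. -/
noncomputable def hpg : ℕ → Polynomial ℕ × Polynomial ℕ × Polynomial ℕ
  | 0 => (0, 0, 1)
  | n + 1 =>
      let sq : Polynomial ℕ :=
        ∑ i ∈ (Finset.range n).attach, (hpg (i + 1)).1 * (hpg (n - (i : ℕ))).1
      let td : Polynomial ℕ :=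
        ∑ i ∈ (Finset.range (n + 1)).attach, (hpg i).2.1 * (hpg (n - (i : ℕ))).2.2
      let d : Polynomial ℕ := (if n = 0 then 1 else 0) + Polynomial.X * sq + 3 * td
      (d + Polynomial.X * sq, d,
        3 * d + 3 * ∑ i ∈ (Finset.range n).attach, (hpg (i + 1)).2.1 * (hpg (n - (i : ℕ))).2.2)
  decreasing_by
  · have := Finset.mem_range.mp i.2; omega
  · have := Finset.mem_range.mp i.2; omega
  · have := Finset.mem_range.mp i.2; omega
  · have := Finset.mem_range.mp i.2; omega
  · have := Finset.mem_range.mp i.2; omega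
  · have := Finset.mem_range.mp i.2; omega

noncomputable def upoly (n : ℕ) : Polynomial ℕ := (hpg n).1
noncomputable def dpoly (n : ℕ) : Polynomial ℕ := (hpg n).2.1
noncomputable def fpoly (n : ℕ) : Polynomial ℕ := (hpg n).2.2

lemma upoly_zero : upoly 0 = 0 := by simp [upoly, hpg]
lemma dpoly_zero : dpoly 0 = 0 := by simp [dpoly, hpg]
lemma fpoly_zero : fpoly 0 = 1 := by simp [fpoly, hpg]

lemma dpoly_succ (n : ℕ) :
    dpoly (n + 1) = (if n = 0 then 1 else 0)
      + Polynomial.X * (∑ i ∈ Finset.range n, upoly (i + 1) * upoly (n - i))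
      + 3 * ∑ i ∈ Finset.range (n + 1), dpoly i * fpoly (n - i) := by
  rw [dpoly, hpg]
  simp only [upoly, fpoly, dpoly]
  rw [Finset.sum_attach (Finset.range n) (fun i => (hpg (i + 1)).1 * (hpg (n - i)).1),
    Finset.sum_attach (Finset.range (n+1)) (fun i => (hpg i).2.1 * (hpg (n - i)).2.2)]

lemma upoly_succ (n : ℕ) :
    upoly (n + 1) = dpoly (n + 1)
      + Polynomial.X * (∑ i ∈ Finset.range n, upoly (i + 1) * upoly (n - i)) := by
  rw [upoly, dpoly, hpg]
  simp only [upoly]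
  rw [Finset.sum_attach (Finset.range n) (fun i => (hpg (i + 1)).1 * (hpg (n - i)).1)]

lemma fpoly_succ (n : ℕ) :
    fpoly (n + 1) = 3 * dpoly (n + 1)
      + 3 * ∑ i ∈ Finset.range n, dpoly (i + 1) * fpoly (n - i) := by
  rw [fpoly, dpoly, hpg]
  simp only [dpoly, fpoly]
  rw [Finset.sum_attach (Finset.range n) (fun i => (hpg (i + 1)).2.1 * (hpg (n - i)).2.2)]

open PowerSeries

/-- Series with coefficients `upoly` over `ℕ[s]`. -/
noncomputable def US : PowerSeries (Polynomial ℕ) := PowerSeries.mk upoly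
noncomputable def DS : PowerSeries (Polynomial ℕ) := PowerSeries.mk dpoly
noncomputable def FS : PowerSeries (Polynomial ℕ) := PowerSeries.mk fpoly

lemma coeff_mk_mul (A B : ℕ → Polynomial ℕ) (n : ℕ) :
    PowerSeries.coeff n (PowerSeries.mk A * PowerSeries.mk B)
      = ∑ i ∈ Finset.range (n + 1), A i * B (n - i) := by
  rw [PowerSeries.coeff_mul, Finset.Nat.sum_antidiagonal_eq_sum_range_succ_mk]
  simp only [coeff_mk]

lemma coeff_sq (n : ℕ) :
    PowerSeries.coeff (n + 1) (US * US)
      = ∑ i ∈ Finset.range n, upoly (i + 1) * upoly (n - i) := by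
  rw [US, coeff_mk_mul]
  rw [Finset.sum_range_succ' (fun k => upoly k * upoly (n + 1 - k))]
  simp only [upoly_zero, zero_mul, add_zero, Nat.sub_zero]
  rw [Finset.sum_range_succ]
  simp only [Nat.succ_sub_succ]
  simp [upoly_zero]

lemma coeff_df (n : ℕ) :
    PowerSeries.coeff n (DS * FS)
      = ∑ i ∈ Finset.range (n + 1), dpoly i * fpoly (n - i) := by
  rw [DS, FS, coeff_mk_mul]

lemma coeff_df' (n : ℕ) :
    PowerSeries.coeff (n + 1) (DS * FS)
      = dpoly (n + 1) + ∑ i ∈ Finset.range n, dpoly (i + 1) * fpoly (n - i) := by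
  rw [coeff_df]
  rw [Finset.sum_range_succ' (fun k => dpoly k * fpoly (n + 1 - k))]
  simp only [dpoly_zero, zero_mul, add_zero, Nat.sub_zero]
  rw [Finset.sum_range_succ]
  simp only [Nat.succ_sub_succ, Nat.sub_self, fpoly_zero, mul_one]
  ring

lemma idU : US = DS + PowerSeries.C Polynomial.X * (US * US) := by
  apply PowerSeries.ext; intro n
  rcases n with _ | n
  · simp only [US, DS, map_add, coeff_mk, PowerSeries.coeff_C_mul, upoly_zero, dpoly_zero]
    rw [coeff_mk_mul]
    simp [upoly_zero]
  · rw [map_add, PowerSeries.coeff_C_mul, coeff_sq]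
    simp only [US, DS, coeff_mk]
    exact upoly_succ n

lemma idF : FS = 1 + PowerSeries.C 3 * (DS * FS) := by
  apply PowerSeries.ext; intro n
  rcases n with _ | n
  · rw [map_add, PowerSeries.coeff_C_mul, coeff_df]
    simp [FS, fpoly_zero, dpoly_zero]
  · rw [map_add, PowerSeries.coeff_C_mul, coeff_df']
    simp only [FS, coeff_mk, PowerSeries.coeff_one, Nat.succ_ne_zero, if_false, zero_add]
    rw [fpoly_succ]
    ring

lemma idD : DS = PowerSeries.X + PowerSeries.C Polynomial.X * (US * US)
    + PowerSeries.C 3 * (PowerSeries.X * (DS * FS)) := by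
  apply PowerSeries.ext; intro n
  rcases n with _ | n
  · rw [map_add, map_add, PowerSeries.coeff_C_mul, PowerSeries.coeff_C_mul,
      PowerSeries.coeff_zero_X_mul]
    rw [US, coeff_mk_mul]
    simp [DS, dpoly_zero, upoly_zero]
  · rw [map_add, map_add, PowerSeries.coeff_C_mul, PowerSeries.coeff_C_mul,
      PowerSeries.coeff_succ_X_mul, coeff_sq, coeff_df, PowerSeries.coeff_X]
    simp only [DS, coeff_mk]
    rw [dpoly_succ]
    have h : ((n + 1 = 1) ↔ (n = 0)) := by omega
    simp only [h]

noncomputable def iotaK : Polynomial ℕ →+* RatFunc ℚ :=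
  (algebraMap (Polynomial ℚ) (RatFunc ℚ)).comp (Polynomial.mapRingHom (Nat.castRingHom ℚ))

lemma iotaK_X : iotaK Polynomial.X = RatFunc.X := by
  simp [iotaK, RatFunc.algebraMap_X]

noncomputable def UK : PowerSeries (RatFunc ℚ) := PowerSeries.map iotaK US
noncomputable def DK : PowerSeries (RatFunc ℚ) := PowerSeries.map iotaK DS
noncomputable def FK : PowerSeries (RatFunc ℚ) := PowerSeries.map iotaK FS

lemma hUK : UK = DK + PowerSeries.C RatFunc.X * (UK * UK) := by
  have h := congrArg (PowerSeries.map iotaK) idU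
  simpa only [UK, DK, map_add, map_mul, PowerSeries.map_C, iotaK_X] using h

lemma hFK : FK = 1 + 3 * (DK * FK) := by
  have h := congrArg (PowerSeries.map iotaK) idF
  simpa only [FK, DK, map_add, map_mul, map_one, PowerSeries.map_C, map_ofNat] using h

lemma hDK : DK = PowerSeries.X + PowerSeries.C RatFunc.X * (UK * UK)
    + 3 * (PowerSeries.X * (DK * FK)) := by
  have h := congrArg (PowerSeries.map iotaK) idD
  simpa only [DK, UK, FK, map_add, map_mul, PowerSeries.map_C, PowerSeries.map_X,
    iotaK_X, map_ofNat] using h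

lemma coeff_UK (n : ℕ) : PowerSeries.coeff n UK = iotaK (upoly n) := by
  simp [UK, US, PowerSeries.coeff_map]

lemma hmainK :
    (PowerSeries.C RatFunc.X * UK) * (1 - 2 * (PowerSeries.C RatFunc.X * UK)) *
      (PowerSeries.C RatFunc.X - 3 * (PowerSeries.C RatFunc.X * UK)
        + 3 * (PowerSeries.C RatFunc.X * UK) ^ 2)
      = PowerSeries.C (RatFunc.X ^ 2) * PowerSeries.X := by
  rw [map_pow]
  linear_combination (PowerSeries.C RatFunc.X ^ 2 * (3 * PowerSeries.X * DK)) * hFK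
    + (PowerSeries.C RatFunc.X ^ 2 * (1 - 3 * DK)) * hDK
    + (PowerSeries.C RatFunc.X ^ 2
        * (1 - 3 * DK - 3 * UK + 6 * PowerSeries.C RatFunc.X * (UK * UK))) * hUK

lemma hard_particle_unique (T₁ T₂ : PowerSeries (RatFunc ℚ))
    (hc₁ : PowerSeries.constantCoeff T₁ = 0)
    (he₁ : T₁ * (1 - 2 * T₁) * (PowerSeries.C RatFunc.X - 3 * T₁ + 3 * T₁ ^ 2)
        = PowerSeries.C (RatFunc.X ^ 2) * PowerSeries.X)
    (hc₂ : PowerSeries.constantCoeff T₂ = 0)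
    (he₂ : T₂ * (1 - 2 * T₂) * (PowerSeries.C RatFunc.X - 3 * T₂ + 3 * T₂ ^ 2)
        = PowerSeries.C (RatFunc.X ^ 2) * PowerSeries.X) :
    T₁ = T₂ := by
  set Q : PowerSeries (RatFunc ℚ) :=
    PowerSeries.C RatFunc.X
      - (3 + 2 * PowerSeries.C RatFunc.X) * (T₁ + T₂)
      + 9 * (T₁ ^ 2 + T₁ * T₂ + T₂ ^ 2)
      - 6 * (T₁ ^ 3 + T₁ ^ 2 * T₂ + T₁ * T₂ ^ 2 + T₂ ^ 3) with hQ
  have hfac : (T₁ - T₂) * Q = 0 := by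
    rw [hQ]; linear_combination he₁ - he₂
  have hQc : PowerSeries.constantCoeff Q = RatFunc.X := by
    rw [hQ]
    simp [map_add, map_sub, map_mul, map_pow, map_ofNat, hc₁, hc₂]
  rcases mul_eq_zero.mp hfac with h | h
  · exact sub_eq_zero.mp h
  · exfalso
    apply RatFunc.X_ne_zero (K := ℚ)
    rw [← hQc, h, map_zero]

/-- There is a unique formal power series `T` over `K = ℚ(s)` with zero constant term
satisfying `T(1 − 2T)(s − 3T + 3T²) = s²t`, and all its coefficients are polynomials in
`s` with nonnegative integer coefficients. -/
theorem hard_particle_parameter :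
    (∃! T : PowerSeries (RatFunc ℚ),
      PowerSeries.constantCoeff T = 0 ∧
      T * (1 - 2 * T) * (PowerSeries.C RatFunc.X - 3 * T + 3 * T ^ 2)
        = PowerSeries.C (RatFunc.X ^ 2) * PowerSeries.X)
    ∧ (∀ T : PowerSeries (RatFunc ℚ),
        PowerSeries.constantCoeff T = 0 →
        T * (1 - 2 * T) * (PowerSeries.C RatFunc.X - 3 * T + 3 * T ^ 2)
          = PowerSeries.C (RatFunc.X ^ 2) * PowerSeries.X →
        ∀ n : ℕ, ∃ p : Polynomial ℕ,
          PowerSeries.coeff n T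
            = algebraMap (Polynomial ℚ) (RatFunc ℚ) (p.map (Nat.castRingHom ℚ))) := by
  have hTc : PowerSeries.constantCoeff
      (PowerSeries.C RatFunc.X * UK) = 0 := by
    have h0 : PowerSeries.constantCoeff UK = 0 := by
      have := coeff_UK 0
      simpa [upoly_zero] using this
    simp [map_mul, h0]
  constructor
  · refine ⟨PowerSeries.C RatFunc.X * UK, ⟨hTc, hmainK⟩, ?_⟩
    intro y hy
    exact hard_particle_unique y _ hy.1 hy.2 hTc hmainK
  · intro T hc he n
    have hT : T = PowerSeries.C RatFunc.X * UK :=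
      hard_particle_unique T _ hc he hTc hmainK
    refine ⟨Polynomial.X * upoly n, ?_⟩
    rw [hT, PowerSeries.coeff_C_mul, coeff_UK, Polynomial.map_mul, Polynomial.map_X,
      map_mul, RatFunc.algebraMap_X]
    rfl
end
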